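/- arXiv:1912.03065 — 14 statements merged into one kernel-verified Lean document; each statement's English description precedes it below -/
import Mathlib

section
/- Let q, n, e, n', e' be positive integers with q > 1, e dividing q^n - 1, n' dividing n, and e = e' * (q^n - 1)/(q^{n'} - 1). Then m(q,e) = (n/n') * m(q,e'), where m(q,e) denotes the smallest positive integer t such that there exist t (not necessarily distinct) nonnegative powers of q whose sum is divisible by e. -/
/-- `mqe q e` is the smallest positive integer `t` such that some sum of `t`
nonnegative powers of `q` is divisible by `e`. -/
noncomputable def mqe (q e : ℕ) : ℕ :=
  sInf {t | 0 < t ∧ ∃ f : Fin t → ℕ, e ∣ ∑ i, q ^ f i}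

open Finset


lemma geom_nat (Q : ℕ) (hQ : 1 ≤ Q) : ∀ d : ℕ, (Q - 1) * ∑ j ∈ range d, Q ^ j = Q ^ d - 1
  | 0 => by simp
  | d + 1 => by
    have ih := geom_nat Q hQ d
    rw [Finset.sum_range_succ, mul_add, ih, pow_succ]
    have h1 : (Q - 1) * Q ^ d = Q * Q ^ d - Q ^ d := by rw [Nat.sub_mul, one_mul]
    have h2 : 1 ≤ Q ^ d := Nat.one_le_pow _ _ hQ
    have h3 : Q ^ d ≤ Q * Q ^ d := Nat.le_mul_of_pos_left _ hQ
    have h4 : Q ^ d * Q = Q * Q ^ d := mul_comm _ _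
    omega

lemma sum_range_mul_block (g : ℕ → ℕ) (a : ℕ) :
    ∀ d : ℕ, ∑ r ∈ range (a * d), g r = ∑ j ∈ range d, ∑ s ∈ range a, g (a * j + s)
  | 0 => by simp
  | d + 1 => by
    rw [Nat.mul_succ, Finset.sum_range_add, sum_range_mul_block g a d, Finset.sum_range_succ]

lemma blocks_eq (Q : ℕ) (hQ : 2 ≤ Q) :
    ∀ (d : ℕ) (B : ℕ → ℕ) (u : ℕ), (∀ j, j < d → B j ≤ Q - 1) → u ≤ Q - 1 →
      (∑ j ∈ range d, B j * Q ^ j) = ∑ j ∈ range d, u * Q ^ j → ∀ j, j < d → B j = u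
  | 0 => by intro B u _ _ _ j hj; omega
  | d + 1 => by
    intro B u hB hu hsum j hj
    have expand : ∀ c : ℕ → ℕ,
        ∑ j ∈ range (d + 1), c j * Q ^ j = Q * (∑ j ∈ range d, c (j + 1) * Q ^ j) + c 0 := by
      intro c
      rw [Finset.sum_range_succ', pow_zero, mul_one, Finset.mul_sum]
      congr 1
      refine Finset.sum_congr rfl fun i _ => ?_
      ring
    rw [expand B, expand (fun _ => u)] at hsum
    have hB0 : B 0 < Q := by have := hB 0 (by omega); omega
    have huQ : u < Q := by omega
    have hm1 : (Q * (∑ j ∈ range d, B (j + 1) * Q ^ j) + B 0) % Q = B 0 := by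
      rw [Nat.mul_add_mod, Nat.mod_eq_of_lt hB0]
    have hm2 : (Q * (∑ j ∈ range d, u * Q ^ j) + u) % Q = u := by
      rw [Nat.mul_add_mod, Nat.mod_eq_of_lt huQ]
    have hB0u : B 0 = u := by rw [← hm1, ← hm2, hsum]
    have htail : (∑ j ∈ range d, B (j + 1) * Q ^ j) = ∑ j ∈ range d, u * Q ^ j := by
      have : Q * (∑ j ∈ range d, B (j + 1) * Q ^ j) = Q * (∑ j ∈ range d, u * Q ^ j) := by omega
      exact Nat.eq_of_mul_eq_mul_left (by omega) this
    rcases Nat.eq_zero_or_pos j with h0 | hpos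
    · rw [h0]; exact hB0u
    · have := blocks_eq Q hQ d (fun j => B (j + 1)) u (fun j' hj' => hB (j' + 1) (by omega)) hu
        htail (j - 1) (by omega)
      simpa [Nat.sub_add_cancel hpos] using this

lemma exists_rep (q : ℕ) (A : Finset ℕ) (w v : ℕ → ℕ) :
    ∃ g : Fin (∑ s ∈ A, w s) → ℕ, (∑ i, q ^ g i) = ∑ s ∈ A, w s * q ^ v s := by
  induction A using Finset.induction_on with
  | empty => exact ⟨Fin.elim0, by simp⟩
  | @insert a A ha ih =>
    obtain ⟨g₂, hg₂⟩ := ih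
    have hins : ∑ s ∈ insert a A, w s = w a + ∑ s ∈ A, w s := Finset.sum_insert ha
    refine ⟨(Fin.append (fun _ => v a) g₂) ∘ (finCongr hins), ?_⟩
    rw [show (∑ i : Fin (∑ s ∈ insert a A, w s),
          q ^ (Fin.append (fun _ => v a) g₂ ∘ ⇑(finCongr hins)) i)
        = ∑ i : Fin (w a + ∑ s ∈ A, w s), q ^ Fin.append (fun _ : Fin (w a) => v a) g₂ i from
      Fintype.sum_equiv (finCongr hins) _ _ (fun i => rfl)]
    rw [Fin.sum_univ_add, Finset.sum_insert ha]
    simp [Fin.append_left, Fin.append_right, hg₂, Finset.sum_const, mul_comm]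


lemma normalize_cfg (q n e : ℕ) (hq : 2 ≤ q) (hn : 0 < n) (hdvd : e ∣ q ^ n - 1) :
    ∀ t : ℕ, ∀ c : ℕ → ℕ, (∑ r ∈ range n, c r = t) →
      0 < ∑ r ∈ range n, c r * q ^ r → e ∣ ∑ r ∈ range n, c r * q ^ r →
      ∃ c' : ℕ → ℕ, (∀ r, c' r ≤ q - 1) ∧ 0 < (∑ r ∈ range n, c' r * q ^ r) ∧
        (e ∣ ∑ r ∈ range n, c' r * q ^ r) ∧ (∑ r ∈ range n, c' r) ≤ t := by
  intro t
  induction t using Nat.strong_induction_on with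
  | _ t ih =>
    intro c hcount hpos hdvdV
    by_cases hsmall : ∀ r, r < n → c r ≤ q - 1
    · refine ⟨fun r => if r < n then c r else 0, fun r => ?_, ?_, ?_, ?_⟩
      · by_cases h : r < n
        · simpa [h] using hsmall r h
        · simp [h]
      · calc 0 < ∑ r ∈ range n, c r * q ^ r := hpos
          _ = _ := (Finset.sum_congr rfl fun r hr => by simp [mem_range.mp hr]).symm
      · have : (∑ r ∈ range n, (if r < n then c r else 0) * q ^ r)
            = ∑ r ∈ range n, c r * q ^ r :=
          Finset.sum_congr rfl fun r hr => by simp [mem_range.mp hr]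
        rw [this]; exact hdvdV
      · have : (∑ r ∈ range n, if r < n then c r else 0) = ∑ r ∈ range n, c r :=
          Finset.sum_congr rfl fun r hr => by simp [mem_range.mp hr]
        rw [this, hcount]
    · push_neg at hsmall
      obtain ⟨r, hrn, hcr⟩ := hsmall
      have hcrq : q ≤ c r := by omega
      set r' : ℕ := if r + 1 < n then r + 1 else 0 with hr'def
      have hr'n : r' < n := by
        rw [hr'def]; split <;> omega
      have hrmem : r ∈ range n := mem_range.mpr hrn
      have hr'mem : r' ∈ range n := mem_range.mpr hr'n
      set c₁ : ℕ → ℕ := fun s => (if s = r then c r - q else c s) + (if s = r' then 1 else 0)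
        with hc₁def
      have key : ∀ g : ℕ → ℕ,
          (∑ s ∈ range n, c₁ s * g s) + q * g r = (∑ s ∈ range n, c s * g s) + g r' := by
        intro g
        have h1 : ∀ s, c₁ s * g s
            = (if s = r then c r - q else c s) * g s + (if s = r' then g s else 0) := by
          intro s
          by_cases h : s = r' <;> simp [hc₁def, h, add_mul]
        rw [Finset.sum_congr rfl fun s _ => h1 s, Finset.sum_add_distrib,
          Finset.sum_ite_eq' (range n) r' g, if_pos hr'mem,
          ← Finset.add_sum_erase _ (fun s => (if s = r then c r - q else c s) * g s) hrmem,
          ← Finset.add_sum_erase _ (fun s => c s * g s) hrmem]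
        have herase : (∑ s ∈ (range n).erase r, (if s = r then c r - q else c s) * g s)
            = ∑ s ∈ (range n).erase r, c s * g s :=
          Finset.sum_congr rfl fun s hs => by rw [if_neg (Finset.ne_of_mem_erase hs)]
        rw [herase, if_pos rfl]
        have hsub : (c r - q) * g r = c r * g r - q * g r := Nat.sub_mul _ _ _
        have hle : q * g r ≤ c r * g r := Nat.mul_le_mul_right _ hcrq
        omega
      have hkey1 := key (fun _ => 1)
      simp only [mul_one] at hkey1
      have hkeyv := key (fun s => q ^ s)
      have hcnt1 : (∑ s ∈ range n, c₁ s) + q = t + 1 := by rw [← hcount]; exact hkey1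
      have hlt : (∑ s ∈ range n, c₁ s) < t := by omega
      have hVlow : q * q ^ r ≤ ∑ s ∈ range n, c s * q ^ s := by
        calc q * q ^ r ≤ c r * q ^ r := Nat.mul_le_mul_right _ hcrq
          _ ≤ _ := Finset.single_le_sum (f := fun s => c s * q ^ s) (fun i _ => Nat.zero_le _) hrmem
      by_cases hcase : r + 1 < n
      · have hr'eq : r' = r + 1 := by rw [hr'def, if_pos hcase]
        have hV1 : (∑ s ∈ range n, c₁ s * q ^ s) = ∑ s ∈ range n, c s * q ^ s := by
          have hp : q ^ r' = q * q ^ r := by rw [hr'eq, pow_succ, mul_comm]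
          omega
        obtain ⟨c', h1, h2, h3, h4⟩ := ih _ hlt c₁ rfl (hV1 ▸ hpos) (hV1 ▸ hdvdV)
        exact ⟨c', h1, h2, h3, h4.trans hlt.le⟩
      · have hr'eq : r' = 0 := by rw [hr'def, if_neg hcase]
        have hrn1 : r + 1 = n := by omega
        have hpow : q * q ^ r = q ^ n := by rw [← hrn1, pow_succ, mul_comm]
        have hq0 : q ^ r' = 1 := by rw [hr'eq, pow_zero]
        -- V₁ + q^n = V + 1
        have heqn : (∑ s ∈ range n, c₁ s * q ^ s) + q ^ n
            = (∑ s ∈ range n, c s * q ^ s) + 1 := by omega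
        have hqn1 : 1 ≤ q ^ n := Nat.one_le_pow _ _ (by omega)
        have hV1pos : 0 < ∑ s ∈ range n, c₁ s * q ^ s := by omega
        have hV1eq : (∑ s ∈ range n, c₁ s * q ^ s)
            = (∑ s ∈ range n, c s * q ^ s) - (q ^ n - 1) := by omega
        have hV1dvd : e ∣ ∑ s ∈ range n, c₁ s * q ^ s := by
          rw [hV1eq]; exact Nat.dvd_sub hdvdV hdvd
        obtain ⟨c', h1, h2, h3, h4⟩ := ih _ hlt c₁ rfl hV1pos hV1dvd
        exact ⟨c', h1, h2, h3, h4.trans hlt.le⟩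

lemma mqe_mem (q e : ℕ) (he : 0 < e) :
    0 < mqe q e ∧ ∃ f : Fin (mqe q e) → ℕ, e ∣ ∑ i, q ^ f i := by
  have hne : {t | 0 < t ∧ ∃ f : Fin t → ℕ, e ∣ ∑ i, q ^ f i}.Nonempty := by
    refine ⟨e, he, fun _ => 0, ?_⟩
    simp
  have := Nat.sInf_mem hne
  rw [mqe]
  exact this

lemma mqe_le (q e t : ℕ) (ht : 0 < t) (f : Fin t → ℕ) (hf : e ∣ ∑ i, q ^ f i) :
    mqe q e ≤ t := by
  rw [mqe]
  exact Nat.sInf_le ⟨ht, f, hf⟩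


theorem stmt_0 (q n e n' e' : ℕ) (hq : 1 < q) (hn : 0 < n) (he : 0 < e)
    (hn' : 0 < n') (he' : 0 < e') (hdvd : e ∣ q ^ n - 1) (hnn : n' ∣ n)
    (heq : e = e' * ((q ^ n - 1) / (q ^ n' - 1))) :
    mqe q e = (n / n') * mqe q e' := by
  set d : ℕ := n / n' with hd
  set Q : ℕ := q ^ n' with hQ
  set D : ℕ := (q ^ n - 1) / (q ^ n' - 1) with hD
  have hq2 : 2 ≤ q := hq
  have hQ2 : 2 ≤ Q := by
    calc 2 ≤ q := hq2
      _ = q ^ 1 := (pow_one q).symm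
      _ ≤ q ^ n' := Nat.pow_le_pow_right (by omega) hn'
  have hn'd : n' * d = n := Nat.mul_div_cancel' hnn
  have hQd : Q ^ d = q ^ n := by rw [hQ, ← pow_mul, hn'd]
  have hQsub : Q - 1 ∣ q ^ n - 1 := by
    have := Nat.sub_dvd_pow_sub_pow Q 1 d
    rwa [one_pow, hQd] at this
  have hDD : (Q - 1) * D = q ^ n - 1 := Nat.mul_div_cancel' hQsub
  have hqn2 : 2 ≤ q ^ n := by
    calc 2 ≤ q := hq2
      _ = q ^ 1 := (pow_one q).symm
      _ ≤ q ^ n := Nat.pow_le_pow_right (by omega) hn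
  have hD1 : 0 < D := by
    rcases Nat.eq_zero_or_pos D with h | h
    · rw [h, mul_zero] at hDD; omega
    · exact h
  have hgeom : (∑ j ∈ range d, Q ^ j) = D := by
    have h1 := geom_nat Q (by omega) d
    rw [hQd] at h1
    exact Nat.eq_of_mul_eq_mul_left (show 0 < Q - 1 by omega) (by rw [h1, hDD])
  have hd1 : 0 < d := Nat.div_pos (Nat.le_of_dvd hn hnn) hn'
  -- upper bound
  have hupper : mqe q e ≤ d * mqe q e' := by
    obtain ⟨hm'pos, f', hf'⟩ := mqe_mem q e' he'
    refine mqe_le q e (d * mqe q e') (Nat.mul_pos hd1 hm'pos)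
      (fun i => f' (finProdFinEquiv.symm i).2 + n' * ((finProdFinEquiv.symm i).1 : ℕ)) ?_
    rw [show (∑ i : Fin (d * mqe q e'),
          q ^ (f' (finProdFinEquiv.symm i).2 + n' * ((finProdFinEquiv.symm i).1 : ℕ)))
        = ∑ p : Fin d × Fin (mqe q e'), q ^ (f' p.2 + n' * (p.1 : ℕ)) from
      Fintype.sum_equiv finProdFinEquiv.symm _ _ (fun i => rfl)]
    rw [Fintype.sum_prod_type]
    have hterm : ∀ (x : Fin d) (y : Fin (mqe q e')),
        q ^ (f' y + n' * (x : ℕ)) = q ^ f' y * Q ^ (x : ℕ) := by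
      intro x y
      rw [pow_add, hQ, ← pow_mul]
    calc e = e' * D := heq
      _ ∣ (∑ i, q ^ f' i) * D := mul_dvd_mul hf' dvd_rfl
      _ = ∑ x : Fin d, ∑ y : Fin (mqe q e'), q ^ (f' y + n' * (x : ℕ)) := by
          rw [← hgeom, ← Fin.sum_univ_eq_sum_range (fun j => Q ^ j) d, Finset.mul_sum]
          refine Finset.sum_congr rfl fun x _ => ?_
          rw [Finset.sum_mul]
          exact Finset.sum_congr rfl fun y _ => (hterm x y).symm
  -- lower bound
  have hlower : d * mqe q e' ≤ mqe q e := by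
    obtain ⟨hmpos, f, hf⟩ := mqe_mem q e he
    have hlow : ∀ (t : ℕ) (f : Fin t → ℕ), 0 < t → e ∣ (∑ i, q ^ f i) →
        d * mqe q e' ≤ t := by
      clear hf f hmpos
      intro t f hmpos hf
      set c : ℕ → ℕ :=
        fun r => ((Finset.univ : Finset (Fin t)).filter (fun i => f i % n = r)).card with hc
      have hmaps : ∀ i : Fin t, i ∈ (Finset.univ : Finset (Fin t)) → f i % n ∈ range n :=
        fun i _ => mem_range.mpr (Nat.mod_lt _ hn)
      have hcount : ∑ r ∈ range n, c r = t := by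
        rw [hc]
        rw [← Finset.card_eq_sum_card_fiberwise hmaps]
        simp
      have hV0 : (∑ r ∈ range n, c r * q ^ r) = ∑ i : Fin t, q ^ (f i % n) := by
        rw [← Finset.sum_fiberwise_of_maps_to hmaps (fun i => q ^ (f i % n))]
        refine Finset.sum_congr rfl fun r hr => ?_
        have : ∀ i ∈ (Finset.univ : Finset (Fin t)).filter (fun i => f i % n = r),
            q ^ (f i % n) = q ^ r := fun i hi => by rw [(Finset.mem_filter.mp hi).2]
        rw [Finset.sum_congr rfl this, Finset.sum_const, hc, smul_eq_mul]
      have hmod : ∀ i : Fin t, q ^ f i % e = q ^ (f i % n) % e := by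
        intro i
        have hqn : (1 : ℕ) ≡ q ^ n [MOD e] :=
          (Nat.modEq_iff_dvd' (Nat.one_le_pow _ _ (by omega))).mpr hdvd
        have h1 : q ^ f i = (q ^ n) ^ (f i / n) * q ^ (f i % n) := by
          rw [← pow_mul, ← pow_add, Nat.div_add_mod]
        have h2 : (q ^ n) ^ (f i / n) * q ^ (f i % n) ≡ 1 ^ (f i / n) * q ^ (f i % n) [MOD e] :=
          Nat.ModEq.mul_right _ (hqn.symm.pow _)
        rw [one_pow, one_mul] at h2
        rw [h1]
        exact h2
      have hdvdS : e ∣ ∑ i : Fin t, q ^ (f i % n) := by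
        have h1 : (∑ i : Fin t, q ^ f i) % e = (∑ i : Fin t, q ^ (f i % n)) % e := by
          rw [Finset.sum_nat_mod, Finset.sum_congr rfl (fun i _ => hmod i), ← Finset.sum_nat_mod]
        have h2 : (∑ i : Fin t, q ^ f i) % e = 0 := by
          obtain ⟨k, hk⟩ := hf
          simp [hk, Nat.mul_mod_right]
        exact Nat.dvd_of_mod_eq_zero (by omega)
      have hpos0 : 0 < ∑ i : Fin t, q ^ (f i % n) :=
        Finset.sum_pos (fun i _ => Nat.pow_pos (by omega))
          ⟨⟨0, hmpos⟩, Finset.mem_univ _⟩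
      obtain ⟨c', hc'le, hVpos, hVdvd, hc't⟩ :=
        normalize_cfg q n e hq2 hn hdvd t c hcount (hV0 ▸ hpos0) (hV0 ▸ hdvdS)
      set V : ℕ := ∑ r ∈ range n, c' r * q ^ r with hV
      have hVle : V ≤ q ^ n - 1 := by
        calc V ≤ ∑ r ∈ range n, (q - 1) * q ^ r :=
              Finset.sum_le_sum fun r _ => Nat.mul_le_mul_right _ (hc'le r)
          _ = (q - 1) * ∑ r ∈ range n, q ^ r := by rw [Finset.mul_sum]
          _ = q ^ n - 1 := geom_nat q (by omega) n
      have hDdvdV : D ∣ V := dvd_trans (dvd_mul_left D e') (heq ▸ hVdvd)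
      set u : ℕ := V / D with hu
      have huD : u * D = V := Nat.div_mul_cancel hDdvdV
      have hupos : 0 < u := by
        rcases Nat.eq_zero_or_pos u with h | h
        · rw [h, zero_mul] at huD; omega
        · exact h
      have hule : u ≤ Q - 1 := by
        have h1 : u * D ≤ (Q - 1) * D := by rw [huD, hDD]; exact hVle
        exact Nat.le_of_mul_le_mul_right h1 hD1
      have he'u : e' ∣ u := by
        rw [hu, Nat.dvd_div_iff_mul_dvd hDdvdV, mul_comm]
        exact heq ▸ hVdvd
      set B : ℕ → ℕ := fun j => ∑ s ∈ range n', c' (n' * j + s) * q ^ s with hB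
      have hsplit : V = ∑ j ∈ range d, B j * Q ^ j := by
        rw [hV, ← hn'd, sum_range_mul_block (fun r => c' r * q ^ r) n' d]
        refine Finset.sum_congr rfl fun j _ => ?_
        simp only [hB]
        rw [Finset.sum_mul]
        refine Finset.sum_congr rfl fun s _ => ?_
        rw [hQ, ← pow_mul, mul_assoc, ← pow_add, Nat.add_comm s (n' * j)]
      have hValt : V = ∑ j ∈ range d, u * Q ^ j := by
        rw [← huD, ← hgeom, Finset.mul_sum]
      have hBle : ∀ j, j < d → B j ≤ Q - 1 := by
        intro j _
        calc B j ≤ ∑ s ∈ range n', (q - 1) * q ^ s :=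
              Finset.sum_le_sum fun s _ => Nat.mul_le_mul_right _ (hc'le _)
          _ = (q - 1) * ∑ s ∈ range n', q ^ s := by rw [Finset.mul_sum]
          _ = Q - 1 := geom_nat q (by omega) n'
      have hBu : ∀ j, j < d → B j = u :=
        blocks_eq Q hQ2 d B u hBle hule (hsplit.symm.trans hValt)
      have hblock : ∀ j, j < d → mqe q e' ≤ ∑ s ∈ range n', c' (n' * j + s) := by
        intro j hj
        have hBj : (∑ s ∈ range n', c' (n' * j + s) * q ^ s) = u := hBu j hj
        have htjpos : 0 < ∑ s ∈ range n', c' (n' * j + s) := by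
          rcases Nat.eq_zero_or_pos (∑ s ∈ range n', c' (n' * j + s)) with h | h
          · exfalso
            have hz := Finset.sum_eq_zero_iff.mp h
            have : (∑ s ∈ range n', c' (n' * j + s) * q ^ s) = 0 :=
              Finset.sum_eq_zero fun s hs => by rw [hz s hs, zero_mul]
            omega
          · exact h
        obtain ⟨g, hg⟩ := exists_rep q (range n') (fun s => c' (n' * j + s)) (fun s => s)
        refine mqe_le q e' _ htjpos g ?_
        rw [hg]
        show e' ∣ ∑ s ∈ range n', c' (n' * j + s) * q ^ s
        rw [hBj]
        exact he'u
      calc d * mqe q e' = ∑ _j ∈ range d, mqe q e' := by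
            rw [Finset.sum_const, card_range, smul_eq_mul]
        _ ≤ ∑ j ∈ range d, ∑ s ∈ range n', c' (n' * j + s) :=
            Finset.sum_le_sum fun j hj => hblock j (mem_range.mp hj)
        _ = ∑ r ∈ range n, c' r := by rw [← hn'd, sum_range_mul_block c' n' d]
        _ ≤ t := hc't
    exact hlow (mqe q e) f hmpos hf
  omega
end

section
/- Let q, n, e be positive integers with q > 1 and e dividing q^n - 1. If e' is a positive integer with e = e' * (q^n - 1)/(q - 1), then m(q,e) = n * e'. Moreover, if n' divides n and e = (q^n - 1)/(q^{n'} - 1), then m(q,e) = n/n'. -/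
open Finset

lemma mqe_geom_nat (q n : ℕ) (hq : 1 ≤ q) :
    (∑ j ∈ range n, q ^ j) * (q - 1) = q ^ n - 1 := by
  induction n with
  | zero => simp
  | succ n ih =>
    rw [Finset.sum_range_succ, add_mul, ih, Nat.mul_sub, mul_one, ← pow_succ]
    have h1 : 1 ≤ q ^ n := Nat.one_le_pow _ _ (by omega)
    have h2 : q ^ n ≤ q ^ (n+1) := Nat.pow_le_pow_right (by omega) (by omega)
    omega

lemma mqe_sum_range_add {M : Type*} [AddCommMonoid M] (g : ℕ → M) (a b : ℕ) :
    ∑ j ∈ range (a + b), g j = ∑ j ∈ range a, g j + ∑ r ∈ range b, g (a + r) := by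
  induction b with
  | zero => simp
  | succ b ih => rw [← Nat.add_assoc, Finset.sum_range_succ, ih, Finset.sum_range_succ, add_assoc]

lemma mqe_sum_grouped {M : Type*} [AddCommMonoid M] (g : ℕ → M) (m k : ℕ) :
    ∑ j ∈ range (m * k), g j = ∑ l ∈ range k, ∑ r ∈ range m, g (m * l + r) := by
  induction k with
  | zero => simp
  | succ k ih => rw [Finset.sum_range_succ, ← ih, Nat.mul_succ, mqe_sum_range_add]

lemma mqe_digit_sum_lt (q n : ℕ) (hq : 1 < q) (a : ℕ → ℕ) (ha : ∀ j, a j < q) :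
    ∑ j ∈ range n, a j * q ^ j < q ^ n := by
  have h : ∑ j ∈ range n, a j * q ^ j ≤ ∑ j ∈ range n, (q - 1) * q ^ j :=
    Finset.sum_le_sum fun j _ => Nat.mul_le_mul_right _ (by have := ha j; omega)
  have h2 : (∑ j ∈ range n, (q-1) * q ^ j) = q ^ n - 1 := by
    rw [← mqe_geom_nat q n (by omega), Finset.sum_mul]
    exact Finset.sum_congr rfl fun j _ => by ring
  have h3 : 1 ≤ q ^ n := Nat.one_le_pow _ _ (by omega)
  omega

lemma mqe_digits_unique (q : ℕ) (hq : 1 < q) :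
    ∀ n (a b : ℕ → ℕ), (∀ j, a j < q) → (∀ j, b j < q) →
    (∑ j ∈ range n, a j * q ^ j = ∑ j ∈ range n, b j * q ^ j) →
    ∀ j < n, a j = b j := by
  intro n
  induction n with
  | zero => intro a b _ _ _ j hj; omega
  | succ n ih =>
    intro a b ha hb hsum j hj
    have key : ∀ c : ℕ → ℕ, ∑ i ∈ range (n+1), c i * q ^ i
        = c 0 + q * ∑ i ∈ range n, c (i+1) * q ^ i := by
      intro c
      rw [Finset.sum_range_succ' (fun i => c i * q ^ i) n, Finset.mul_sum]
      simp only [pow_zero, mul_one, pow_succ]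
      rw [add_comm]
      congr 1
      exact Finset.sum_congr rfl fun i _ => by ring
    rw [key a, key b] at hsum
    have h0 : a 0 = b 0 := by
      have := congrArg (· % q) hsum
      simpa [Nat.add_mul_mod_self_left, Nat.mod_eq_of_lt (ha 0),
        Nat.mod_eq_of_lt (hb 0)] using this
    have h1 : ∑ i ∈ range n, a (i+1) * q ^ i = ∑ i ∈ range n, b (i+1) * q ^ i := by
      have hq0 : 0 < q := by omega
      have := hsum
      rw [h0] at this
      exact Nat.eq_of_mul_eq_mul_left hq0 (by omega)
    rcases Nat.eq_zero_or_pos j with rfl | hjp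
    · exact h0
    · obtain ⟨j', rfl⟩ : ∃ j', j = j' + 1 := ⟨j - 1, by omega⟩
      exact ih (fun i => a (i+1)) (fun i => b (i+1)) (fun i => ha _) (fun i => hb _)
        h1 j' (by omega)

lemma mqe_pow_mod_eq {M : Type*} [Monoid M] (x : M) {n : ℕ} (hx : x ^ n = 1) (m : ℕ) :
    x ^ (m % n) = x ^ m := by
  conv_rhs => rw [← Nat.mod_add_div m n]
  rw [pow_add, pow_mul, hx, one_pow, mul_one]

lemma mqe_carry (q n e : ℕ) (hq : 1 < q) (hx : (q : ZMod e) ^ n = 1) :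
    ∀ t, ∀ a : ℕ → ℕ, (∑ j ∈ range n, a j = t) → 0 < t →
      ((∑ j ∈ range n, a j * q ^ j : ℕ) : ZMod e) = 0 →
      ∃ b : ℕ → ℕ, (∀ j, b j < q) ∧ 0 < ∑ j ∈ range n, b j ∧ ∑ j ∈ range n, b j ≤ t ∧
        ((∑ j ∈ range n, b j * q ^ j : ℕ) : ZMod e) = 0 := by
  intro t
  induction t using Nat.strong_induction_on with
  | _ t ih =>
    intro a hat ht hz
    by_cases hall : ∃ j ∈ range n, q ≤ a j
    · obtain ⟨j, hjmem, hqa⟩ := hall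
      have hjn : j < n := mem_range.1 hjmem
      have hn : 0 < n := by omega
      set j' := (j + 1) % n with hj'def
      have hj'n : j' < n := Nat.mod_lt _ hn
      set a'' : ℕ → ℕ := fun i => (if i = j then a i - q else a i) + (if i = j' then 1 else 0)
        with ha''
      have hajt : a j ≤ t := by
        rw [← hat]; exact Finset.single_le_sum (fun i _ => Nat.zero_le _) hjmem
      have hsum1 : ∑ i ∈ range n, (if i = j then a i - q else a i) = t - q := by
        have hupd : (fun i => if i = j then a i - q else a i)
            = Function.update a j (a j - q) := by
          funext i
          by_cases h : i = j <;> simp [Function.update, h]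
        rw [hupd, Finset.sum_update_of_mem hjmem, Finset.sdiff_singleton_eq_erase]
        have := Finset.add_sum_erase (range n) a hjmem
        omega
      have hsum2 : ∑ i ∈ range n, (if i = j' then (1:ℕ) else 0) = 1 := by
        rw [Finset.sum_ite_eq' (range n) j' (fun _ => (1:ℕ))]
        simp [mem_range.2 hj'n]
      have hsum : ∑ i ∈ range n, a'' i = t - q + 1 := by
        rw [ha'', Finset.sum_add_distrib, hsum1, hsum2]
      set x : ZMod e := (q : ZMod e) with hxdef
      have hpt : ∀ i ∈ range n, ((a'' i * q ^ i : ℕ) : ZMod e)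
          = ((a i * q ^ i : ℕ) : ZMod e)
            - (if i = j then x ^ (j+1) else 0) + (if i = j' then x ^ j' else 0) := by
        intro i _
        simp only [ha'']
        by_cases h1 : i = j
        · by_cases h2 : i = j'
          · subst h1
            rw [if_pos rfl, if_pos rfl, if_pos h2, if_pos h2, ← h2, hxdef, pow_succ]
            push_cast [Nat.cast_sub hqa]
            ring
          · subst h1
            rw [if_pos rfl, if_pos rfl, if_neg h2, if_neg h2, hxdef, pow_succ]
            push_cast [Nat.cast_sub hqa]
            ring
        · by_cases h2 : i = j'
          · subst h2
            rw [if_neg h1, if_neg h1, if_pos rfl, if_pos rfl, hxdef]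
            push_cast
            ring
          · rw [if_neg h1, if_neg h1, if_neg h2, if_neg h2]
            push_cast
            ring
      have hz' : ((∑ i ∈ range n, a'' i * q ^ i : ℕ) : ZMod e) = 0 := by
        rw [Nat.cast_sum, Finset.sum_congr rfl hpt, Finset.sum_add_distrib,
          Finset.sum_sub_distrib,
          Finset.sum_ite_eq' (range n) j (fun _ => x ^ (j+1)),
          Finset.sum_ite_eq' (range n) j' (fun _ => x ^ j'),
          if_pos hjmem, if_pos (mem_range.2 hj'n), ← Nat.cast_sum, hz,
          hj'def, mqe_pow_mod_eq x hx (j+1)]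
        ring
      have hlt : t - q + 1 < t := by omega
      obtain ⟨b, hb1, hb2, hb3, hb4⟩ := ih (t - q + 1) hlt a'' hsum (by omega) hz'
      exact ⟨b, hb1, hb2, by omega, hb4⟩
    · push_neg at hall
      set b0 : ℕ → ℕ := fun j => if j < n then a j else 0 with hb0
      have hbeq : ∀ j ∈ range n, b0 j = a j := fun j hj => if_pos (mem_range.1 hj)
      have hs1 : ∑ j ∈ range n, b0 j = t := by
        rw [Finset.sum_congr rfl hbeq]; exact hat
      refine ⟨b0, ?_, by omega, by omega, ?_⟩
      · intro j
        by_cases h : j < n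
        · rw [hb0]; simp only [if_pos h]; exact hall j (mem_range.2 h)
        · rw [hb0]; simp only [if_neg h]; omega
      · rw [show (∑ j ∈ range n, b0 j * q ^ j) = ∑ j ∈ range n, a j * q ^ j from
          Finset.sum_congr rfl fun j hj => by rw [hbeq j hj]]
        exact hz

lemma mqe_fiber (q n e t : ℕ) (hn : 0 < n) (hx : (q : ZMod e) ^ n = 1) (f : Fin t → ℕ)
    (hf : ((∑ i, q ^ f i : ℕ) : ZMod e) = 0) :
    ∃ a : ℕ → ℕ, ∑ j ∈ range n, a j = t ∧
      ((∑ j ∈ range n, a j * q ^ j : ℕ) : ZMod e) = 0 := by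
  classical
  set a : ℕ → ℕ := fun j => ((Finset.univ : Finset (Fin t)).filter (fun i => f i % n = j)).card
    with ha
  have hmaps : ∀ i : Fin t, i ∈ (Finset.univ : Finset (Fin t)) → f i % n ∈ range n :=
    fun i _ => mem_range.2 (Nat.mod_lt _ hn)
  refine ⟨a, ?_, ?_⟩
  · have h2 := Finset.sum_fiberwise_of_maps_to hmaps (fun _ => (1:ℕ))
    calc ∑ j ∈ range n, a j
        = ∑ j ∈ range n, ∑ i ∈ (Finset.univ : Finset (Fin t)).filter (fun i => f i % n = j),
            (1:ℕ) := Finset.sum_congr rfl fun j _ => Finset.card_eq_sum_ones _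
      _ = ∑ _i : Fin t, (1:ℕ) := h2
      _ = t := by simp
  · have key : ∑ j ∈ range n, (a j : ZMod e) * (q : ZMod e) ^ j
        = ∑ i : Fin t, (q : ZMod e) ^ (f i % n) := by
      rw [← Finset.sum_fiberwise_of_maps_to hmaps (fun i => (q : ZMod e) ^ (f i % n))]
      refine Finset.sum_congr rfl fun j hj => ?_
      rw [show ∑ i ∈ (Finset.univ : Finset (Fin t)).filter (fun i => f i % n = j),
            (q : ZMod e) ^ (f i % n)
          = ∑ i ∈ (Finset.univ : Finset (Fin t)).filter (fun i => f i % n = j),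
            (q : ZMod e) ^ j from
        Finset.sum_congr rfl fun i hi => by rw [(Finset.mem_filter.1 hi).2]]
      rw [Finset.sum_const, nsmul_eq_mul, ha]
    have key2 : ∑ i : Fin t, (q : ZMod e) ^ (f i % n) = ∑ i : Fin t, (q : ZMod e) ^ (f i) :=
      Finset.sum_congr rfl fun i _ => mqe_pow_mod_eq _ hx _
    push_cast
    rw [key, key2]
    push_cast at hf
    exact hf

lemma mqe_key_lb (q n e : ℕ) (hq : 1 < q) (hn : 0 < n) (he : 0 < e) (hdvd : e ∣ q ^ n - 1)
    (t : ℕ) (ht : 0 < t) (f : Fin t → ℕ) (hf : e ∣ ∑ i, q ^ f i) :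
    ∃ b : ℕ → ℕ, (∀ j, b j < q) ∧ 0 < ∑ j ∈ range n, b j ∧ ∑ j ∈ range n, b j ≤ t ∧
      e ∣ ∑ j ∈ range n, b j * q ^ j := by
  haveI : NeZero e := ⟨he.ne'⟩
  have h1 : 1 ≤ q ^ n := Nat.one_le_pow _ _ (by omega)
  have hx : (q : ZMod e) ^ n = 1 := by
    have h0 : ((q ^ n - 1 : ℕ) : ZMod e) = 0 := (ZMod.natCast_eq_zero_iff _ _).2 hdvd
    rw [Nat.cast_sub h1] at h0
    push_cast at h0
    have := sub_eq_zero.mp h0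
    simpa using this
  have hf' : ((∑ i, q ^ f i : ℕ) : ZMod e) = 0 := (ZMod.natCast_eq_zero_iff _ _).2 hf
  obtain ⟨a, hat, haz⟩ := mqe_fiber q n e t hn hx f hf'
  obtain ⟨b, hb1, hb2, hb3, hb4⟩ := mqe_carry q n e hq hx t a hat ht haz
  exact ⟨b, hb1, hb2, hb3, (ZMod.natCast_eq_zero_iff _ _).1 hb4⟩

theorem stmt_1 (q n e : ℕ) (hq : 1 < q) (hn : 0 < n) (he : 0 < e)
    (hdvd : e ∣ q ^ n - 1) :
    (∀ e' : ℕ, 0 < e' → e = e' * ((q ^ n - 1) / (q - 1)) → mqe q e = n * e') ∧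
    (∀ n' : ℕ, 0 < n' → n' ∣ n → e = (q ^ n - 1) / (q ^ n' - 1) → mqe q e = n / n') := by
  constructor
  · -- Part 1
    intro e' he' heq
    set Φ := ∑ j ∈ range n, q ^ j with hΦ
    have hgeom : Φ * (q - 1) = q ^ n - 1 := mqe_geom_nat q n (by omega)
    have hΦpos : 0 < Φ := by
      have : (1:ℕ) = q ^ 0 := by simp
      calc (0:ℕ) < q ^ 0 := by simp
        _ ≤ Φ := Finset.single_le_sum (f := fun j => q ^ j)
            (fun i _ => Nat.zero_le _) (mem_range.2 hn)
    have hdivΦ : (q ^ n - 1) / (q - 1) = Φ :=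
      Nat.div_eq_of_eq_mul_left (by omega) hgeom.symm
    rw [hdivΦ] at heq
    have hmem : n * e' ∈ {t | 0 < t ∧ ∃ f : Fin t → ℕ, e ∣ ∑ i, q ^ f i} := by
      refine ⟨by positivity, fun i => (i : ℕ) % n, ?_⟩
      rw [← Finset.sum_range (fun i => q ^ (i % n)),
        mqe_sum_grouped (fun i => q ^ (i % n)) n e']
      have hins : ∀ l ∈ range e', ∑ r ∈ range n, q ^ ((n * l + r) % n) = Φ := by
        intro l _
        refine Finset.sum_congr rfl fun r hr => ?_
        rw [Nat.mul_add_mod, Nat.mod_eq_of_lt (mem_range.1 hr)]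
      rw [Finset.sum_congr rfl hins, Finset.sum_const, card_range, smul_eq_mul, ← heq]
    apply le_antisymm
    · exact Nat.sInf_le hmem
    · apply le_csInf ⟨_, hmem⟩
      rintro t ⟨ht, f, hf⟩
      obtain ⟨b, hb1, hb2, hb3, hb4⟩ := mqe_key_lb q n e hq hn he hdvd t ht f hf
      set s' := ∑ j ∈ range n, b j * q ^ j with hs'
      have hs'pos : 0 < s' := by
        calc 0 < ∑ j ∈ range n, b j := hb2
          _ ≤ s' := Finset.sum_le_sum fun j _ =>
              Nat.le_mul_of_pos_right _ (Nat.pow_pos (n := j) (by omega))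
      have hs'lt : s' < q ^ n := mqe_digit_sum_lt q n hq b hb1
      obtain ⟨c, hc⟩ := hb4
      have hcpos : 0 < c := by
        rcases Nat.eq_zero_or_pos c with rfl | h
        · simp [hc] at hs'pos
        · exact h
      have h1q : 1 ≤ q ^ n := Nat.one_le_pow _ _ (by omega)
      have hce' : c * e' ≤ q - 1 := by
        have hle : s' ≤ q ^ n - 1 := by omega
        rw [hc, heq] at hle
        have hle2 : (c * e') * Φ ≤ (q - 1) * Φ := by
          calc (c * e') * Φ = e' * Φ * c := by ring
            _ ≤ q ^ n - 1 := hle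
            _ = Φ * (q - 1) := hgeom.symm
            _ = (q - 1) * Φ := by ring
        exact Nat.le_of_mul_le_mul_right hle2 hΦpos
      have hrep : s' = ∑ j ∈ range n, (c * e') * q ^ j := by
        calc s' = e * c := hc
          _ = (c * e') * Φ := by rw [heq]; ring
          _ = ∑ j ∈ range n, (c * e') * q ^ j := by rw [hΦ, Finset.mul_sum]
      have hbj : ∀ j < n, b j = c * e' :=
        mqe_digits_unique q hq n b (fun _ => c * e') hb1 (fun _ => by show c * e' < q; omega) (by rw [← hrep])
      have hbsum : ∑ j ∈ range n, b j = n * (c * e') := by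
        rw [Finset.sum_congr rfl (fun j hj => hbj j (mem_range.1 hj)),
          Finset.sum_const, card_range, smul_eq_mul]
      have hmono : n * e' ≤ n * (c * e') :=
        Nat.mul_le_mul_left _ (Nat.le_mul_of_pos_left _ hcpos)
      calc n * e' ≤ n * (c * e') := hmono
        _ = ∑ j ∈ range n, b j := hbsum.symm
        _ ≤ t := hb3
  · -- Part 2
    intro n' hn' hdvdn heq
    set k := n / n' with hk
    obtain ⟨k', hkk⟩ := hdvdn
    have hkeq : k = k' := by rw [hk, hkk]; exact Nat.mul_div_cancel_left _ hn'
    have hkpos : 0 < k := by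
      rw [hkeq]
      rcases Nat.eq_zero_or_pos k' with rfl | h
      · omega
      · exact h
    set Q := q ^ n' with hQ
    have hQ1 : 1 < Q := Nat.one_lt_pow hn'.ne' hq
    set ΦQ := ∑ l ∈ range k, Q ^ l with hΦQ
    have hgeom : ΦQ * (Q - 1) = Q ^ k - 1 := mqe_geom_nat Q k (by omega)
    have hQk : Q ^ k = q ^ n := by rw [hQ, ← pow_mul, hkeq, ← hkk]
    have heq2 : e = ΦQ := by
      rw [heq, hQ]
      exact Nat.div_eq_of_eq_mul_left (by omega) (by rw [← hQ, ← hQk, ← hgeom])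
    have hnn' : n = n' * k := by rw [hkeq, hkk]
    have hmem : k ∈ {t | 0 < t ∧ ∃ f : Fin t → ℕ, e ∣ ∑ i, q ^ f i} := by
      refine ⟨hkpos, fun l => n' * (l : ℕ), ?_⟩
      have : ∑ l : Fin k, q ^ (n' * (l : ℕ)) = ΦQ := by
        rw [← Finset.sum_range (fun l => q ^ (n' * l))]
        exact Finset.sum_congr rfl fun l _ => by rw [hQ, ← pow_mul]
      rw [this, heq2]
    apply le_antisymm
    · exact Nat.sInf_le hmem
    · apply le_csInf ⟨_, hmem⟩
      rintro t ⟨ht, f, hf⟩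
      obtain ⟨b, hb1, hb2, hb3, hb4⟩ := mqe_key_lb q n e hq hn he hdvd t ht f hf
      set s' := ∑ j ∈ range n, b j * q ^ j with hs'
      have hs'pos : 0 < s' := by
        calc 0 < ∑ j ∈ range n, b j := hb2
          _ ≤ s' := Finset.sum_le_sum fun j _ =>
              Nat.le_mul_of_pos_right _ (Nat.pow_pos (n := j) (by omega))
      have hs'lt : s' < q ^ n := mqe_digit_sum_lt q n hq b hb1
      set B : ℕ → ℕ := fun l => ∑ r ∈ range n', b (n' * l + r) * q ^ r with hB
      have hBlt : ∀ l, B l < Q := fun l =>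
        mqe_digit_sum_lt q n' hq (fun r => b (n' * l + r)) (fun r => hb1 _)
      have hgroup : s' = ∑ l ∈ range k, B l * Q ^ l := by
        rw [hs', hnn', mqe_sum_grouped (fun j => b j * q ^ j) n' k]
        refine Finset.sum_congr rfl fun l _ => ?_
        rw [hB, Finset.sum_mul]
        refine Finset.sum_congr rfl fun r _ => ?_
        rw [hQ, ← pow_mul]
        ring
      obtain ⟨c, hc⟩ := hb4
      have hcpos : 0 < c := by
        rcases Nat.eq_zero_or_pos c with rfl | h
        · simp [hc] at hs'pos
        · exact h
      have h1Q : 1 ≤ Q ^ k := Nat.one_le_pow _ _ (by omega)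
      have hcQ : c < Q := by
        have hle : s' ≤ q ^ n - 1 := by omega
        rw [hc, heq2, ← hQk] at hle
        have hle2 : c * ΦQ ≤ (Q - 1) * ΦQ := by
          calc c * ΦQ = ΦQ * c := by ring
            _ ≤ Q ^ k - 1 := hle
            _ = ΦQ * (Q - 1) := hgeom.symm
            _ = (Q - 1) * ΦQ := by ring
        have hΦQpos : 0 < ΦQ := by
          calc (0:ℕ) < Q ^ 0 := by simp [show 0 < Q by omega]
            _ ≤ ΦQ := Finset.single_le_sum (f := fun l => Q ^ l)
                (fun i _ => Nat.zero_le _) (mem_range.2 hkpos)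
        have := Nat.le_of_mul_le_mul_right hle2 hΦQpos
        omega
      have hrep : ∑ l ∈ range k, B l * Q ^ l = ∑ l ∈ range k, c * Q ^ l := by
        rw [← hgroup, hc, heq2, hΦQ, Finset.sum_mul]
        exact Finset.sum_congr rfl fun l _ => by ring
      have hBl : ∀ l < k, B l = c :=
        mqe_digits_unique Q hQ1 k B (fun _ => c) hBlt (fun _ => hcQ) hrep
      have hblock : ∀ l ∈ range k, 1 ≤ ∑ r ∈ range n', b (n' * l + r) := by
        intro l hl
        by_contra hcon
        push_neg at hcon
        have hzero : ∀ r ∈ range n', b (n' * l + r) = 0 :=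
          Finset.sum_eq_zero_iff.1 (by omega)
        have : B l = 0 := by
          rw [hB]
          exact Finset.sum_eq_zero fun r hr => by rw [hzero r hr, zero_mul]
        rw [hBl l (mem_range.1 hl)] at this
        omega
      have hTk : k ≤ ∑ j ∈ range n, b j := by
        rw [hnn', mqe_sum_grouped b n' k]
        calc k = ∑ _l ∈ range k, 1 := by rw [Finset.sum_const, card_range, smul_eq_mul, mul_one]
          _ ≤ ∑ l ∈ range k, ∑ r ∈ range n', b (n' * l + r) := Finset.sum_le_sum hblock
      omega
end

section
/- Let q, e be positive integers with q > 1, gcd(q,e) = 1, and let n be a positive integer with e dividing q^n - 1. Then m(q,e) equals the minimum of the q-adic digit sums s_q(k*e) over k = 1, ..., (q^n - 1)/e. -/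
open Finset

/-- Legendre-type formula with an extended summation range. -/
lemma mqe_legendre_ext (q a N : ℕ) (hq : 1 < q) (hN : a < q ^ N) :
    a = (Nat.digits q a).sum + (q - 1) * ∑ i ∈ range N, a / q ^ (i + 1) := by
  rcases Nat.eq_zero_or_pos a with rfl | ha
  · simp
  have key := Nat.sub_one_mul_sum_log_div_pow_eq_sub_sum_digits (p := q) a
  have hle := Nat.digit_sum_le q a
  have hext : ∑ i ∈ range (Nat.log q a).succ, a / q ^ (i+1) = ∑ i ∈ range N, a / q ^ (i+1) := by
    apply Finset.sum_subset
    · apply Finset.range_subset_range.mpr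
      have := Nat.log_lt_of_lt_pow ha.ne' hN
      omega
    · intro i _ hi
      simp only [Finset.mem_range, not_lt] at hi
      exact Nat.div_eq_of_lt <| (Nat.log_lt_iff_lt_pow hq ha.ne').mp (by omega)
  rw [hext] at key
  omega

/-- Subadditivity of the base-`q` digit sum. -/
lemma mqe_digitSum_add_le (q a b : ℕ) (hq : 1 < q) :
    (Nat.digits q (a + b)).sum ≤ (Nat.digits q a).sum + (Nat.digits q b).sum := by
  obtain ⟨N, hN⟩ : ∃ N, a + b < q ^ N := ⟨a + b, Nat.lt_pow_self hq⟩
  have ha : a < q ^ N := by omega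
  have hb : b < q ^ N := by omega
  have Ha := mqe_legendre_ext q a N hq ha
  have Hb := mqe_legendre_ext q b N hq hb
  have Hab := mqe_legendre_ext q (a + b) N hq hN
  have hsum : ∑ i ∈ range N, a / q ^ (i+1) + ∑ i ∈ range N, b / q ^ (i+1)
      ≤ ∑ i ∈ range N, (a + b) / q ^ (i+1) := by
    rw [← Finset.sum_add_distrib]
    apply Finset.sum_le_sum
    intro i _
    rw [Nat.le_div_iff_mul_le (Nat.pow_pos (by omega))]
    calc (a / q ^ (i+1) + b / q ^ (i+1)) * q ^ (i+1)
        = a / q ^ (i+1) * q ^ (i+1) + b / q ^ (i+1) * q ^ (i+1) := add_mul _ _ _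
      _ ≤ a + b := Nat.add_le_add (Nat.div_mul_le_self _ _) (Nat.div_mul_le_self _ _)
  have h1 := Nat.mul_le_mul_left (q - 1) hsum
  rw [Nat.mul_add] at h1
  omega

/-- A list of exponents realizing a digit list. -/
def mqeToExps : List ℕ → List ℕ
  | [] => []
  | d :: tl => List.replicate d 0 ++ (mqeToExps tl).map (· + 1)

lemma mqeToExps_length (L : List ℕ) : (mqeToExps L).length = L.sum := by
  induction L with
  | nil => rfl
  | cons d tl ih => simp [mqeToExps, ih]

lemma mqeToExps_sum (q : ℕ) (L : List ℕ) :
    ((mqeToExps L).map (q ^ ·)).sum = Nat.ofDigits q L := by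
  induction L with
  | nil => simp [mqeToExps, Nat.ofDigits]
  | cons d tl ih =>
    simp only [mqeToExps, List.map_append, List.sum_append, Nat.ofDigits_cons]
    rw [List.map_replicate, List.sum_replicate, pow_zero, smul_eq_mul, mul_one]
    congr 1
    rw [← ih]
    rw [List.map_map]
    have : ((fun x => q ^ x) ∘ fun x => x + 1) = fun e => q * q ^ e := by
      funext e; simp [pow_succ, mul_comm]
    rw [this, ← List.sum_map_mul_left]

lemma mqe_digits_one (q : ℕ) (hq : 1 < q) : Nat.digits q 1 = [1] := by
  rw [Nat.digits_def' hq one_pos]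
  simp [Nat.mod_eq_of_lt hq, Nat.div_eq_of_lt hq]

lemma mqe_digitSum_pow (q k : ℕ) (hq : 1 < q) : (Nat.digits q (q ^ k)).sum = 1 := by
  have := Nat.digits_base_pow_mul (b := q) (k := k) (m := 1) hq one_pos
  rw [mul_one] at this
  rw [this, List.sum_append, List.sum_replicate, mqe_digits_one q hq]
  simp

lemma mqe_digitSum_finsum_le (q : ℕ) (hq : 1 < q) {ι : Type*} (s : Finset ι) (g : ι → ℕ) :
    (Nat.digits q (∑ i ∈ s, g i)).sum ≤ ∑ i ∈ s, (Nat.digits q (g i)).sum := by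
  induction s using Finset.cons_induction with
  | empty => simp
  | cons a s ha ih =>
    rw [Finset.sum_cons, Finset.sum_cons]
    calc (Nat.digits q (g a + ∑ i ∈ s, g i)).sum
        ≤ (Nat.digits q (g a)).sum + (Nat.digits q (∑ i ∈ s, g i)).sum :=
          mqe_digitSum_add_le q _ _ hq
      _ ≤ _ := by omega

lemma mqe_digitSum_split (q n a b : ℕ) (hq : 1 < q) (ha : a < q ^ n) (hb : 0 < b) :
    (Nat.digits q (a + q ^ n * b)).sum = (Nat.digits q a).sum + (Nat.digits q b).sum := by
  have hlen : (Nat.digits q a).length ≤ n := by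
    rcases Nat.eq_zero_or_pos a with rfl | ha0
    · simp
    · rw [Nat.digits_len q a hq ha0.ne']
      have := Nat.log_lt_of_lt_pow ha0.ne' ha
      omega
  have key := Nat.digits_append_zeroes_append_digits (b := q)
    (k := n - (Nat.digits q a).length) (m := b) (n := a) hq hb
  rw [Nat.add_sub_cancel' hlen] at key
  rw [← key]
  simp

/-- Folding a positive integer down below `q ^ n` modulo `q ^ n - 1`,
without increasing the digit sum. -/
lemma mqe_fold (q n : ℕ) (hq : 1 < q) (hn : 0 < n) :
    ∀ x, 0 < x → ∃ y, 0 < y ∧ y < q ^ n ∧ y ≡ x [MOD q ^ n - 1] ∧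
      (Nat.digits q y).sum ≤ (Nat.digits q x).sum := by
  intro x
  induction x using Nat.strong_induction_on with
  | _ x IH =>
    intro hx
    by_cases hlt : x < q ^ n
    · exact ⟨x, hx, hlt, Nat.ModEq.refl _, le_rfl⟩
    · push_neg at hlt
      have hqn : 0 < q ^ n := by positivity
      obtain ⟨a, b, hx', haq, hb⟩ : ∃ a b, x = a + q ^ n * b ∧ a < q ^ n ∧ 0 < b :=
        ⟨x % q ^ n, x / q ^ n, by rw [Nat.mod_add_div], Nat.mod_lt _ hqn, Nat.div_pos hlt hqn⟩
      have hqn2 : 2 ≤ q ^ n := by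
        calc 2 ≤ q := hq
          _ = q ^ 1 := (pow_one q).symm
          _ ≤ q ^ n := Nat.pow_le_pow_right (by omega) hn
      have hbb : b < q ^ n * b := (Nat.lt_mul_iff_one_lt_left hb).mpr (by omega)
      have hless : a + b < x := by omega
      have hpos : 0 < a + b := by omega
      obtain ⟨y, hy1, hy2, hy3, hy4⟩ := IH (a + b) hless hpos
      refine ⟨y, hy1, hy2, ?_, ?_⟩
      · refine hy3.trans ?_
        have hsub : (q ^ n - 1) * b = q ^ n * b - b := by
          rw [Nat.sub_mul, one_mul]
        have : x = (q ^ n - 1) * b + (a + b) := by omega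
        rw [this]
        calc a + b = 0 + (a + b) := by ring
          _ ≡ (q ^ n - 1) * b + (a + b) [MOD q ^ n - 1] :=
            Nat.ModEq.add_right _ (Nat.modEq_zero_iff_dvd.mpr ⟨b, rfl⟩).symm
      · calc (Nat.digits q y).sum ≤ (Nat.digits q (a + b)).sum := hy4
          _ ≤ (Nat.digits q a).sum + (Nat.digits q b).sum := mqe_digitSum_add_le q _ _ hq
          _ = (Nat.digits q x).sum := by rw [hx', mqe_digitSum_split q n a b hq haq hb]

theorem stmt_3 (q e n : ℕ) (hq : 1 < q) (he : 0 < e) (hn : 0 < n)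
    (hcop : Nat.gcd q e = 1) (hdvd : e ∣ q ^ n - 1) :
    mqe q e =
      sInf {s | ∃ k, 1 ≤ k ∧ k ≤ (q ^ n - 1) / e ∧ s = (Nat.digits q (k * e)).sum} := by
  have hqn2 : 2 ≤ q ^ n := by
    calc 2 ≤ q := hq
      _ = q ^ 1 := (pow_one q).symm
      _ ≤ q ^ n := Nat.pow_le_pow_right (by omega) hn
  have hqn1 : 0 < q ^ n - 1 := by omega
  have hee : e ≤ q ^ n - 1 := Nat.le_of_dvd hqn1 hdvd
  set A : Set ℕ := {t | 0 < t ∧ ∃ f : Fin t → ℕ, e ∣ ∑ i, q ^ f i} with hA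
  set B : Set ℕ := {s | ∃ k, 1 ≤ k ∧ k ≤ (q ^ n - 1) / e ∧ s = (Nat.digits q (k * e)).sum}
    with hB
  have hAne : A.Nonempty := by
    refine ⟨e, he, fun _ => 0, ?_⟩
    simp
  have hBne : B.Nonempty := by
    refine ⟨(Nat.digits q e).sum, 1, le_rfl, ?_, by rw [one_mul]⟩
    exact (Nat.one_le_div_iff he).mpr hee
  have hmemA := Nat.sInf_mem hAne
  have hmemB := Nat.sInf_mem hBne
  apply le_antisymm
  · -- mqe q e ≤ sInf B
    obtain ⟨k, hk1, hk2, hks⟩ := hmemB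
    set x := k * e with hx
    have hxpos : 0 < x := Nat.mul_pos hk1 he
    -- digit sum of x is positive
    have hspos : 0 < (Nat.digits q x).sum := by
      have hne : Nat.digits q x ≠ [] := Nat.digits_ne_nil_iff_ne_zero.mpr hxpos.ne'
      have hlast := Nat.getLast_digit_ne_zero q hxpos.ne'
      have hmem : (Nat.digits q x).getLast hne ∈ Nat.digits q x := List.getLast_mem hne
      have := List.single_le_sum (fun (a : ℕ) _ => Nat.zero_le a) _ hmem
      omega
    apply Nat.sInf_le
    rw [hks]
    refine ⟨hspos, ?_⟩
    -- build f from the digit expansion of x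
    set L := mqeToExps (Nat.digits q x) with hL
    have hlen : L.length = (Nat.digits q x).sum := mqeToExps_length _
    refine ⟨fun i => L.get (Fin.cast hlen.symm i), ?_⟩
    have : ∑ i : Fin (Nat.digits q x).sum, q ^ L.get (Fin.cast hlen.symm i)
        = ∑ i : Fin L.length, q ^ L.get i :=
      Fin.sum_congr' (fun i => q ^ L.get i) hlen.symm
    rw [this]
    have : ∑ i : Fin L.length, q ^ L.get i = (L.map (q ^ ·)).sum := by
      rw [← List.sum_ofFn]
      congr 1
      apply List.ext_get
      · simp
      · intro i h1 h2
        simp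
    rw [this, hL, mqeToExps_sum, Nat.ofDigits_digits, hx]
    exact Dvd.intro_left k rfl
  · -- sInf B ≤ mqe q e
    obtain ⟨htpos, f, hf⟩ := hmemA
    have key : ∀ x : ℕ, e ∣ x → 0 < x → (Nat.digits q x).sum ≤ sInf A →
        sInf B ≤ sInf A := by
      intro x hfx hxpos hsx
      obtain ⟨y, hy1, hy2, hy3, hy4⟩ := mqe_fold q n hq hn x hxpos
      have hey : e ∣ y := by
        have h1 : y ≡ x [MOD e] := hy3.of_dvd hdvd
        have h2 : x ≡ 0 [MOD e] := (Nat.modEq_zero_iff_dvd).mpr hfx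
        exact (Nat.modEq_zero_iff_dvd).mp (h1.trans h2)
      obtain ⟨k, hk⟩ := hey
      have hk1 : 1 ≤ k := by
        rcases Nat.eq_zero_or_pos k with rfl | h
        · omega
        · exact h
      have hk2 : k ≤ (q ^ n - 1) / e := by
        apply Nat.le_div_iff_mul_le he |>.mpr
        have h1 : k * e = y := by rw [hk, mul_comm]
        have h2 : y ≤ q ^ n - 1 := by omega
        omega
      calc sInf B ≤ (Nat.digits q (k * e)).sum := Nat.sInf_le ⟨k, hk1, hk2, rfl⟩
        _ = (Nat.digits q y).sum := by rw [mul_comm, ← hk]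
        _ ≤ (Nat.digits q x).sum := hy4
        _ ≤ sInf A := hsx
    apply key (∑ i, q ^ f i) hf
    · have : (sInf A : ℕ) ≤ ∑ i, q ^ f i := by
        calc sInf A = ∑ _i : Fin (sInf A), 1 := by simp
          _ ≤ ∑ i, q ^ f i := Finset.sum_le_sum fun i _ => Nat.one_le_pow _ _ (by omega)
      omega
    · calc (Nat.digits q (∑ i, q ^ f i)).sum
          ≤ ∑ i : Fin (sInf A), (Nat.digits q (q ^ f i)).sum :=
            mqe_digitSum_finsum_le q hq _ _
        _ = ∑ _i : Fin (sInf A), 1 := by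
            apply Finset.sum_congr rfl
            intro i _
            exact mqe_digitSum_pow q (f i) hq
        _ = sInf A := by simp
end

section
/- Let q, n, e be positive integers with q > 1 and e dividing q^n - 1, and set z = (q^n - 1)/e. For any integer k with 1 ≤ k < z, the q-adic expansion of k*e is k*e = Σ_{i=1}^{n} a_i q^{i-1} where a_i = (r(k*q^{n-i})*q - r(k*q^{n-i+1}))/z, and r(x) denotes the residue of x modulo z in {0, 1, ..., z-1}. In particular each a_i is an integer with 0 ≤ a_i < q, and the digit sum satisfies s_q(k*e) = ((q-1)/z) * Σ_{i=1}^{n} r(k*q^i). -/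
lemma sum_digits_add_base_mul {q : ℕ} (hq : 1 < q) (a m : ℕ) (ha : a < q) :
    (Nat.digits q (a + q * m)).sum = a + (Nat.digits q m).sum := by
  rcases Nat.eq_zero_or_pos (a + q * m) with h | h
  · have ha0 : a = 0 := by omega
    have hm0 : m = 0 := by
      rcases Nat.mul_eq_zero.mp (by omega : q * m = 0) with h' | h' <;> omega
    simp [ha0, hm0]
  · rw [Nat.digits_def' hq h]
    have h1 : (a + q * m) % q = a := by
      rw [Nat.add_mul_mod_self_left, Nat.mod_eq_of_lt ha]
    have h2 : (a + q * m) / q = m := by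
      rw [Nat.add_mul_div_left _ _ (by omega : 0 < q), Nat.div_eq_of_lt ha, zero_add]
    rw [h1, h2, List.sum_cons]

lemma key_digitsum {q : ℕ} (hq : 1 < q) :
    ∀ (n : ℕ) (a : ℕ → ℕ), (∀ i, i < n → a i < q) →
      (Nat.digits q (∑ i ∈ Finset.range n, a i * q ^ i)).sum = ∑ i ∈ Finset.range n, a i := by
  intro n
  induction n with
  | zero => simp
  | succ n ih =>
    intro a ha
    have h1 : ∑ i ∈ Finset.range (n+1), a i * q ^ i
        = a 0 + q * ∑ i ∈ Finset.range n, a (i+1) * q ^ i := by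
      rw [Finset.sum_range_succ', Finset.mul_sum]
      simp only [pow_succ, pow_zero, mul_one]
      rw [add_comm]
      congr 1
      apply Finset.sum_congr rfl
      intro x _
      ring
    rw [h1, sum_digits_add_base_mul hq _ _ (ha 0 (by omega)),
      ih _ (fun i hi => ha (i+1) (by omega)), Finset.sum_range_succ']
    ring

theorem stmt_4 (q n e z k : ℕ) (hq : 1 < q) (hn : 0 < n) (he : 0 < e)
    (hz : z * e = q ^ n - 1) (hk1 : 1 ≤ k) (hkz : k < z) :
    (∀ i ∈ Finset.Icc 1 n, k * q ^ (n - i + 1) % z ≤ (k * q ^ (n - i) % z) * q) ∧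
    (∀ i ∈ Finset.Icc 1 n, z ∣ (k * q ^ (n - i) % z) * q - k * q ^ (n - i + 1) % z) ∧
    (∀ i ∈ Finset.Icc 1 n,
      ((k * q ^ (n - i) % z) * q - k * q ^ (n - i + 1) % z) / z < q) ∧
    (k * e = ∑ i ∈ Finset.Icc 1 n,
      (((k * q ^ (n - i) % z) * q - k * q ^ (n - i + 1) % z) / z) * q ^ (i - 1)) ∧
    ((Nat.digits q (k * e)).sum * z = (q - 1) * ∑ i ∈ Finset.Icc 1 n, k * q ^ i % z) := by
  have hz0 : 0 < z := by omega
  have hqn1 : 1 ≤ q ^ n := Nat.one_le_pow _ _ (by omega)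
  have hqe : q ^ n = z * e + 1 := by omega
  -- basic facts about r j := k * q ^ j % z
  have hstep : ∀ j : ℕ, k * q ^ (j + 1) % z = (k * q ^ j % z) * q % z := by
    intro j
    rw [pow_succ, ← mul_assoc]
    exact (Nat.mod_mul_mod _ _ _).symm
  have hrlt : ∀ j : ℕ, k * q ^ j % z < z := fun j => Nat.mod_lt _ hz0
  have hle : ∀ j : ℕ, k * q ^ (j + 1) % z ≤ (k * q ^ j % z) * q := by
    intro j; rw [hstep j]; exact Nat.mod_le _ _
  have hdvd : ∀ j : ℕ, z ∣ (k * q ^ j % z) * q - k * q ^ (j + 1) % z := by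
    intro j; rw [hstep j]; exact Nat.dvd_sub_mod _
  have hr0 : k * q ^ 0 % z = k := by simp [Nat.mod_eq_of_lt hkz]
  have hrn : k * q ^ n % z = k := by
    have h1 : k * q ^ n = k + (k * e) * z := by rw [hqe]; ring
    rw [h1, Nat.add_mul_mod_self_right, Nat.mod_eq_of_lt hkz]
  have hltq : ∀ j : ℕ, ((k * q ^ j % z) * q - k * q ^ (j + 1) % z) / z < q := by
    intro j
    rw [Nat.div_lt_iff_lt_mul hz0]
    have h1 := hrlt j
    have h2 : (k * q ^ j % z) * q ≤ (z - 1) * q := Nat.mul_le_mul_right _ (by omega)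
    have h3 : (z - 1) * q + q = q * z := by
      calc (z - 1) * q + q = ((z - 1) + 1) * q := by ring
        _ = z * q := by rw [show z - 1 + 1 = z from by omega]
        _ = q * z := mul_comm _ _
    omega
  refine ⟨fun i _ => hle (n - i), fun i _ => hdvd (n - i), fun i _ => hltq (n - i), ?_⟩
  -- part 4
  have hIcc : Finset.Icc 1 n = Finset.Ico 1 (n + 1) := by rw [Finset.Ico_add_one_right_eq_Icc]
  -- g j = (k * q ^ (n - j) % z) * q ^ j is monotone
  set g : ℕ → ℕ := fun j => (k * q ^ (n - j) % z) * q ^ j with hg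
  have hgmono : Monotone g := by
    apply monotone_nat_of_le_succ
    intro j
    simp only [hg]
    rcases lt_or_ge j n with hjn | hjn
    · have e1 : n - j = (n - (j + 1)) + 1 := by omega
      calc (k * q ^ (n - j) % z) * q ^ j
          ≤ ((k * q ^ (n - (j + 1)) % z) * q) * q ^ j := by
            rw [e1]; exact Nat.mul_le_mul_right _ (hle _)
        _ = (k * q ^ (n - (j + 1)) % z) * q ^ (j + 1) := by rw [pow_succ]; ring
    · have e1 : n - j = 0 := by omega
      have e2 : n - (j + 1) = 0 := by omega
      rw [e1, e2]
      exact Nat.mul_le_mul_left _ (pow_le_pow_right₀ (by omega) (by omega))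
  have hsum : ∀ F : ℕ → ℕ,
      ∑ i ∈ Finset.Icc 1 n, F i = ∑ j ∈ Finset.range n, F (1 + j) := by
    intro F
    rw [hIcc, Finset.sum_Ico_eq_sum_range]
    simp
  have hmain : z * (∑ i ∈ Finset.Icc 1 n,
      (((k * q ^ (n - i) % z) * q - k * q ^ (n - i + 1) % z) / z) * q ^ (i - 1))
      = z * (k * e) := by
    rw [Finset.mul_sum]
    have hterm : ∀ i ∈ Finset.Icc 1 n,
        z * ((((k * q ^ (n - i) % z) * q - k * q ^ (n - i + 1) % z) / z) * q ^ (i - 1))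
        = g i - g (i - 1) := by
      intro i hi
      obtain ⟨hi1, hi2⟩ := Finset.mem_Icc.mp hi
      rw [← mul_assoc, Nat.mul_div_cancel' (hdvd (n - i)), Nat.sub_mul]
      simp only [hg]
      congr 1
      · have e3 : q ^ i = q ^ (i - 1) * q := by
          rw [← pow_succ, show i - 1 + 1 = i from by omega]
        rw [e3]; ring
      · rw [show n - (i - 1) = n - i + 1 from by omega]
    rw [Finset.sum_congr rfl hterm, hsum (fun i => g i - g (i - 1))]
    have hterm2 : ∀ j ∈ Finset.range n, g (1 + j) - g (1 + j - 1) = g (j + 1) - g j := by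
      intro j _
      have e1 : 1 + j = j + 1 := by omega
      have e2 : 1 + j - 1 = j := by omega
      rw [e2, e1]
    rw [Finset.sum_congr rfl hterm2, Finset.sum_range_tsub hgmono]
    simp only [hg, Nat.sub_self, Nat.sub_zero, pow_zero, mul_one,
      Nat.mod_eq_of_lt hkz, hrn]
    have h1 : k * q ^ n = k + z * (k * e) := by rw [hqe]; ring
    omega
  have hpart4 : k * e = ∑ i ∈ Finset.Icc 1 n,
      (((k * q ^ (n - i) % z) * q - k * q ^ (n - i + 1) % z) / z) * q ^ (i - 1) :=
    (Nat.eq_of_mul_eq_mul_left hz0 hmain).symm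
  refine ⟨hpart4, ?_⟩
  -- part 5
  set b : ℕ → ℕ := fun j =>
    ((k * q ^ (n - (1 + j)) % z) * q - k * q ^ (n - (1 + j) + 1) % z) / z with hb
  have hke : k * e = ∑ j ∈ Finset.range n, b j * q ^ j := by
    rw [hpart4, hsum (fun i =>
      (((k * q ^ (n - i) % z) * q - k * q ^ (n - i + 1) % z) / z) * q ^ (i - 1))]
    apply Finset.sum_congr rfl
    intro j _
    have e2 : 1 + j - 1 = j := by omega
    rw [e2]
  have hblt : ∀ j, j < n → b j < q := fun j _ => hltq (n - (1 + j))
  have hds : (Nat.digits q (k * e)).sum = ∑ j ∈ Finset.range n, b j := by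
    rw [hke]; exact key_digitsum hq n b hblt
  rw [hds, Finset.sum_mul]
  have hterm3 : ∀ j ∈ Finset.range n, b j * z
      = (k * q ^ (n - 1 - j) % z) * q - k * q ^ (n - j) % z := by
    intro j hj
    have hjn := Finset.mem_range.mp hj
    simp only [hb]
    rw [Nat.div_mul_cancel (hdvd (n - (1 + j)))]
    have e1 : n - (1 + j) = n - 1 - j := by omega
    have e2 : n - (1 + j) + 1 = n - j := by omega
    rw [e2, e1]
  rw [Finset.sum_congr rfl hterm3]
  have hsub : ∀ j ∈ Finset.range n,
      k * q ^ (n - j) % z ≤ (k * q ^ (n - 1 - j) % z) * q := by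
    intro j hj
    have hjn := Finset.mem_range.mp hj
    have e1 : n - j = (n - 1 - j) + 1 := by omega
    rw [e1]; exact hle _
  rw [Finset.sum_tsub_distrib _ hsub]
  have hA : ∑ j ∈ Finset.range n, (k * q ^ (n - 1 - j) % z) * q
      = (∑ j ∈ Finset.range n, k * q ^ j % z) * q := by
    rw [← Finset.sum_mul]
    congr 1
    exact Finset.sum_range_reflect (fun j => k * q ^ j % z) n
  have hB : ∑ j ∈ Finset.range n, k * q ^ (n - j) % z
      = ∑ j ∈ Finset.range n, k * q ^ (j + 1) % z := by
    rw [← Finset.sum_range_reflect (fun j => k * q ^ (j + 1) % z) n]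
    apply Finset.sum_congr rfl
    intro j hj
    have hjn := Finset.mem_range.mp hj
    have e1 : n - 1 - j + 1 = n - j := by omega
    rw [e1]
  have hT : ∑ i ∈ Finset.Icc 1 n, k * q ^ i % z
      = ∑ j ∈ Finset.range n, k * q ^ (j + 1) % z := by
    rw [hsum (fun i => k * q ^ i % z)]
    apply Finset.sum_congr rfl
    intro j _
    rw [Nat.add_comm 1 j]
  have hAT : ∑ j ∈ Finset.range n, k * q ^ j % z
      = ∑ j ∈ Finset.range n, k * q ^ (j + 1) % z := by
    conv_lhs => rw [show n = (n - 1) + 1 by omega, Finset.sum_range_succ']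
    conv_rhs => rw [show n = (n - 1) + 1 by omega, Finset.sum_range_succ]
    rw [hr0, show n - 1 + 1 = n by omega, hrn]
  rw [hA, hB, hAT, hT, Nat.sub_mul, one_mul,
    mul_comm (∑ j ∈ Finset.range n, k * q ^ (j + 1) % z) q]
end

section
/- Let q, n, e be positive integers with q > 1, e dividing q^n - 1, and set z = (q^n - 1)/e. Suppose q ≡ 1 (mod z). Then for every k with 1 ≤ k ≤ z - 1, the q-adic digit sum of k*e equals k*n*(q-1)/z. -/
lemma geom_aux (q : ℕ) (hq : 1 ≤ q) :
    ∀ n, (q - 1) * ∑ i ∈ Finset.range n, q ^ i = q ^ n - 1 := by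
  intro n
  induction n with
  | zero => simp
  | succ n ih =>
    rw [Finset.sum_range_succ, Nat.mul_add, ih, pow_succ, Nat.sub_mul, Nat.one_mul]
    have h1 : 1 ≤ q ^ n := Nat.one_le_pow _ _ (by omega)
    have h2 : q ^ n ≤ q ^ n * q := Nat.le_mul_of_pos_right _ (by omega)
    have h3 : q * q ^ n = q ^ n * q := mul_comm _ _
    omega

lemma digitsum_rep (q : ℕ) (hq : 1 < q) (c : ℕ) (hc0 : 0 < c) (hcq : c < q) :
    ∀ n, (Nat.digits q (c * ∑ i ∈ Finset.range n, q ^ i)).sum = n * c := by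
  intro n
  induction n with
  | zero => simp
  | succ n ih =>
    have hrw : c * ∑ i ∈ Finset.range (n + 1), q ^ i
        = c + q * (c * ∑ i ∈ Finset.range n, q ^ i) := by
      rw [Finset.sum_range_succ']
      simp only [pow_succ, pow_zero]
      rw [← Finset.sum_mul]
      ring
    rw [hrw, Nat.digits_def' hq (by positivity)]
    have hmod : (c + q * (c * ∑ i ∈ Finset.range n, q ^ i)) % q = c := by
      rw [Nat.add_mul_mod_self_left, Nat.mod_eq_of_lt hcq]
    have hdivv : (c + q * (c * ∑ i ∈ Finset.range n, q ^ i)) / q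
        = c * ∑ i ∈ Finset.range n, q ^ i := by
      rw [Nat.add_mul_div_left _ _ (by omega : 0 < q), Nat.div_eq_of_lt hcq, Nat.zero_add]
    rw [hmod, hdivv, List.sum_cons, ih]
    ring

theorem stmt_5 (q n e z : ℕ) (hq : 1 < q) (hn : 0 < n) (he : 0 < e)
    (hdvd : e ∣ q ^ n - 1) (hz : z = (q ^ n - 1) / e) (hq1 : q ≡ 1 [MOD z]) :
    ∀ k, 1 ≤ k → k ≤ z - 1 → (Nat.digits q (k * e)).sum = k * n * (q - 1) / z := by
  have hqn : 1 ≤ q ^ n - 1 := by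
    have : 2 ≤ q ^ n := by
      calc 2 ≤ q := hq
      _ = q ^ 1 := (pow_one q).symm
      _ ≤ q ^ n := Nat.pow_le_pow_right (by omega) hn
    omega
  have hez : e * z = q ^ n - 1 := by
    rw [hz]; exact Nat.mul_div_cancel' hdvd
  have hz0 : 0 < z := by
    rw [hz]; exact Nat.div_pos (Nat.le_of_dvd (by omega) hdvd) he
  have hzd : z ∣ q - 1 := (Nat.modEq_iff_dvd' (by omega)).mp hq1.symm
  obtain ⟨d, hd⟩ := hzd
  have hd1 : 1 ≤ d := by
    rcases Nat.eq_zero_or_pos d with h | h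
    · subst h; simp at hd; omega
    · exact h
  intro k hk1 hk2
  have hz2 : 2 ≤ z := by omega
  set c := k * d with hc
  have hc0 : 0 < c := Nat.mul_pos (by omega) hd1
  have hcq : c < q := by
    have h1 : k * d ≤ (z - 1) * d := Nat.mul_le_mul_right d hk2
    have h2 : (z - 1) * d = z * d - d := by rw [Nat.sub_mul, Nat.one_mul]
    omega
  have hkey : k * e = c * ∑ i ∈ Finset.range n, q ^ i := by
    apply Nat.eq_of_mul_eq_mul_left hz0
    calc z * (k * e) = k * (e * z) := by ring
    _ = k * (q ^ n - 1) := by rw [hez]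
    _ = k * ((q - 1) * ∑ i ∈ Finset.range n, q ^ i) := by rw [geom_aux q (by omega)]
    _ = z * (c * ∑ i ∈ Finset.range n, q ^ i) := by rw [hd]; ring
  rw [hkey, digitsum_rep q hq c hc0 hcq n]
  rw [hd]
  have : k * n * (z * d) = (n * c) * z := by rw [hc]; ring
  rw [this, Nat.mul_div_cancel _ hz0]
end

section
/- Let q, e be positive integers with q > 1, e dividing q^2 - 1, e not equal to q^2 - 1, and set z = (q^2 - 1)/e. Suppose q ≡ -1 (mod z) and z > 2. Then for every k with 1 ≤ k ≤ z - 1, the q-adic digit sum of k*e equals q - 1; in particular m(q,e) = q - 1. -/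
lemma aux_sum (q a b : ℕ) :
    ∑ x ∈ Finset.range (a + b), (if x < a then 1 else q) = a + b * q := by
  induction b with
  | zero =>
      simp only [Nat.add_zero, Nat.zero_mul]
      rw [Finset.sum_congr rfl fun x hx => if_pos (Finset.mem_range.mp hx)]
      simp
  | succ b ih =>
      rw [show a + (b + 1) = (a + b) + 1 by omega, Finset.sum_range_succ, ih,
        if_neg (by omega)]
      ring

lemma digsum (q : ℕ) (hq : 1 < q) (m : ℕ) (h1 : 1 ≤ m) (h2 : m ≤ q) :
    (Nat.digits q (m * (q - 1))).sum = q - 1 := by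
  have hn : m * (q - 1) = (q - m) + (m - 1) * q := by
    obtain ⟨m', rfl⟩ : ∃ m', m = m' + 1 := ⟨m - 1, by omega⟩
    simp only [Nat.add_sub_cancel]
    zify [show m' + 1 ≤ q by omega, show 1 ≤ q by omega]
    ring
  have hpos : 0 < m * (q - 1) := Nat.mul_pos h1 (by omega)
  rw [Nat.digits_def' hq hpos]
  have hmod : m * (q - 1) % q = q - m := by
    rw [hn, Nat.add_mul_mod_self_right, Nat.mod_eq_of_lt (by omega)]
  have hdivq : m * (q - 1) / q = m - 1 := by
    rw [hn, Nat.add_mul_div_right _ _ (by omega : 0 < q),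
      Nat.div_eq_of_lt (by omega)]
    omega
  rw [hmod, hdivq]
  rcases Nat.eq_or_lt_of_le h1 with h | h
  · rw [← h]
    simp
  · rw [Nat.digits_def' hq (by omega : 0 < m - 1),
      Nat.mod_eq_of_lt (by omega), Nat.div_eq_of_lt (by omega)]
    simp only [Nat.digits_zero, List.sum_cons, List.sum_nil]
    omega

theorem stmt_6 (q e z : ℕ) (hq : 1 < q) (he : 0 < e) (hdvd : e ∣ q ^ 2 - 1)
    (hne : e ≠ q ^ 2 - 1) (hz : z = (q ^ 2 - 1) / e) (hz2 : 2 < z)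
    (hq1 : z ∣ q + 1) :
    (∀ k, 1 ≤ k → k ≤ z - 1 → (Nat.digits q (k * e)).sum = q - 1) ∧
    mqe q e = q - 1 := by
  obtain ⟨w, hw⟩ := hq1
  have hez : e * z = q ^ 2 - 1 := by
    rw [hz, Nat.mul_div_cancel' hdvd]
  have hfact : q ^ 2 - 1 = (q - 1) * (q + 1) := by
    have h1q : 1 ≤ q := by omega
    zify [Nat.one_le_two_pow, show 1 ≤ q ^ 2 from Nat.one_le_pow _ _ (by omega), h1q]
    ring
  -- e = (q-1) * w
  have hew : e = (q - 1) * w := by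
    have hz0 : 0 < z := by omega
    have : z * e = z * ((q - 1) * w) := by
      rw [mul_comm z e, hez, hfact, hw]; ring
    exact Nat.eq_of_mul_eq_mul_left hz0 this
  have hw1 : 1 ≤ w := by
    rcases Nat.eq_zero_or_pos w with h | h
    · subst h; omega
    · exact h
  have hwq : w ≤ q := by
    have : 3 * w ≤ z * w := Nat.mul_le_mul_right w (by omega)
    omega
  constructor
  · intro k hk1 hk2
    have hm1 : 1 ≤ k * w := Nat.one_le_iff_ne_zero.mpr (by positivity)
    have hm2 : k * w ≤ q := by
      have : (k + 1) * w ≤ z * w := Nat.mul_le_mul_right w (by omega)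
      have h2 : k * w + w = (k + 1) * w := by ring
      omega
    have : k * e = (k * w) * (q - 1) := by rw [hew]; ring
    rw [this]
    exact digsum q hq (k * w) hm1 hm2
  · -- membership: q - 1 is in the set
    have hmem : (q - 1) ∈ {t | 0 < t ∧ ∃ f : Fin t → ℕ, e ∣ ∑ i, q ^ f i} := by
      refine ⟨by omega, fun i => if (i : ℕ) < q - w then 0 else 1, ?_⟩
      have hsum : ∑ i : Fin (q - 1), q ^ (if (i : ℕ) < q - w then 0 else 1) = e := by
        have h1 : ∀ i : Fin (q - 1),
            q ^ (if (i : ℕ) < q - w then 0 else 1)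
              = (fun x : ℕ => if x < q - w then 1 else q) (i : ℕ) := by
          intro i
          by_cases h : (i : ℕ) < q - w <;> simp [h]
        rw [Finset.sum_congr rfl fun i _ => h1 i,
          Fin.sum_univ_eq_sum_range (fun x : ℕ => if x < q - w then 1 else q),
          show q - 1 = (q - w) + (w - 1) by omega, aux_sum]
        obtain ⟨w', rfl⟩ : ∃ w', w = w' + 1 := ⟨w - 1, by omega⟩
        simp only [Nat.add_sub_cancel]
        rw [hew]
        zify [show w' + 1 ≤ q by omega, show 1 ≤ q by omega]
        ring
      rw [hsum]
    -- lower bound: every t in the set is divisible by q - 1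
    have hlb : ∀ t ∈ {t | 0 < t ∧ ∃ f : Fin t → ℕ, e ∣ ∑ i, q ^ f i}, q - 1 ≤ t := by
      rintro t ⟨ht0, f, hf⟩
      haveI : NeZero (q - 1) := ⟨by omega⟩
      have hd : (q - 1) ∣ ∑ i, q ^ f i :=
        dvd_trans ⟨w, hew⟩ hf
      have hcast : ((∑ i, q ^ f i : ℕ) : ZMod (q - 1)) = 0 :=
        (ZMod.natCast_eq_zero_iff _ _).mpr hd
      have hq1' : ((q : ℕ) : ZMod (q - 1)) = 1 := by
        have : (q : ℕ) = (q - 1) + 1 := by omega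
        rw [this]
        push_cast
        rw [ZMod.natCast_self]
        ring
      have ht : ((t : ℕ) : ZMod (q - 1)) = 0 := by
        rw [← hcast]
        push_cast
        rw [hq1']
        simp
      have : (q - 1) ∣ t := (ZMod.natCast_eq_zero_iff _ _).mp ht
      exact Nat.le_of_dvd ht0 this
    exact le_antisymm (Nat.sInf_le hmem) (le_csInf ⟨_, hmem⟩ hlb)
end

section
/- Let q, n, e be positive integers with q > 1, n even, e a proper divisor of q^n - 1, and suppose q^{n/2} - 1 divides e. Then for every k with 1 ≤ k ≤ (q^n - 1)/e - 1, the q-adic digit sum of k*e equals n*(q-1)/2; in particular m(q,e) = n*(q-1)/2. -/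
private lemma dsum_rec {q : ℕ} (hq : 1 < q) (a : ℕ) :
    (Nat.digits q a).sum = a % q + (Nat.digits q (a / q)).sum := by
  rcases Nat.eq_zero_or_pos a with h | h
  · simp [h]
  · rw [Nat.digits_def' hq h]; simp

private lemma dsum_compl {q : ℕ} (hq : 1 < q) :
    ∀ m a, a < q ^ m →
      (Nat.digits q a).sum + (Nat.digits q (q ^ m - 1 - a)).sum = m * (q - 1) := by
  intro m
  induction m with
  | zero =>
    intro a ha
    rw [pow_zero] at ha
    interval_cases a
    simp
  | succ m ih =>
    intro a ha
    have hq0 : 0 < q := by omega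
    have hb : a / q < q ^ m := by
      rw [Nat.div_lt_iff_lt_mul hq0]
      calc a < q ^ (m + 1) := ha
        _ = q ^ m * q := pow_succ q m
    have hc : a % q < q := Nat.mod_lt _ hq0
    have hdm : q * (a / q) + a % q = a := Nat.div_add_mod a q
    have hP : 1 ≤ q ^ m := Nat.one_le_pow _ _ hq0
    have key : (q - 1 - a % q) + q * (q ^ m - 1 - a / q) + a = q ^ (m + 1) - 1 := by
      have e1 : q * (q ^ m - 1 - a / q) + q * (a / q) = q * (q ^ m - 1) := by
        rw [← Nat.mul_add]; congr 1; omega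
      have e2 : q * (q ^ m - 1) + q * 1 = q * q ^ m := by
        rw [← Nat.mul_add]; congr 1; omega
      have e3 : q ^ (m + 1) = q * q ^ m := by ring
      omega
    have hA : q ^ (m + 1) - 1 - a = (q - 1 - a % q) + q * (q ^ m - 1 - a / q) := by omega
    rw [dsum_rec hq a, hA, dsum_rec hq ((q - 1 - a % q) + q * (q ^ m - 1 - a / q))]
    have hm1 : ((q - 1 - a % q) + q * (q ^ m - 1 - a / q)) % q = q - 1 - a % q := by
      rw [Nat.add_mul_mod_self_left, Nat.mod_eq_of_lt (by omega)]
    have hm2 : ((q - 1 - a % q) + q * (q ^ m - 1 - a / q)) / q = q ^ m - 1 - a / q := by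
      rw [Nat.add_mul_div_left _ _ hq0, Nat.div_eq_of_lt (by omega), Nat.zero_add]
    rw [hm1, hm2]
    have hih : (Nat.digits q (a / q)).sum + (Nat.digits q (q ^ m - 1 - a / q)).sum
        = m * (q - 1) := ih (a / q) hb
    have hgoal : (m + 1) * (q - 1) = m * (q - 1) + (q - 1) := by ring
    omega

private lemma dsum_pow_sub_one {q : ℕ} (hq : 1 < q) (m : ℕ) :
    (Nat.digits q (q ^ m - 1)).sum = m * (q - 1) := by
  have := dsum_compl hq m 0 (Nat.one_le_pow _ _ (by omega))
  simpa using this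

private lemma dsum_split {q : ℕ} (hq : 1 < q) :
    ∀ m a b, a < q ^ m →
      (Nat.digits q (a + b * q ^ m)).sum = (Nat.digits q a).sum + (Nat.digits q b).sum := by
  intro m
  induction m with
  | zero =>
    intro a b ha
    rw [pow_zero] at ha
    interval_cases a
    simp
  | succ m ih =>
    intro a b ha
    have hq0 : 0 < q := by omega
    have hb : a / q < q ^ m := by
      rw [Nat.div_lt_iff_lt_mul hq0]
      calc a < q ^ (m + 1) := ha
        _ = q ^ m * q := pow_succ q m
    have h1 : a + b * q ^ (m + 1) = a + (b * q ^ m) * q := by rw [pow_succ]; ring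
    rw [dsum_rec hq (a + b * q ^ (m + 1)), h1,
      Nat.add_mul_mod_self_right, Nat.add_mul_div_right _ _ hq0,
      ih (a / q) b hb, dsum_rec hq a]
    ring

private lemma dsum_mul_pred {q : ℕ} (hq : 1 < q) {m r : ℕ} (hr1 : 1 ≤ r) (hr2 : r ≤ q ^ m) :
    (Nat.digits q (r * (q ^ m - 1))).sum = m * (q - 1) := by
  have hq0 : 0 < q := by omega
  have hP : 1 ≤ q ^ m := Nat.one_le_pow _ _ hq0
  have ha : q ^ m - r < q ^ m := by omega
  have harith : r * (q ^ m - 1) = (q ^ m - r) + (q ^ m - 1 - (q ^ m - r)) * q ^ m := by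
    have h1 : q ^ m - 1 - (q ^ m - r) = r - 1 := by omega
    rw [h1]
    have h2 : r * (q ^ m - 1) + r * 1 = r * q ^ m := by rw [← Nat.mul_add]; congr 1; omega
    have h3 : (r - 1) * q ^ m + 1 * q ^ m = r * q ^ m := by
      rw [← Nat.add_mul]; congr 1; omega
    have h4 : 1 * q ^ m = q ^ m := one_mul _
    have h5 : r * 1 = r := mul_one _
    have h6 : r ≤ r * q ^ m := by calc r = r * 1 := (mul_one r).symm
                                      _ ≤ r * q ^ m := Nat.mul_le_mul_left r hP
    omega
  rw [harith, dsum_split hq m _ _ ha, dsum_compl hq m _ ha]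

private lemma dsum_one {q : ℕ} (hq : 1 < q) : (Nat.digits q 1).sum = 1 := by
  rw [dsum_rec hq, Nat.mod_eq_of_lt hq, Nat.div_eq_of_lt hq]
  simp

private lemma dsum_subadd {q : ℕ} (hq : 1 < q) :
    ∀ n a b, a + b ≤ n →
      (Nat.digits q (a + b)).sum ≤ (Nat.digits q a).sum + (Nat.digits q b).sum := by
  intro n
  induction n with
  | zero =>
    intro a b h
    have : a = 0 ∧ b = 0 := by omega
    simp [this.1, this.2]
  | succ n ih =>
    intro a b h
    rcases Nat.eq_zero_or_pos (a + b) with h0 | h0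
    · have : a = 0 ∧ b = 0 := by omega
      simp [this.1, this.2]
    have hq0 : 0 < q := by omega
    have hdiv : (a + b) / q = a / q + b / q + if q ≤ a % q + b % q then 1 else 0 :=
      Nat.add_div hq0
    have hmod : (a + b) % q < q := Nat.mod_lt _ hq0
    have hdm : q * ((a+b) / q) + (a+b) % q = a + b := Nat.div_add_mod _ q
    have hdma : q * (a / q) + a % q = a := Nat.div_add_mod _ q
    have hdmb : q * (b / q) + b % q = b := Nat.div_add_mod _ q
    have hlt : (a + b) / q ≤ n := by
      have : (a + b) / q < a + b := Nat.div_lt_self h0 hq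
      omega
    have hca : a % q < q := Nat.mod_lt _ hq0
    have hcb : b % q < q := Nat.mod_lt _ hq0
    by_cases hcar : q ≤ a % q + b % q
    · rw [if_pos hcar] at hdiv
      have s1 : (Nat.digits q (a / q + b / q + 1)).sum
          ≤ (Nat.digits q (a / q + b / q)).sum + (Nat.digits q 1).sum := by
        apply ih
        omega
      have s2 : (Nat.digits q (a / q + b / q)).sum
          ≤ (Nat.digits q (a / q)).sum + (Nat.digits q (b / q)).sum := by
        apply ih
        omega
      have hmod2 : (a + b) % q = a % q + b % q - q := by
        rw [Nat.add_mod, Nat.mod_eq_sub_mod hcar, Nat.mod_eq_of_lt (by omega)]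
      rw [dsum_rec hq (a + b), dsum_rec hq a, dsum_rec hq b, hdiv, hmod2]
      rw [dsum_one hq] at s1
      omega
    · rw [if_neg hcar] at hdiv
      have s2 : (Nat.digits q (a / q + b / q)).sum
          ≤ (Nat.digits q (a / q)).sum + (Nat.digits q (b / q)).sum := by
        apply ih
        omega
      have hmod2 : (a + b) % q = a % q + b % q := by
        rw [Nat.add_mod, Nat.mod_eq_of_lt (by omega)]
      rw [dsum_rec hq (a + b), dsum_rec hq a, dsum_rec hq b, hdiv, hmod2]
      simp only [add_zero]
      omega

private lemma dsum_pow {q : ℕ} (hq : 1 < q) (j : ℕ) : (Nat.digits q (q ^ j)).sum = 1 := by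
  induction j with
  | zero => simpa using dsum_one hq
  | succ j ih =>
    have hq0 : 0 < q := by omega
    rw [dsum_rec hq]
    have h1 : q ^ (j + 1) % q = 0 := by
      have : q ∣ q ^ (j + 1) := dvd_pow_self q (Nat.succ_ne_zero j)
      omega
    have h2 : q ^ (j + 1) / q = q ^ j := by
      rw [pow_succ, Nat.mul_div_cancel _ hq0]
    rw [h1, h2, ih]

private lemma dsum_sum_powers_le {q : ℕ} (hq : 1 < q) :
    ∀ (t : ℕ) (f : Fin t → ℕ), (Nat.digits q (∑ i, q ^ f i)).sum ≤ t := by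
  intro t
  induction t with
  | zero => intro f; simp
  | succ t ih =>
    intro f
    rw [Fin.sum_univ_castSucc]
    calc (Nat.digits q (∑ i : Fin t, q ^ f i.castSucc + q ^ f (Fin.last t))).sum
        ≤ (Nat.digits q (∑ i : Fin t, q ^ f i.castSucc)).sum
          + (Nat.digits q (q ^ f (Fin.last t))).sum := dsum_subadd hq _ _ _ le_rfl
      _ ≤ t + 1 := by
          have := ih (fun i => f i.castSucc)
          have := dsum_pow hq (f (Fin.last t))
          omega

private lemma exists_rep_s7 {q : ℕ} (hq : 1 < q) :
    ∀ N, ∃ f : Fin ((Nat.digits q N).sum) → ℕ, ∑ i, q ^ f i = N := by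
  intro N
  induction N using Nat.strong_induction_on with
  | _ N ih =>
    rcases Nat.eq_zero_or_pos N with h0 | h0
    · subst h0
      exact ⟨fun i => 0, by simp⟩
    have hq0 : 0 < q := by omega
    have hdivlt : N / q < N := Nat.div_lt_self h0 hq
    obtain ⟨f', hf'⟩ := ih (N / q) hdivlt
    have hrec : (Nat.digits q N).sum = N % q + (Nat.digits q (N / q)).sum := dsum_rec hq N
    rw [hrec]
    refine ⟨Fin.append (fun _ : Fin (N % q) => 0) (fun i => f' i + 1), ?_⟩
    rw [Fin.sum_univ_add]
    simp only [Fin.append_left, Fin.append_right]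
    have h1 : ∑ _i : Fin (N % q), q ^ (0:ℕ) = N % q := by simp
    have h2 : ∑ i : Fin ((Nat.digits q (N / q)).sum), q ^ (f' i + 1)
        = q * (N / q) := by
      have h3 : ∑ i : Fin ((Nat.digits q (N / q)).sum), q ^ (f' i + 1)
          = q * ∑ i : Fin ((Nat.digits q (N / q)).sum), q ^ f' i := by
        rw [Finset.mul_sum]
        apply Finset.sum_congr rfl
        intro i _
        rw [pow_succ]
        ring
      rw [h3, hf']
    rw [h1, h2]
    exact Nat.mod_add_div N q

private lemma fold_down {q n e : ℕ} (hq : 1 < q) (hn : 0 < n) (hdvd : e ∣ q ^ n - 1) :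
    ∀ N, 0 < N → e ∣ N → ∃ N', 0 < N' ∧ N' < q ^ n ∧ e ∣ N' ∧
      (Nat.digits q N').sum ≤ (Nat.digits q N).sum := by
  intro N
  induction N using Nat.strong_induction_on with
  | _ N ih =>
    intro hN0 hNe
    have hq0 : 0 < q := by omega
    have hP : 1 < q ^ n := Nat.one_lt_pow (by omega) hq
    by_cases hbig : N < q ^ n
    · exact ⟨N, hN0, hbig, hNe, le_rfl⟩
    push_neg at hbig
    set a := N % q ^ n with ha
    set b := N / q ^ n with hb
    have hdm : q ^ n * b + a = N := Nat.div_add_mod N (q ^ n)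
    have halt : a < q ^ n := Nat.mod_lt _ (by omega)
    have hb1 : 1 ≤ b := by
      rw [hb]
      exact Nat.one_le_div_iff (by omega) |>.mpr hbig
    have hsplit : (Nat.digits q N).sum = (Nat.digits q a).sum + (Nat.digits q b).sum := by
      rw [← hdm]
      have : q ^ n * b + a = a + b * q ^ n := by ring
      rw [this, dsum_split hq n a b halt]
    have hdvd2 : e ∣ a + b := by
      have h1 : a + b + b * (q ^ n - 1) = N := by
        have h2 : b * (q ^ n - 1) + b * 1 = b * q ^ n := by
          rw [← Nat.mul_add]; congr 1; omega
        have h3 : b * q ^ n = q ^ n * b := by ring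
        omega
      have h4 : e ∣ b * (q ^ n - 1) := Dvd.dvd.mul_left hdvd b
      have h5 : e ∣ a + b + b * (q ^ n - 1) := h1 ▸ hNe
      exact (Nat.dvd_add_right h4).mp (by rwa [Nat.add_comm] at h5)
    have hlt : a + b < N := by
      have h6 : b * 1 < b * q ^ n := Nat.mul_lt_mul_of_pos_left hP hb1
      have h7 : b * q ^ n = q ^ n * b := mul_comm _ _
      omega
    have hpos : 0 < a + b := Nat.add_pos_right a hb1
    obtain ⟨N', h1, h2, h3, h4⟩ := ih (a + b) hlt hpos hdvd2
    refine ⟨N', h1, h2, h3, ?_⟩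
    have hsub : (Nat.digits q (a + b)).sum ≤ (Nat.digits q a).sum + (Nat.digits q b).sum :=
      dsum_subadd hq _ _ _ le_rfl
    omega

theorem stmt_7 (q n e : ℕ) (hq : 1 < q) (hn : 0 < n) (hn2 : 2 ∣ n)
    (he : 0 < e) (hdvd : e ∣ q ^ n - 1) (hne : e ≠ q ^ n - 1)
    (hmul : q ^ (n / 2) - 1 ∣ e) :
    (∀ k, 1 ≤ k → k ≤ (q ^ n - 1) / e - 1 →
      (Nat.digits q (k * e)).sum = n * (q - 1) / 2) ∧
    mqe q e = n * (q - 1) / 2 := by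
  obtain ⟨m, hm⟩ := hn2
  have hm1 : 1 ≤ m := by omega
  have hndiv : n / 2 = m := by omega
  rw [hndiv] at hmul
  have hq0 : 0 < q := by omega
  have hQ : 2 ≤ q ^ m := le_trans hq (Nat.le_self_pow (by omega) q)
  have hqn : q ^ n = q ^ m * q ^ m := by rw [hm, two_mul, pow_add]
  have hfac : q ^ n - 1 = (q ^ m - 1) * (q ^ m + 1) := by
    have h1 : (q ^ m - 1) * (q ^ m + 1) + 1 = q ^ m * q ^ m := by
      obtain ⟨s, hs⟩ : ∃ s, q ^ m = s + 1 := ⟨q ^ m - 1, by omega⟩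
      rw [hs]
      simp [Nat.add_sub_cancel]
      ring
    omega
  set d := e / (q ^ m - 1) with hd
  have hed : e = (q ^ m - 1) * d := (Nat.mul_div_cancel' hmul).symm
  have hd0 : 0 < d := by
    rcases Nat.eq_zero_or_pos d with h | h
    · rw [h, mul_zero] at hed; omega
    · exact h
  have hdQ : d ∣ q ^ m + 1 := by
    have h := hdvd
    rw [hfac, hed] at h
    exact (Nat.mul_dvd_mul_iff_left (show 0 < q ^ m - 1 by omega)).mp h
  set c := (q ^ m + 1) / d with hc
  have hcd : d * c = q ^ m + 1 := Nat.mul_div_cancel' hdQ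
  have hce : e * c = q ^ n - 1 := by
    rw [hed, hfac, mul_assoc, hcd]
  have hcdef : (q ^ n - 1) / e = c := by
    rw [← hce, Nat.mul_div_cancel_left _ he]
  have hc1 : 1 ≤ c := by
    rcases Nat.eq_zero_or_pos c with h | h
    · rw [h, mul_zero] at hcd; omega
    · exact h
  have hdQle : d ≤ q ^ m := by
    by_contra h
    push_neg at h
    have hdeq : d = q ^ m + 1 :=
      Nat.le_antisymm (Nat.le_of_dvd (by omega) hdQ) (by omega)
    apply hne
    rw [hed, hdeq, ← hfac]
  have hhalf : n * (q - 1) / 2 = m * (q - 1) := by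
    rw [hm, mul_assoc, Nat.mul_div_cancel_left _ (by norm_num : 0 < 2)]
  have hkey : ∀ k, 1 ≤ k → k ≤ c - 1 →
      (Nat.digits q (k * e)).sum = m * (q - 1) := by
    intro k h1 h2
    have hr : k * d ≤ q ^ m := by
      have ha : k * d ≤ (c - 1) * d := Nat.mul_le_mul_right d h2
      have hb : (c - 1) * d + 1 * d = c * d := by
        rw [← Nat.add_mul]; congr 1; omega
      have hcc : c * d = q ^ m + 1 := by rw [mul_comm]; exact hcd
      omega
    have hke : k * e = (k * d) * (q ^ m - 1) := by rw [hed]; ring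
    rw [hke, dsum_mul_pred hq (Nat.mul_pos h1 hd0) hr]
  have hmem : m * (q - 1) ∈ {t | 0 < t ∧ ∃ f : Fin t → ℕ, e ∣ ∑ i, q ^ f i} := by
    constructor
    · have : 0 < q - 1 := by omega
      positivity
    · have hse : (Nat.digits q e).sum = m * (q - 1) := by
        have h1 : e = d * (q ^ m - 1) := by rw [hed]; ring
        rw [h1, dsum_mul_pred hq hd0 hdQle]
      obtain ⟨f, hf⟩ := exists_rep_s7 hq e
      rw [← hse]
      exact ⟨f, by rw [hf]⟩
  refine ⟨fun k hk1 hk2 => ?_, ?_⟩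
  · rw [hcdef] at hk2
    rw [hhalf]
    exact hkey k hk1 hk2
  · rw [hhalf]
    apply le_antisymm
    · exact Nat.sInf_le hmem
    · apply le_csInf ⟨_, hmem⟩
      rintro t ⟨ht0, f, hfd⟩
      have hN0 : 0 < ∑ i, q ^ f i := by
        have hne' : (Finset.univ : Finset (Fin t)).Nonempty :=
          ⟨⟨0, ht0⟩, Finset.mem_univ _⟩
        exact Finset.sum_pos (fun i _ => pow_pos hq0 _) hne'
      have hSN : (Nat.digits q (∑ i, q ^ f i)).sum ≤ t := dsum_sum_powers_le hq t f
      obtain ⟨N', h1, h2, h3, h4⟩ := fold_down hq hn hdvd _ hN0 hfd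
      have hke : N' = e * (N' / e) := (Nat.mul_div_cancel' h3).symm
      set k := N' / e with hk
      have hk1 : 1 ≤ k := by
        rcases Nat.eq_zero_or_pos k with h | h
        · rw [h, mul_zero] at hke; omega
        · exact h
      have hkc : k ≤ c := by
        have hle : e * k ≤ e * c := by
          rw [← hke, hce]; omega
        exact Nat.le_of_mul_le_mul_left hle he
      rcases Nat.lt_or_ge k c with hlt | hge
      · have := hkey k hk1 (by omega)
        rw [mul_comm k e, ← hke] at this
        omega
      · have hkeq : k = c := by omega
        have hN'eq : N' = q ^ n - 1 := by rw [hke, hkeq, hce]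
        have hdig : (Nat.digits q N').sum = n * (q - 1) := by
          rw [hN'eq, dsum_pow_sub_one hq]
        have : m * (q - 1) ≤ n * (q - 1) := Nat.mul_le_mul_right _ (by omega)
        omega
end

section
/- Let e = 2^k with k ≥ 3 and let q be an odd positive integer. Then: (a) if q ≡ 1 (mod 4), then m(q,e) = gcd(e, q-1); (b) if q ≡ -1 (mod e), then m(q,e) = 2; (c) otherwise, m(q,e) = 4. -/
/-- Doubling lemma: powers of `1 + 2^a*u` with `u` odd. -/
lemma pow_two_pow_lem (a u : ℕ) (ha : 2 ≤ a) (hu : Odd u) :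
    ∀ j, ∃ v : ℕ, Odd v ∧ (1 + 2 ^ a * u) ^ (2 ^ j) = 1 + 2 ^ (a + j) * v := by
  intro j
  induction j with
  | zero => exact ⟨u, hu, by simp⟩
  | succ j ih =>
    obtain ⟨v, hv, hQ⟩ := ih
    obtain ⟨m, hm⟩ : ∃ m, a + j = m + 2 := ⟨a + j - 2, by omega⟩
    refine ⟨v + 2 ^ (m + 1) * v ^ 2, hv.add_even (Even.mul_right ⟨2 ^ m, by ring⟩ _), ?_⟩
    have h1 : (1 + 2 ^ a * u) ^ 2 ^ (j + 1) = ((1 + 2 ^ a * u) ^ 2 ^ j) ^ 2 := by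
      rw [← pow_mul, pow_succ]
    have h2 : a + (j + 1) = m + 3 := by omega
    rw [h1, hQ, hm, h2]
    ring

/-- Surjectivity lemma: powers of `1 + 2^a*u` hit every residue `≡ 1 mod 2^a`. -/
lemma pow_hits (a u : ℕ) (ha : 2 ≤ a) (hu : Odd u) (T : ℕ) (hT1 : 1 ≤ T)
    (hTodd : Odd T) (hTd : 2 ^ a ∣ T - 1) :
    ∀ m, a ≤ m → ∃ M, (1 + 2 ^ a * u) ^ M ≡ T [MOD 2 ^ m] := by
  intro m hm
  induction m, hm using Nat.le_induction with
  | base => exact ⟨0, by rw [pow_zero]; exact ((Nat.modEq_iff_dvd' hT1).mpr hTd)⟩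
  | succ m hm ih =>
    obtain ⟨M, hM⟩ := ih
    set Q : ℕ := 1 + 2 ^ a * u with hQdef
    have hQodd : Odd Q := by
      refine Even.one_add (Even.mul_right ?_ _)
      exact (Nat.even_pow.mpr ⟨even_two, by omega⟩)
    have hdvd : ((2 : ℤ)) ^ m ∣ (T : ℤ) - (Q : ℤ) ^ M := by
      have := hM.dvd
      push_cast at this ⊢
      exact this
    obtain ⟨c, hc⟩ := hdvd
    rcases Int.even_or_odd c with hce | hco
    · refine ⟨M, Nat.modEq_iff_dvd.mpr ?_⟩
      obtain ⟨d, hd⟩ := hce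
      push_cast
      exact ⟨d, by rw [hc, hd]; ring⟩
    · obtain ⟨v, hv, hpow⟩ := pow_two_pow_lem a u ha hu (m - a)
      have hma : a + (m - a) = m := by omega
      rw [hma] at hpow
      refine ⟨M + 2 ^ (m - a), Nat.modEq_iff_dvd.mpr ?_⟩
      have hQint : (Q : ℤ) ^ (M + 2 ^ (m - a)) = (Q : ℤ) ^ M * (1 + 2 ^ m * v) := by
        rw [pow_add]
        congr 1
        exact_mod_cast congrArg (Nat.cast : ℕ → ℤ) hpow
      have hvZ : Odd (v : ℤ) := Int.odd_coe_nat v |>.mpr hv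
      have hQZ : Odd ((Q : ℤ) ^ M) := (Int.odd_coe_nat Q |>.mpr hQodd).pow
      have h2 : Even (c - (Q : ℤ) ^ M * v) := hco.sub_odd (hQZ.mul hvZ)
      obtain ⟨d, hd⟩ := h2
      push_cast
      rw [hQint]
      refine ⟨d, ?_⟩
      linear_combination hc + (2:ℤ) ^ m * hd

lemma exists_f (q M c : ℕ) : ∃ f : Fin (c + 1) → ℕ, ∑ i, q ^ f i = q ^ M + c := by
  refine ⟨Fin.cons M (fun _ => 0), ?_⟩
  rw [Fin.sum_univ_succ]
  simp

lemma dvd_of_modEq {x y n : ℕ} (h : x ≡ y [MOD n]) (hy : n ∣ y) : n ∣ x :=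
  (Nat.modEq_zero_iff_dvd).mp (h.trans ((Nat.modEq_zero_iff_dvd).mpr hy))

lemma lb_dvd {n q t : ℕ} (hn : n ≠ 0) (hq : 1 ≤ q) (hdvd : n ∣ q - 1) (f : Fin t → ℕ)
    (h : n ∣ ∑ i, q ^ f i) : n ∣ t := by
  haveI : NeZero n := ⟨hn⟩
  have h1 : (q : ZMod n) = 1 := by
    have h2 : ((q - 1 : ℕ) : ZMod n) = 0 := (ZMod.natCast_eq_zero_iff _ _).mpr hdvd
    have h3 : q - 1 + 1 = q := by omega
    calc (q : ZMod n) = ((q - 1 + 1 : ℕ) : ZMod n) := by rw [h3]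
      _ = ((q - 1 : ℕ) : ZMod n) + 1 := by push_cast; ring
      _ = 1 := by rw [h2, zero_add]
  have h4 : ((∑ i, q ^ f i : ℕ) : ZMod n) = 0 := (ZMod.natCast_eq_zero_iff _ _).mpr h
  rw [Nat.cast_sum] at h4
  simp only [Nat.cast_pow, h1, one_pow, Finset.sum_const, Finset.card_univ,
    Fintype.card_fin, nsmul_eq_mul, mul_one] at h4
  exact (ZMod.natCast_eq_zero_iff _ _).mp h4

lemma mqe_eq (q e n : ℕ) (hn : 0 < n) (hf : ∃ f : Fin n → ℕ, e ∣ ∑ i, q ^ f i)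
    (hmin : ∀ t, 0 < t → (∃ f : Fin t → ℕ, e ∣ ∑ i, q ^ f i) → n ≤ t) : mqe q e = n := by
  unfold mqe
  apply le_antisymm
  · exact Nat.sInf_le ⟨hn, hf⟩
  · exact le_csInf ⟨n, hn, hf⟩ (fun t ht => hmin t ht.1 ht.2)

theorem stmt_8 (q k : ℕ) (hk : 3 ≤ k) (hq : 0 < q) (hodd : Odd q) :
    (q % 4 = 1 → mqe q (2 ^ k) = Nat.gcd (2 ^ k) (q - 1)) ∧
    ((2 ^ k : ℕ) ∣ q + 1 → mqe q (2 ^ k) = 2) ∧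
    (q % 4 ≠ 1 → ¬ ((2 ^ k : ℕ) ∣ q + 1) → mqe q (2 ^ k) = 4) := by
  have hek : (2 : ℕ) ^ k ≠ 0 := (Nat.two_pow_pos k).ne'
  have h2dvd : (2 : ℕ) ∣ 2 ^ k := dvd_pow_self 2 (by omega)
  have hq2 : (2 : ℕ) ∣ q - 1 := by obtain ⟨r, hr⟩ := hodd; exact ⟨r, by omega⟩
  refine ⟨?_, ?_, ?_⟩
  · -- part (a)
    intro hq1
    set d := Nat.gcd (2 ^ k) (q - 1) with hd
    have hd2k : d ∣ 2 ^ k := Nat.gcd_dvd_left _ _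
    have hdq1 : d ∣ q - 1 := Nat.gcd_dvd_right _ _
    have hdpos : 0 < d := Nat.gcd_pos_of_pos_left _ (Nat.two_pow_pos k)
    apply mqe_eq q (2 ^ k) d hdpos
    · -- membership
      by_cases hcase : 2 ^ k ∣ q - 1
      · have hdk : d = 2 ^ k := Nat.gcd_eq_left hcase
        have hkpos := Nat.two_pow_pos k
        obtain ⟨c, hc⟩ : ∃ c, d = c + 1 := ⟨d - 1, by omega⟩
        rw [hc]
        obtain ⟨f, hf⟩ := exists_f q 0 c
        refine ⟨f, ?_⟩
        rw [hf, pow_zero, show 1 + c = 2 ^ k by omega]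
      · have hq1' : 1 < q := by
          rcases Nat.lt_or_ge q 2 with h | h
          · have : q = 1 := by omega
            rw [this] at hcase
            simp at hcase
          · omega
        obtain ⟨a, u, hu, hau⟩ := Nat.exists_eq_pow_mul_and_not_dvd (n := q - 1) (by omega) 2 (by norm_num)
        have hu' : Odd u := Nat.odd_iff.mpr (by omega)
        have ha2 : 2 ≤ a := by
          rcases a with _ | a
          · rw [pow_zero, one_mul] at hau; omega
          · rcases a with _ | a
            · rw [pow_one] at hau; omega
            · omega
        have hak : a < k := by
          by_contra h
          exact hcase (hau ▸ Dvd.dvd.mul_right (pow_dvd_pow 2 (by omega)) u)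
        have hda : d = 2 ^ a := by
          have h1 : (2 : ℕ) ^ k = 2 ^ a * 2 ^ (k - a) := by rw [← pow_add]; congr 1; omega
          rw [hd, hau, h1, Nat.gcd_mul_left,
            Nat.Coprime.pow_left _ ((Nat.prime_two.coprime_iff_not_dvd).mpr hu), mul_one]
        obtain ⟨P, hP⟩ : ∃ P, 2 ^ (k - a) = P + 1 := ⟨2 ^ (k - a) - 1,
          by have := Nat.two_pow_pos (k - a); omega⟩
        have hapos := Nat.two_pow_pos a
        set T := 2 ^ a * P + 1 with hT
        have hTOdd : Odd T := Even.add_one (Even.mul_right (Nat.even_pow.mpr ⟨even_two, by omega⟩) P)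
        have hq_eq : q = 1 + 2 ^ a * u := by omega
        obtain ⟨M, hM⟩ := pow_hits a u ha2 hu' T (by omega) hTOdd ⟨P, by omega⟩ k (by omega)
        rw [← hq_eq] at hM
        obtain ⟨c, hc⟩ : ∃ c, d = c + 1 := ⟨d - 1, by omega⟩
        rw [hc]
        obtain ⟨f, hf⟩ := exists_f q M c
        refine ⟨f, ?_⟩
        rw [hf]
        apply dvd_of_modEq (hM.add_right c)
        have h1 : 2 ^ a * (P + 1) = 2 ^ k := by rw [← hP, ← pow_add]; congr 1; omega
        have h2 : 2 ^ a * (P + 1) = 2 ^ a * P + 2 ^ a := by ring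
        exact ⟨1, by omega⟩
    · -- minimality
      intro t ht ⟨f, hf⟩
      exact Nat.le_of_dvd ht (lb_dvd hdpos.ne' hq hdq1 f (dvd_trans hd2k hf))
  · -- part (b)
    intro hdvd
    apply mqe_eq q (2 ^ k) 2 (by norm_num)
    · obtain ⟨f, hf⟩ := exists_f q 1 1
      exact ⟨f, by rw [hf, pow_one]; exact hdvd⟩
    · intro t ht ⟨f, hf⟩
      have := lb_dvd (n := 2) (by norm_num) hq hq2 f (dvd_trans h2dvd hf)
      omega
  · -- part (c)
    intro hq3 hndvd
    have hqm : q % 2 = 1 := Nat.odd_iff.mp hodd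
    have hq4 : q % 4 = 3 := by omega
    obtain ⟨b, w, hw, hbw⟩ := Nat.exists_eq_pow_mul_and_not_dvd (n := q + 1) (by omega) 2 (by norm_num)
    have hb2 : 2 ≤ b := by
      rcases b with _ | b
      · rw [pow_zero, one_mul] at hbw; omega
      · rcases b with _ | b
        · rw [pow_one] at hbw; omega
        · omega
    have hbk : b < k := by
      by_contra h
      exact hndvd (hbw ▸ Dvd.dvd.mul_right (pow_dvd_pow 2 (by omega)) w)
    obtain ⟨s, hs1, hs2⟩ : ∃ s, q = 2 * s + 1 ∧ s % 2 = 1 := ⟨q / 2, by omega⟩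
    have hsw : Odd (s * w) := (Nat.odd_iff.mpr hs2).mul (Nat.odd_iff.mpr (by omega))
    have hQ : q ^ 2 = 1 + 2 ^ (b + 1) * (s * w) := by
      calc q ^ 2 = 2 * s * (q + 1) + 1 := by rw [hs1]; ring
        _ = 2 * s * (2 ^ b * w) + 1 := by rw [hbw]
        _ = 1 + 2 ^ (b + 1) * (s * w) := by ring
    obtain ⟨P, hP⟩ : ∃ P, 2 ^ k = P + 1 := ⟨2 ^ k - 1, by have := Nat.two_pow_pos k; omega⟩
    set T := 2 * (q + 1) * P + 1 with hT
    have hTodd : Odd T := Even.add_one ⟨(q + 1) * P, by ring⟩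
    have hTd : 2 ^ (b + 1) ∣ T - 1 :=
      ⟨w * P, by have h1 : T - 1 = 2 * (q + 1) * P := by omega
                 rw [h1, hbw]; ring⟩
    obtain ⟨M, hM⟩ := pow_hits (b + 1) (s * w) (by omega) hsw T (by omega) hTodd hTd k (by omega)
    rw [← hQ, ← pow_mul] at hM
    apply mqe_eq q (2 ^ k) 4 (by norm_num)
    · refine ⟨![2 * M, 1, 1, 0], ?_⟩
      have hsum : ∑ i, q ^ (![2 * M, 1, 1, 0] i) = q ^ (2 * M) + (q + q + 1) := by
        simp [Fin.sum_univ_four]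
        ring
      rw [hsum]
      apply dvd_of_modEq (hM.add_right (q + q + 1))
      exact ⟨2 * (q + 1), by rw [hT, hP]; ring⟩
    · intro t ht ⟨f, hf⟩
      have h2t : 2 ∣ t := lb_dvd (by norm_num) hq hq2 f (dvd_trans h2dvd hf)
      have hne2 : t ≠ 2 := by
        rintro rfl
        have hsum2 : (2 : ℕ) ^ (b + 1) ∣ q ^ f 0 + q ^ f 1 := by
          have h1 : ∑ i, q ^ f i = q ^ f 0 + q ^ f 1 := Fin.sum_univ_two _
          exact dvd_trans (pow_dvd_pow 2 (by omega)) (h1 ▸ hf)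
        have hqsq : q ^ 2 ≡ 1 [MOD 2 ^ (b + 1)] :=
          ((Nat.modEq_iff_dvd' (Nat.one_le_pow _ _ hq)).mpr ⟨s * w, by omega⟩).symm
        have key : ∀ i : ℕ, q ^ i ≡ q ^ (i % 2) [MOD 2 ^ (b + 1)] := by
          intro i
          conv_lhs => rw [show i = 2 * (i / 2) + i % 2 by omega, pow_add, pow_mul]
          have h1 : (q ^ 2) ^ (i / 2) * q ^ (i % 2) ≡ 1 ^ (i / 2) * q ^ (i % 2)
              [MOD 2 ^ (b + 1)] := Nat.ModEq.mul_right _ (hqsq.pow _)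
          simpa using h1
        have hsum3 : (2 : ℕ) ^ (b + 1) ∣ q ^ (f 0 % 2) + q ^ (f 1 % 2) :=
          dvd_of_modEq ((key (f 0)).add (key (f 1))).symm hsum2
        have h8 : (8 : ℕ) ≤ 2 ^ (b + 1) := by
          calc (8 : ℕ) = 2 ^ 3 := by norm_num
            _ ≤ 2 ^ (b + 1) := Nat.pow_le_pow_right (by norm_num) (by omega)
        have hx : ¬ (2 : ℕ) ^ (b + 1) ∣ q + 1 := by
          intro h
          rw [hbw, pow_succ] at h
          have := (Nat.mul_dvd_mul_iff_left (Nat.two_pow_pos b)).mp h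
          omega
        have hy : ¬ (2 : ℕ) ^ (b + 1) ∣ q + q := by
          intro h
          rw [show (2 : ℕ) ^ (b + 1) = 2 * 2 ^ b by ring, show q + q = 2 * q by ring] at h
          have h1 := (Nat.mul_dvd_mul_iff_left (by norm_num : (0 : ℕ) < 2)).mp h
          have h2 : (2 : ℕ) ∣ q := dvd_trans (dvd_pow_self 2 (by omega : b ≠ 0)) h1
          omega
        rcases Nat.mod_two_eq_zero_or_one (f 0) with h0 | h0 <;>
          rcases Nat.mod_two_eq_zero_or_one (f 1) with h1 | h1 <;>
          rw [h0, h1] at hsum3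
        · rw [pow_zero] at hsum3
          have := Nat.le_of_dvd (by norm_num) hsum3
          omega
        · exact hx (by rwa [pow_zero, pow_one, Nat.add_comm 1 q] at hsum3)
        · exact hx (by rwa [pow_zero, pow_one] at hsum3)
        · exact hy (by rwa [pow_one] at hsum3)
      omega
end

section
/- Let p be an odd prime, k a positive integer, e = p^k, and let q be a positive integer with q ≡ 1 (mod p). Then m(q,e) = gcd(e, q - 1). -/
lemma binom2 (y : ℕ) : ∀ j : ℕ, ∃ s, (1 + y) ^ j = 1 + j * y + y ^ 2 * s := by
  intro j
  induction j with
  | zero => exact ⟨0, by ring⟩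
  | succ j ih =>
    obtain ⟨s, hs⟩ := ih
    exact ⟨s + j + y * s, by rw [pow_succ, hs]; ring⟩

lemma not_dvd_of_dvd_sub_one {p q : ℕ} (hp : p.Prime) (hq : 0 < q) (hdvd : p ∣ q - 1) :
    ¬ p ∣ q := by
  intro h
  have h1 : q - (q - 1) = 1 := by omega
  have := Nat.dvd_sub h hdvd
  rw [h1] at this
  exact hp.one_lt.ne' (Nat.dvd_one.mp this)

lemma pow_p_pow (p q v : ℕ) (hp : p.Prime) (hodd : Odd p) (hq1 : 1 < q)
    (hdvd : p ∣ q - 1) (hv : padicValNat p (q - 1) = v) (m : ℕ) :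
    ∃ w, ¬ p ∣ w ∧ q ^ (p ^ m) = 1 + p ^ (v + m) * w := by
  haveI : Fact p.Prime := ⟨hp⟩
  have hpq : ¬ p ∣ q := not_dvd_of_dvd_sub_one hp (by omega) hdvd
  have hval : padicValNat p (q ^ p ^ m - 1) = v + m := by
    have h := padicValNat.pow_sub_pow (p := p) hodd (x := q) (y := 1) hq1
      (by simpa using hdvd) hpq (n := p ^ m) (pow_ne_zero m hp.pos.ne')
    simpa [hv, padicValNat.prime_pow] using h
  have hQ1 : 1 < q ^ p ^ m := Nat.one_lt_pow (pow_ne_zero m hp.pos.ne') hq1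
  have hD0 : q ^ p ^ m - 1 ≠ 0 := by omega
  have hDdvd : p ^ (v + m) ∣ q ^ p ^ m - 1 := hval ▸ pow_padicValNat_dvd
  have hnot : ¬ p ^ (v + m + 1) ∣ q ^ p ^ m - 1 := by
    rw [Nat.Prime.pow_dvd_iff_le_factorization hp hD0, Nat.factorization_def _ hp, hval]
    omega
  obtain ⟨w, hw⟩ := hDdvd
  refine ⟨w, ?_, by omega⟩
  intro ⟨c, hc⟩
  exact hnot ⟨c, by rw [hw, hc]; ring⟩

lemma key_construct (p q v : ℕ) (hp : p.Prime) (hodd : Odd p) (hq1 : 1 < q)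
    (hvpos : 0 < v) (hdvd : p ∣ q - 1) (hv : padicValNat p (q - 1) = v) :
    ∀ n, v ≤ n → ∃ f : Fin (p ^ v) → ℕ, p ^ n ∣ ∑ i, q ^ f i := by
  haveI : Fact p.Prime := ⟨hp⟩
  have hpq : ¬ p ∣ q := not_dvd_of_dvd_sub_one hp (by omega) hdvd
  intro n hn
  induction n, hn using Nat.le_induction with
  | base =>
    refine ⟨fun _ => 0, ?_⟩
    simp
  | succ n hn ih =>
    obtain ⟨f, M, hM⟩ := ih
    obtain ⟨w, hw, hqc⟩ := pow_p_pow p q v hp hodd hq1 hdvd hv (n - v)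
    have hvnv : v + (n - v) = n := by omega
    rw [hvnv] at hqc
    have hi0 : 0 < p ^ v := pow_pos hp.pos v
    set i0 : Fin (p ^ v) := ⟨0, hi0⟩ with hi0def
    have hpr : ¬ p ∣ w * q ^ f i0 := by
      intro h
      rcases hp.dvd_mul.mp h with h' | h'
      · exact hw h'
      · exact hpq (hp.dvd_of_dvd_pow h')
    set j : ℕ := ((-(M : ZMod p)) * ((w * q ^ f i0 : ℕ) : ZMod p)⁻¹).val with hj
    have hjr : p ∣ M + j * (w * q ^ f i0) := by
      have hr0 : ((w * q ^ f i0 : ℕ) : ZMod p) ≠ 0 := by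
        rw [Ne, ZMod.natCast_eq_zero_iff]; exact hpr
      rw [← ZMod.natCast_eq_zero_iff]
      push_cast
      rw [hj, ZMod.natCast_val, ZMod.cast_id]
      rw [mul_assoc, neg_mul]
      rw [show ((w : ZMod p) * (q : ZMod p) ^ f i0) = ((w * q ^ f i0 : ℕ) : ZMod p) from by
        push_cast; ring, inv_mul_cancel₀ hr0]
      ring
    set c : ℕ := p ^ (n - v) with hc
    set f' : Fin (p ^ v) → ℕ := Function.update f i0 (f i0 + j * c) with hf'
    set A : ℕ := ∑ i ∈ Finset.univ.erase i0, q ^ f i with hA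
    have hA1 : q ^ f i0 + A = p ^ n * M := by
      rw [← hM, hA]
      exact Finset.add_sum_erase _ (fun i => q ^ f i) (Finset.mem_univ i0)
    have hA2 : ∑ i, q ^ f' i = q ^ (f i0 + j * c) + A := by
      have h1 : ∑ i, q ^ f' i = q ^ f' i0 + ∑ i ∈ Finset.univ.erase i0, q ^ f' i :=
        (Finset.add_sum_erase _ (fun i => q ^ f' i) (Finset.mem_univ i0)).symm
      have h2 : ∀ x ∈ Finset.univ.erase i0, q ^ f' x = q ^ f x :=
        fun x hx => by rw [hf', Function.update_of_ne (Finset.ne_of_mem_erase hx)]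
      rw [h1, Finset.sum_congr rfl h2, hf', Function.update_self, hA]
    obtain ⟨s, hs⟩ := binom2 (p ^ n * w) j
    have hpow : q ^ (f i0 + j * c) =
        q ^ f i0 * (1 + j * (p ^ n * w) + (p ^ n * w) ^ 2 * s) := by
      rw [pow_add, mul_comm j c, pow_mul, hqc, hs]
    have hkey : ∑ i, q ^ f' i =
        p ^ n * (M + j * (w * q ^ f i0)) + p ^ (2 * n) * (w ^ 2 * s * q ^ f i0) := by
      rw [hA2, hpow]
      have expand : q ^ f i0 * (1 + j * (p ^ n * w) + (p ^ n * w) ^ 2 * s) + A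
          = (q ^ f i0 + A) + p ^ n * (j * (w * q ^ f i0))
            + p ^ (2 * n) * (w ^ 2 * s * q ^ f i0) := by ring
      rw [expand, hA1]; ring
    refine ⟨f', ?_⟩
    rw [hkey]
    obtain ⟨d, hd⟩ := hjr
    refine dvd_add ⟨d, ?_⟩ (dvd_mul_of_dvd_left (pow_dvd_pow p (by omega)) _)
    rw [hd]; ring

theorem stmt_9 (p k q : ℕ) (hp : p.Prime) (hodd : Odd p) (hk : 0 < k)
    (hq : 0 < q) (hcong : q ≡ 1 [MOD p]) :
    mqe q (p ^ k) = Nat.gcd (p ^ k) (q - 1) := by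
  set S := {t | 0 < t ∧ ∃ f : Fin t → ℕ, p ^ k ∣ ∑ i, q ^ f i} with hS
  set g := Nat.gcd (p ^ k) (q - 1) with hg
  have hgpos : 0 < g := Nat.gcd_pos_of_pos_left _ (pow_pos hp.pos k)
  -- membership
  have hmem : g ∈ S := by
    by_cases hdvd : p ^ k ∣ q - 1
    · have hgk : g = p ^ k := Nat.gcd_eq_left hdvd
      rw [hS, hgk]
      refine ⟨pow_pos hp.pos k, fun _ => 0, ?_⟩
      simp
    · have hq1 : 1 < q := by
        rcases Nat.lt_or_ge q 2 with h | h
        · have hq1' : q = 1 := by omega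
          subst hq1'
          simp at hdvd
        · omega
      have hq10 : q - 1 ≠ 0 := by omega
      have hpd : p ∣ q - 1 := (Nat.modEq_iff_dvd' (by omega)).mp hcong.symm
      set v := padicValNat p (q - 1) with hv
      have hfac : (q - 1).factorization p = v := Nat.factorization_def _ hp
      have hvpos : 0 < v := by
        have : 1 ≤ (q - 1).factorization p :=
          (Nat.Prime.pow_dvd_iff_le_factorization hp hq10).mp (by simpa using hpd)
        omega
      have hpvd : p ^ v ∣ q - 1 := pow_padicValNat_dvd
      have hvk : v < k := by
        by_contra h
        exact hdvd ((pow_dvd_pow p (by omega)).trans hpvd)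
      have hgv : g = p ^ v := by
        refine Nat.dvd_antisymm ?_ (Nat.dvd_gcd (pow_dvd_pow p hvk.le) hpvd)
        obtain ⟨i, hik, hgi⟩ := (Nat.dvd_prime_pow hp).mp (Nat.gcd_dvd_left (p ^ k) (q - 1))
        have hiv : i ≤ v := by
          have : i ≤ (q - 1).factorization p :=
            (Nat.Prime.pow_dvd_iff_le_factorization hp hq10).mp
              (hgi ▸ Nat.gcd_dvd_right (p ^ k) (q - 1))
          omega
        calc g = p ^ i := hgi
          _ ∣ p ^ v := pow_dvd_pow p hiv
      obtain ⟨f, hf⟩ := key_construct p q v hp hodd hq1 hvpos hpd rfl k hvk.le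
      rw [hS, hgv]
      exact ⟨pow_pos hp.pos v, f, hf⟩
  -- lower bound
  have hlb : ∀ t ∈ S, g ≤ t := by
    rintro t ⟨ht, f, hdvd⟩
    have hgq : ((q : ℕ) : ZMod g) = 1 := by
      have hq' : q = 1 + (q - 1) := by omega
      rw [hq']
      push_cast
      rw [(ZMod.natCast_eq_zero_iff _ _).mpr (Nat.gcd_dvd_right (p ^ k) (q - 1))]
      ring
    have hsum0 : ((∑ i, q ^ f i : ℕ) : ZMod g) = 0 := by
      rw [(ZMod.natCast_eq_zero_iff _ _).mpr
        ((Nat.gcd_dvd_left (p ^ k) (q - 1)).trans hdvd)]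
    have hsumt : ((∑ i, q ^ f i : ℕ) : ZMod g) = (t : ZMod g) := by
      push_cast
      simp [hgq]
    have : (t : ZMod g) = 0 := by rw [← hsumt, hsum0]
    have hgt : g ∣ t := (ZMod.natCast_eq_zero_iff _ _).mp this
    exact Nat.le_of_dvd ht hgt
  rw [mqe]
  exact le_antisymm (Nat.sInf_le hmem) (le_csInf ⟨g, hmem⟩ hlb)
end

section
/- Let q, e be positive integers with q > 1 and e dividing q^2 - 1, and set e_1 = gcd(e, q-1), e_2 = gcd(e, q+1). If e_1 ≥ e_2, or if both e and (q^2 - 1)/e are even, then m(q,e) = e_1; otherwise m(q,e) = 2*e_1. -/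
/-- If `c ∣ A * B` then `c / gcd c A ∣ B`. -/
lemma aux_div_key {c A B : ℕ} (hc : 0 < c) (h : c ∣ A * B) :
    c / Nat.gcd c A ∣ B := by
  set g := Nat.gcd c A with hg
  have hgpos : 0 < g := Nat.gcd_pos_of_pos_left A hc
  have hgc : g ∣ c := Nat.gcd_dvd_left c A
  have hgA : g ∣ A := Nat.gcd_dvd_right c A
  have hcop : Nat.Coprime (c / g) (A / g) := Nat.coprime_div_gcd_div_gcd hgpos
  have h1 : g * (c / g) ∣ g * ((A / g) * B) := by
    rw [Nat.mul_div_cancel' hgc, ← mul_assoc, Nat.mul_div_cancel' hgA]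
    exact h
  have h2 : c / g ∣ (A / g) * B := (mul_dvd_mul_iff_left hgpos.ne').mp h1
  exact hcop.dvd_of_dvd_mul_left h2

/-- membership characterization of the defining set via counts of even/odd exponents -/
lemma mqe_set_eq (q e : ℕ) (hq : 1 < q) (he : 0 < e) (hdvd : e ∣ q ^ 2 - 1) :
    {t | 0 < t ∧ ∃ f : Fin t → ℕ, e ∣ ∑ i, q ^ f i}
      = {t | 0 < t ∧ ∃ a b : ℕ, a + b = t ∧ e ∣ a + b * q} := by
  haveI : NeZero e := ⟨he.ne'⟩
  have hq2 : ((q : ZMod e)) ^ 2 = 1 := by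
    have h1 : (1 : ℕ) ≤ q ^ 2 := Nat.one_le_pow _ _ (by omega)
    have h0 : ((q ^ 2 - 1 : ℕ) : ZMod e) = 0 :=
      (ZMod.natCast_eq_zero_iff _ _).mpr hdvd
    rw [Nat.cast_sub h1] at h0
    push_cast at h0
    linear_combination h0
  ext t
  simp only [Set.mem_setOf_eq]
  constructor
  · rintro ⟨ht, f, hf⟩
    refine ⟨ht, ?_⟩
    classical
    set a := (Finset.univ.filter (fun i : Fin t => Even (f i))).card with ha
    set b := (Finset.univ.filter (fun i : Fin t => ¬ Even (f i))).card with hb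
    refine ⟨a, b, ?_, ?_⟩
    · rw [ha, hb, Finset.card_filter_add_card_filter_not, Finset.card_univ,
        Fintype.card_fin]
    · have hsum : ((∑ i, q ^ f i : ℕ) : ZMod e) = 0 :=
        (ZMod.natCast_eq_zero_iff _ _).mpr hf
      push_cast at hsum
      have hsplit : (∑ i, (q : ZMod e) ^ f i)
          = ∑ i ∈ Finset.univ.filter (fun i : Fin t => Even (f i)), (q : ZMod e) ^ f i
            + ∑ i ∈ Finset.univ.filter (fun i : Fin t => ¬ Even (f i)), (q : ZMod e) ^ f i :=
        (Finset.sum_filter_add_sum_filter_not _ _ _).symm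
      have heven : ∑ i ∈ Finset.univ.filter (fun i : Fin t => Even (f i)),
          (q : ZMod e) ^ f i = (a : ZMod e) := by
        have hpt : ∀ i ∈ Finset.univ.filter (fun i : Fin t => Even (f i)),
            (q : ZMod e) ^ f i = 1 := by
          intro i hi
          simp only [Finset.mem_filter] at hi
          obtain ⟨k, hk⟩ := hi.2
          rw [hk, ← two_mul, pow_mul, hq2, one_pow]
        rw [Finset.sum_congr rfl hpt, Finset.sum_const, nsmul_eq_mul, mul_one]
      have hodd : ∑ i ∈ Finset.univ.filter (fun i : Fin t => ¬ Even (f i)),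
          (q : ZMod e) ^ f i = (b : ZMod e) * q := by
        have hpt : ∀ i ∈ Finset.univ.filter (fun i : Fin t => ¬ Even (f i)),
            (q : ZMod e) ^ f i = (q : ZMod e) := by
          intro i hi
          simp only [Finset.mem_filter] at hi
          obtain ⟨k, hk⟩ := Nat.odd_iff.mpr (Nat.not_even_iff.mp hi.2)
          rw [hk, pow_add, pow_mul, hq2, one_pow, pow_one, one_mul]
        rw [Finset.sum_congr rfl hpt, Finset.sum_const, nsmul_eq_mul]
      rw [hsplit, heven, hodd] at hsum
      have : ((a + b * q : ℕ) : ZMod e) = 0 := by push_cast; exact hsum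
      exact (ZMod.natCast_eq_zero_iff _ _).mp this
  · rintro ⟨ht, a, b, hab, hd⟩
    refine ⟨ht, ?_⟩
    subst hab
    refine ⟨fun i => if (i : ℕ) < a then 0 else 1, ?_⟩
    have : ∑ i : Fin (a + b), q ^ (if (i : ℕ) < a then 0 else 1) = a + b * q := by
      rw [Fin.sum_univ_add]
      have h1 : ∀ i : Fin a, q ^ (if ((Fin.castAdd b i : Fin (a + b)) : ℕ) < a then 0 else 1)
          = 1 := by
        intro i
        simp [Fin.castAdd, i.isLt]
      have h2 : ∀ i : Fin b, q ^ (if ((Fin.natAdd a i : Fin (a + b)) : ℕ) < a then 0 else 1)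
          = q := by
        intro i
        simp [Fin.natAdd]
      rw [Finset.sum_congr rfl (fun i _ => h1 i), Finset.sum_congr rfl (fun i _ => h2 i)]
      simp [mul_comm]
    rw [this]
    exact hd

theorem stmt_10 (q e : ℕ) (hq : 1 < q) (he : 0 < e) (hdvd : e ∣ q ^ 2 - 1) :
    ((Nat.gcd e (q - 1) ≥ Nat.gcd e (q + 1) ∨ (2 ∣ e ∧ 2 ∣ (q ^ 2 - 1) / e)) →
      mqe q e = Nat.gcd e (q - 1)) ∧
    (¬ (Nat.gcd e (q - 1) ≥ Nat.gcd e (q + 1) ∨ (2 ∣ e ∧ 2 ∣ (q ^ 2 - 1) / e)) →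
      mqe q e = 2 * Nat.gcd e (q - 1)) := by
  set e1 := Nat.gcd e (q - 1) with he1def
  set e2 := Nat.gcd e (q + 1) with he2def
  have hfac : (q - 1) * (q + 1) = q ^ 2 - 1 := by
    have := Nat.sq_sub_sq q 1
    simpa [mul_comm] using this.symm
  have he1pos : 0 < e1 := Nat.gcd_pos_of_pos_left _ he
  have he2pos : 0 < e2 := Nat.gcd_pos_of_pos_left _ he
  have he1e : e1 ∣ e := Nat.gcd_dvd_left _ _
  have he1q : e1 ∣ q - 1 := Nat.gcd_dvd_right _ _
  have he2e : e2 ∣ e := Nat.gcd_dvd_left _ _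
  have he2q : e2 ∣ q + 1 := Nat.gcd_dvd_right _ _
  have hdvd' : e ∣ (q - 1) * (q + 1) := hfac ▸ hdvd
  -- e / e2 divides e1, hence e ∣ e1 * (q+1)
  have hkey2 : e / e2 ∣ e1 := by
    refine Nat.dvd_gcd (Nat.div_dvd_of_dvd he2e) ?_
    exact aux_div_key he (by rwa [mul_comm] at hdvd')
  have hEe1q1 : e ∣ e1 * (q + 1) := by
    calc e = e2 * (e / e2) := (Nat.mul_div_cancel' he2e).symm
    _ ∣ (q + 1) * e1 := mul_dvd_mul he2q hkey2
    _ = e1 * (q + 1) := mul_comm _ _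
  -- rewrite mqe as sInf of the (a,b) set
  have hset := mqe_set_eq q e hq he hdvd
  set S := {t | 0 < t ∧ ∃ a b : ℕ, a + b = t ∧ e ∣ a + b * q} with hS
  have hmqe : mqe q e = sInf S := by rw [mqe, hset]
  -- every element of S is a positive multiple of e1
  have hlow : ∀ t ∈ S, e1 ∣ t := by
    rintro t ⟨ht, a, b, hab, hd⟩
    have h1 : e1 ∣ a + b * q := dvd_trans he1e hd
    have harith : a + b * q = (a + b) + b * (q - 1) := by
      have : b * q = b * (q - 1) + b := by
        conv_lhs => rw [show q = (q - 1) + 1 from (Nat.succ_pred_eq_of_pos (by omega)).symm]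
        ring
      omega
    rw [harith] at h1
    have h2 : e1 ∣ b * (q - 1) := Dvd.dvd.mul_left he1q b
    have := Nat.dvd_sub h1 h2
    simpa [hab] using this
  -- 2*e1 is always in S
  have hmem2 : 2 * e1 ∈ S := by
    refine ⟨by omega, e1, e1, by ring, ?_⟩
    have : e1 + e1 * q = e1 * (q + 1) := by ring
    rw [this]
    exact hEe1q1
  constructor
  · rintro hcase
    have hmem1 : e1 ∈ S := by
      rcases hcase with hge | ⟨he2', hk2⟩
      · -- e1 ≥ e2 : solve e ∣ e1 + b*(q-1) with b < e/e1 ≤ e2 ≤ e1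
        set M := e / e1 with hM
        have hMe : M ∣ e2 := by
          refine Nat.dvd_gcd (Nat.div_dvd_of_dvd he1e) ?_
          exact aux_div_key he hdvd'
        have hMle : M ≤ e1 := le_trans (Nat.le_of_dvd he2pos hMe) hge
        set r := (q - 1) / e1 with hr
        have hre1 : e1 * r = q - 1 := Nat.mul_div_cancel' he1q
        have heM : e1 * M = e := Nat.mul_div_cancel' he1e
        -- find b0 < M (or b0 = 0 if M = 1) with M ∣ 1 + b0 * r
        obtain ⟨b0, hb0M, hb0d⟩ : ∃ b0, b0 < max M 1 ∧ M ∣ 1 + b0 * r := by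
          rcases eq_or_lt_of_le (Nat.one_le_iff_ne_zero.mpr (by
            intro h0
            rw [h0, Nat.mul_zero] at heM
            omega : M ≠ 0)) with h1 | h1
          · exact ⟨0, by omega, by rw [← h1]; exact one_dvd _⟩
          · haveI : NeZero M := ⟨by omega⟩
            have hcop : Nat.Coprime M r := Nat.coprime_div_gcd_div_gcd he1pos
            set u := ZMod.unitOfCoprime r hcop.symm with hu
            set x : ZMod M := -((u⁻¹ : (ZMod M)ˣ) : ZMod M) with hx
            refine ⟨x.val, by have := ZMod.val_lt x; omega, ?_⟩
            have hxr : ((1 + x.val * r : ℕ) : ZMod M) = 0 := by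
              push_cast
              rw [ZMod.natCast_val, ZMod.cast_id]
              have hru : ((r : ZMod M)) = (u : ZMod M) := rfl
              rw [hx, hru]
              have : -((u⁻¹ : (ZMod M)ˣ) : ZMod M) * (u : ZMod M) = -1 := by
                rw [neg_mul, ← Units.val_mul, inv_mul_cancel, Units.val_one]
              rw [this]; ring
            exact (ZMod.natCast_eq_zero_iff _ _).mp hxr
        have hb0le : b0 ≤ e1 := by omega
        refine ⟨he1pos, e1 - b0, b0, by omega, ?_⟩
        have harith : (e1 - b0) + b0 * q = e1 + b0 * (q - 1) := by
          have : b0 * q = b0 * (q - 1) + b0 := by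
            conv_lhs => rw [show q = (q - 1) + 1 from (Nat.succ_pred_eq_of_pos (by omega)).symm]
            ring
          omega
        rw [harith, ← hre1, show e1 + b0 * (e1 * r) = e1 * (1 + b0 * r) by ring, ← heM]
        exact mul_dvd_mul_left e1 hb0d
      · -- parity case : a = b = e1/2
        have hqodd : q % 2 = 1 := by
          rcases Nat.even_or_odd q with hev | hod
          · exfalso
            obtain ⟨m, hm⟩ := hev
            obtain ⟨j, hj⟩ := dvd_trans he2' hdvd
            have hq2' : q ^ 2 = 4 * (m * m) := by rw [hm]; ring
            have hx : 4 * (m * m) - 1 = 2 * j := by rw [← hq2']; exact hj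
            have hm1 : 1 ≤ m := by omega
            have hmm : 1 ≤ m * m := Nat.mul_le_mul hm1 hm1
            omega
          · exact Nat.odd_iff.mp hod
        set A := (q - 1) / 2 with hA
        set B := (q + 1) / 2 with hB
        have hA2 : 2 * A = q - 1 := by omega
        have hB2 : 2 * B = q + 1 := by omega
        set c := e / 2 with hc
        have hc2 : 2 * c = e := Nat.mul_div_cancel' he2'
        have hcpos : 0 < c := by omega
        -- c ∣ A * B
        obtain ⟨k, hk⟩ := hdvd
        obtain ⟨k', hk'⟩ : 2 ∣ k := by
          rwa [hk, Nat.mul_div_cancel_left _ he] at hk2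
        have hcAB : c ∣ A * B := by
          refine ⟨k', ?_⟩
          have h4 : 4 * (A * B) = 4 * (c * k') := by
            have : (q - 1) * (q + 1) = q ^ 2 - 1 := hfac
            calc 4 * (A * B) = (2 * A) * (2 * B) := by ring
            _ = q ^ 2 - 1 := by rw [hA2, hB2, hfac]
            _ = e * k := hk
            _ = (2 * c) * (2 * k') := by rw [hc2, hk']
            _ = 4 * (c * k') := by ring
          omega
        set a' := Nat.gcd c A with ha'
        have ha'pos : 0 < a' := Nat.gcd_pos_of_pos_left _ hcpos
        have ha'c : a' ∣ c := Nat.gcd_dvd_left _ _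
        have hb'B : c / a' ∣ B := aux_div_key hcpos hcAB
        have he1a : e1 = 2 * a' := by
          rw [he1def, ← hc2, ← hA2, Nat.gcd_mul_left]
        -- e ∣ (e1/2) * (q + 1)  i.e. e ∣ a' * (q+1)
        have hach : e ∣ a' + a' * q := by
          have : a' + a' * q = a' * (q + 1) := by ring
          rw [this, ← hc2, ← hB2]
          have : a' * (2 * B) = 2 * (a' * B) := by ring
          rw [this]
          refine mul_dvd_mul_left 2 ?_
          calc c = a' * (c / a') := (Nat.mul_div_cancel' ha'c).symm
          _ ∣ a' * B := mul_dvd_mul_left a' hb'B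
        exact ⟨he1pos, a', a', by omega, hach⟩
    -- conclude sInf S = e1
    rw [hmqe]
    refine le_antisymm (Nat.sInf_le hmem1) (le_csInf ⟨e1, hmem1⟩ ?_)
    intro t ht
    exact Nat.le_of_dvd ht.1 (hlow t ht)
  · rintro hcase
    push_neg at hcase
    obtain ⟨hlt, hpar⟩ := hcase
    have hlt : e1 < e2 := by omega
    -- e1 ∉ S
    have hnot : e1 ∉ S := by
      rintro ⟨-, a, b, hab, hd⟩
      -- e2 ∣ (a - b : ℤ), |a - b| ≤ e1 < e2 ⇒ a = b
      have hz : (e2 : ℤ) ∣ ((a : ℤ) - b) := by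
        have h1 : (e2 : ℤ) ∣ ((a : ℤ) + b * q) := by
          have : e2 ∣ a + b * q := dvd_trans he2e hd
          exact_mod_cast Int.natCast_dvd_natCast.mpr this
        have h2 : (e2 : ℤ) ∣ (b : ℤ) * (q + 1) := by
          have : (e2 : ℤ) ∣ ((q : ℤ) + 1) := by exact_mod_cast Int.natCast_dvd_natCast.mpr he2q
          exact Dvd.dvd.mul_left this b
        have : ((a : ℤ) - b) = ((a : ℤ) + b * q) - b * (q + 1) := by ring
        rw [this]
        exact dvd_sub h1 h2
      have hae : a = b := by
        have habs : ((a : ℤ) - b).natAbs < (e2 : ℤ).natAbs := by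
          simp only [Int.natAbs_natCast]
          omega
        have := Int.eq_zero_of_dvd_of_natAbs_lt_natAbs hz habs
        omega
      subst hae
      have he12a : e1 = 2 * a := by omega
      have hapos : 0 < a := by omega
      -- e ∣ a * (q + 1) ⇒ e / e2 ∣ a
      have hd' : e ∣ a * (q + 1) := by
        have : a + a * q = a * (q + 1) := by ring
        rwa [this] at hd
      have hm'a : e / e2 ∣ a := by
        set r := (q + 1) / e2 with hr
        have hre2 : e2 * r = q + 1 := Nat.mul_div_cancel' he2q
        have hcop : Nat.Coprime (e / e2) r := Nat.coprime_div_gcd_div_gcd he2pos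
        have h1 : e2 * (e / e2) ∣ e2 * (a * r) := by
          rw [Nat.mul_div_cancel' he2e]
          calc e ∣ a * (q + 1) := hd'
          _ = e2 * (a * r) := by rw [← hre2]; ring
        have h2 : e / e2 ∣ a * r := (mul_dvd_mul_iff_left he2pos.ne').mp h1
        exact hcop.dvd_of_dvd_mul_right h2
      -- then 2e ∣ e1 * (q+1) ∣ q^2 - 1 = e * k, so k is even; also e is even
      have h2e : 2 * e ∣ e1 * (q + 1) := by
        calc 2 * e = 2 * (e2 * (e / e2)) := by rw [Nat.mul_div_cancel' he2e]
        _ ∣ 2 * (e2 * a) := mul_dvd_mul_left 2 (mul_dvd_mul_left e2 hm'a)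
        _ = (2 * a) * e2 := by ring
        _ ∣ (2 * a) * (q + 1) := mul_dvd_mul_left _ he2q
        _ = e1 * (q + 1) := by rw [he12a]
      have heven : 2 ∣ e := by
        have : 2 ∣ e1 := ⟨a, he12a⟩
        exact dvd_trans this he1e
      have hq21 : e1 * (q + 1) ∣ q ^ 2 - 1 := by
        rw [← hfac]
        exact mul_dvd_mul_right he1q (q + 1)
      obtain ⟨k, hk⟩ := hdvd
      have h2ek : 2 * e ∣ e * k := by rw [← hk]; exact dvd_trans h2e hq21
      have h2k : 2 ∣ k := by
        obtain ⟨m, hm⟩ := h2ek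
        have : e * k = e * (2 * m) := by rw [hm]; ring
        have hk2m : k = 2 * m := Nat.eq_of_mul_eq_mul_left he this
        exact ⟨m, hk2m⟩
      have : 2 ∣ (q ^ 2 - 1) / e := by
        rw [hk, Nat.mul_div_cancel_left _ he]
        exact h2k
      exact absurd this (hpar heven)
    -- conclude sInf S = 2 * e1
    rw [hmqe]
    refine le_antisymm (Nat.sInf_le hmem2) (le_csInf ⟨2 * e1, hmem2⟩ ?_)
    intro t ht
    obtain ⟨m, hm⟩ := hlow t ht
    have htne : t ≠ e1 := fun h => hnot (h ▸ ht)
    have htpos : 0 < t := ht.1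
    rcases Nat.lt_or_ge m 2 with hm2 | hm2
    · interval_cases m <;> omega
    · calc 2 * e1 ≤ m * e1 := Nat.mul_le_mul_right e1 hm2
      _ = e1 * m := mul_comm _ _
      _ = t := hm.symm
end

section
/- Let p be an odd prime, k a positive integer, e = p^k, and let q be a positive integer coprime to p whose multiplicative order modulo e equals φ(e)/d for some divisor d of p - 1. Then m(q,e) = m(q,p). -/
theorem stmt_11 (p k q d : ℕ) (hp : p.Prime) (hodd : Odd p) (hk : 0 < k)
    (hq : 0 < q) (hcop : Nat.gcd q p = 1) (hd : d ∣ p - 1)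
    (hord : orderOf (q : ZMod (p ^ k)) = Nat.totient (p ^ k) / d) :
    mqe q (p ^ k) = mqe q p := by
  classical
  have hp2 : 2 ≤ p := hp.two_le
  have hpk_ne : p ^ k ≠ 0 := pow_ne_zero k hp.pos.ne'
  haveI : NeZero (p ^ k) := ⟨hpk_ne⟩
  haveI : NeZero p := ⟨hp.pos.ne'⟩
  have hdvdp : p ∣ p ^ k := dvd_pow_self p hk.ne'
  -- KEY LIFTING STEP: any solution mod p lifts to one mod p^k with the same length.
  have hsuff : ∀ (T : ℕ), 0 < T → ∀ f : Fin T → ℕ, (p ∣ ∑ i, q ^ f i) →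
      ∃ g : Fin T → ℕ, (p ^ k) ∣ ∑ i, q ^ g i := by
    intro T hT f hf
    set i0 : Fin T := ⟨0, hT⟩ with hi0
    set S : ℕ := ∑ i, q ^ f i with hSdef
    obtain ⟨S', hS'⟩ := hf
    -- units setup
    have hcop' : Nat.Coprime q (p ^ k) :=
      Nat.Coprime.pow_right k (Nat.coprime_iff_gcd_eq_one.mpr hcop)
    set Q : (ZMod (p ^ k))ˣ := ZMod.unitOfCoprime q hcop' with hQdef
    have hQ : (Q : ZMod (p ^ k)) = (q : ZMod (p ^ k)) := ZMod.coe_unitOfCoprime q hcop'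
    set c : ZMod (p ^ k) :=
      (S' : ZMod (p ^ k)) * ((Q⁻¹ : (ZMod (p ^ k))ˣ) : ZMod (p ^ k)) ^ (f i0) with hcdef
    have hnil : IsNilpotent ((p : ZMod (p ^ k)) * c) := by
      refine ⟨k, ?_⟩
      have hpk0 : ((p : ZMod (p ^ k))) ^ k = 0 := by
        rw [← Nat.cast_pow, ZMod.natCast_self]
      rw [mul_pow, hpk0, zero_mul]
    have hu : IsUnit (1 - (p : ZMod (p ^ k)) * c) := IsNilpotent.isUnit_one_sub hnil
    set U : (ZMod (p ^ k))ˣ := hu.unit with hUdef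
    -- U is in the kernel of unitsMap
    have hker : U ∈ (ZMod.unitsMap hdvdp).ker := by
      rw [MonoidHom.mem_ker]
      apply Units.ext
      have h1 : ((ZMod.unitsMap hdvdp U : (ZMod p)ˣ) : ZMod p)
          = (ZMod.castHom hdvdp (ZMod p)) ((U : ZMod (p ^ k))) := by
        rw [ZMod.unitsMap_def]; rfl
      rw [h1, hu.unit_spec, map_sub, map_one, map_mul, map_natCast, ZMod.natCast_self,
        zero_mul, sub_zero, Units.val_one]
    -- order of Q
    have hdpos : 0 < d := by
      rcases Nat.eq_zero_or_pos d with h | h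
      · exfalso; rw [h] at hd; have := Nat.eq_zero_of_zero_dvd hd; omega
      · exact h
    set s : ℕ := (p - 1) / d with hsdef
    have hspos : 0 < s := Nat.div_pos (Nat.le_of_dvd (by omega) hd) hdpos
    have hordQ : orderOf Q = p ^ (k - 1) * s := by
      rw [← orderOf_units, hQ, hord, Nat.totient_prime_pow hp hk, Nat.mul_div_assoc _ hd]
    have hordQs : orderOf (Q ^ s) = p ^ (k - 1) := by
      rw [orderOf_pow' Q hspos.ne', hordQ]
      rw [Nat.gcd_eq_right (dvd_mul_left s (p ^ (k - 1))), Nat.mul_div_cancel _ hspos]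
    -- Q^s lies in the kernel
    have hQs_ker : Q ^ s ∈ (ZMod.unitsMap hdvdp).ker := by
      rw [MonoidHom.mem_ker, map_pow]
      set o : ℕ := orderOf (ZMod.unitsMap hdvdp Q) with hodef
      have ho1 : o ∣ p - 1 := by
        have := orderOf_dvd_natCard (ZMod.unitsMap hdvdp Q)
        rwa [Nat.card_eq_fintype_card, ZMod.card_units_eq_totient, Nat.totient_prime hp] at this
      have ho2 : o ∣ p ^ (k - 1) * s := by
        have := orderOf_map_dvd (ZMod.unitsMap hdvdp) Q
        rwa [hordQ] at this
      have hco : Nat.Coprime o (p ^ (k - 1)) := by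
        apply Nat.Coprime.pow_right
        have hpp : Nat.Coprime (p - 1) p := by
          have h : ¬ p ∣ (p - 1) := Nat.not_dvd_of_pos_of_lt (by omega) (by omega)
          exact ((hp.coprime_iff_not_dvd).mpr h).symm
        exact Nat.Coprime.coprime_dvd_left ho1 hpp
      have ho3 : o ∣ s := Nat.Coprime.dvd_of_dvd_mul_left hco ho2
      exact orderOf_dvd_iff_pow_eq_one.mp ho3
    -- kernel cardinality
    have hcard_ker : Nat.card (ZMod.unitsMap hdvdp).ker = p ^ (k - 1) := by
      have hsurj := ZMod.unitsMap_surjective hdvdp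
      have e1 := Subgroup.card_eq_card_quotient_mul_card_subgroup (ZMod.unitsMap hdvdp).ker
      have e2 : Nat.card ((ZMod (p ^ k))ˣ ⧸ (ZMod.unitsMap hdvdp).ker) = Nat.card (ZMod p)ˣ :=
        Nat.card_congr (QuotientGroup.quotientKerEquivOfSurjective _ hsurj).toEquiv
      have e3 : Nat.card ((ZMod (p ^ k))ˣ) = p ^ (k - 1) * (p - 1) := by
        rw [Nat.card_eq_fintype_card, ZMod.card_units_eq_totient, Nat.totient_prime_pow hp hk]
      have e4 : Nat.card ((ZMod p)ˣ) = p - 1 := by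
        rw [Nat.card_eq_fintype_card, ZMod.card_units_eq_totient, Nat.totient_prime hp]
      rw [e2, e3, e4] at e1
      have hp1' : 0 < p - 1 := by omega
      refine Nat.eq_of_mul_eq_mul_left hp1' ?_
      rw [← e1]; ring
    -- kernel equals zpowers (Q ^ s)
    have hle : Subgroup.zpowers (Q ^ s) ≤ (ZMod.unitsMap hdvdp).ker := by
      rw [Subgroup.zpowers_le]; exact hQs_ker
    have hKeq : Subgroup.zpowers (Q ^ s) = (ZMod.unitsMap hdvdp).ker := by
      apply Subgroup.eq_of_le_of_card_ge hle
      rw [hcard_ker, Nat.card_zpowers, hordQs]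
    -- so U is a natural power of Q
    have hUz : U ∈ Subgroup.zpowers Q := by
      have h1 : U ∈ Subgroup.zpowers (Q ^ s) := hKeq ▸ hker
      have h2 : Subgroup.zpowers (Q ^ s) ≤ Subgroup.zpowers Q := by
        rw [Subgroup.zpowers_le]
        exact ⟨(s : ℤ), by simp⟩
      exact h2 h1
    obtain ⟨b, hb0⟩ := mem_powers_iff_mem_zpowers.mpr hUz
    have hb : Q ^ b = U := hb0
    -- build the new exponent function
    refine ⟨Function.update f i0 (f i0 + b), ?_⟩
    rw [← ZMod.natCast_eq_zero_iff]
    push_cast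
    have hqb : (q : ZMod (p ^ k)) ^ b = 1 - (p : ZMod (p ^ k)) * c := by
      rw [← hQ, ← Units.val_pow_eq_pow_val, hb, hu.unit_spec]
    have hScast : ((S : ℕ) : ZMod (p ^ k))
        = (q : ZMod (p ^ k)) ^ (f i0)
          + ∑ i ∈ Finset.univ.erase i0, (q : ZMod (p ^ k)) ^ (f i) := by
      rw [hSdef]
      push_cast
      rw [← Finset.add_sum_erase _ _ (Finset.mem_univ i0)]
    have step1 : ∀ i ∈ (Finset.univ : Finset (Fin T)),
        (q : ZMod (p ^ k)) ^ (Function.update f i0 (f i0 + b) i)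
          = Function.update (fun j => (q : ZMod (p ^ k)) ^ f j) i0
              ((q : ZMod (p ^ k)) ^ (f i0 + b)) i := by
      intro i _
      by_cases h : i = i0
      · subst h; simp
      · simp [Function.update_of_ne h]
    rw [Finset.sum_congr rfl step1, Finset.sum_update_of_mem (Finset.mem_univ i0)]
    have herase : ∑ i ∈ Finset.univ \ {i0}, (q : ZMod (p ^ k)) ^ f i
        = ((S : ℕ) : ZMod (p ^ k)) - (q : ZMod (p ^ k)) ^ (f i0) := by
      rw [hScast, Finset.sdiff_singleton_eq_erase]
      ring
    rw [herase, pow_add, hqb, hcdef]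
    have key : (q : ZMod (p ^ k)) ^ (f i0)
        * ((Q⁻¹ : (ZMod (p ^ k))ˣ) : ZMod (p ^ k)) ^ (f i0) = 1 := by
      rw [← mul_pow, ← hQ, ← Units.val_mul, mul_inv_cancel, Units.val_one, one_pow]
    have hps : ((p : ZMod (p ^ k))) * (S' : ZMod (p ^ k)) = ((S : ℕ) : ZMod (p ^ k)) := by
      rw [hS']; push_cast; ring
    linear_combination (-((p : ZMod (p ^ k)) * (S' : ZMod (p ^ k)))) * key - hps
  -- now conclude
  have hwit : ∀ e : ℕ, 0 < e → e ∈ {t | 0 < t ∧ ∃ f : Fin t → ℕ, e ∣ ∑ i, q ^ f i} := by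
    intro e he
    exact ⟨he, fun _ => 0, by simp⟩
  have hne1 : {t | 0 < t ∧ ∃ f : Fin t → ℕ, (p ^ k) ∣ ∑ i, q ^ f i}.Nonempty :=
    ⟨p ^ k, hwit _ (Nat.pos_of_ne_zero hpk_ne)⟩
  have hne2 : {t | 0 < t ∧ ∃ f : Fin t → ℕ, p ∣ ∑ i, q ^ f i}.Nonempty :=
    ⟨p, hwit _ hp.pos⟩
  have h1 : mqe q p ≤ mqe q (p ^ k) := by
    obtain ⟨ht, f, hf⟩ := Nat.sInf_mem hne1
    exact Nat.sInf_le ⟨ht, f, dvd_trans hdvdp hf⟩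
  have h2 : mqe q (p ^ k) ≤ mqe q p := by
    obtain ⟨ht, f, hf⟩ := Nat.sInf_mem hne2
    obtain ⟨g, hg⟩ := hsuff _ ht f hf
    exact Nat.sInf_le ⟨ht, g, hg⟩
  exact le_antisymm h2 h1
end

section
/- Let p be an odd prime, k a positive integer, e = p^k, and let q be a positive integer coprime to p whose multiplicative order modulo e equals φ(e)/2. Then m(q,e) = 2 if p ≡ 1 (mod 4), and m(q,e) = 3 if p ≡ 3 (mod 4). -/
lemma hensel_sq (p : ℕ) (hp : p.Prime) (hp2 : p ≠ 2) (u x0 : ℤ)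
    (hu : ¬ (p : ℤ) ∣ u) (h0 : (p : ℤ) ∣ x0 ^ 2 - u) :
    ∀ j : ℕ, ∃ x : ℤ, (p : ℤ) ^ (j + 1) ∣ x ^ 2 - u := by
  haveI : Fact p.Prime := ⟨hp⟩
  intro j
  induction j with
  | zero => exact ⟨x0, by simpa using h0⟩
  | succ j ih =>
    obtain ⟨x, hx⟩ := ih
    obtain ⟨c, hc⟩ := hx
    have hpx : ¬ (p : ℤ) ∣ x := by
      intro hdvd
      apply hu
      have h1 : (p : ℤ) ∣ x ^ 2 := dvd_pow hdvd two_ne_zero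
      have h2 : (p : ℤ) ∣ x ^ 2 - u := hc ▸ Dvd.dvd.mul_right (dvd_pow_self (p : ℤ) (Nat.succ_ne_zero j)) c
      simpa using dvd_sub h1 h2
    have hden : (2 * (x : ZMod p) : ZMod p) ≠ 0 := by
      apply mul_ne_zero
      · intro h2
        have : ((2 : ℕ) : ZMod p) = 0 := by exact_mod_cast h2
        rw [ZMod.natCast_eq_zero_iff] at this
        exact hp2 ((Nat.prime_dvd_prime_iff_eq hp Nat.prime_two).mp this)
      · intro h2
        exact hpx ((ZMod.intCast_zmod_eq_zero_iff_dvd x p).mp h2)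
    have ht : (p : ℤ) ∣ 2 * x * (((-(c : ZMod p) / (2 * (x : ZMod p))).val : ℤ)) + c := by
      apply (ZMod.intCast_zmod_eq_zero_iff_dvd _ p).mp
      push_cast
      rw [ZMod.natCast_zmod_val]
      rw [mul_div_assoc', mul_div_right_comm, div_self hden]
      ring
    set t : ℤ := ((-(c : ZMod p) / (2 * (x : ZMod p))).val : ℤ) with htdef
    refine ⟨x + t * (p : ℤ) ^ (j + 1), ?_⟩
    have key : (x + t * (p : ℤ) ^ (j + 1)) ^ 2 - u
        = (p : ℤ) ^ (j + 1) * (2 * x * t + c) + t ^ 2 * ((p : ℤ) ^ (j + 1)) ^ 2 := by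
      linear_combination hc
    rw [key]
    apply dvd_add
    · rw [pow_succ]
      exact mul_dvd_mul_left _ ht
    · apply Dvd.dvd.mul_left
      rw [← pow_mul]
      exact pow_dvd_pow _ (by omega)

lemma sq_mem_pows {G : Type*} [CommGroup G] [Fintype G] (q y : G)
    (h : orderOf q * 2 = Fintype.card G) : ∃ m : ℕ, q ^ m = y ^ 2 := by
  have h1 : Nat.card (Subgroup.zpowers q) * (Subgroup.zpowers q).index = Nat.card G :=
    Subgroup.card_mul_index _
  rw [Nat.card_zpowers, Nat.card_eq_fintype_card, ← h] at h1
  have hq : 0 < orderOf q := orderOf_pos q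
  have hidx : (Subgroup.zpowers q).index = 2 := Nat.eq_of_mul_eq_mul_left hq h1
  have hmem : y ^ 2 ∈ Subgroup.zpowers q := by
    rw [← hidx]; exact Subgroup.pow_index_mem _ y
  obtain ⟨n, hn⟩ := Subgroup.mem_zpowers_iff.mp hmem
  refine ⟨(n % (orderOf q : ℤ)).toNat, ?_⟩
  have hord : ((orderOf q : ℤ)) ≠ 0 := by exact_mod_cast hq.ne'
  rw [← zpow_natCast, Int.toNat_of_nonneg (Int.emod_nonneg n hord), zpow_mod_orderOf, hn]

lemma sq_eq_one_cases (p k : ℕ) (hp : p.Prime) (hp2 : p ≠ 2) (hk : 0 < k)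
    [NeZero (p ^ k)] (y : ZMod (p ^ k)) (hy : y ^ 2 = 1) : y = 1 ∨ y = -1 := by
  have hcast : ((((y.val : ℤ)) ^ 2 - 1 : ℤ) : ZMod (p ^ k)) = 0 := by
    push_cast
    rw [ZMod.natCast_zmod_val, hy]
    ring
  have hdvd : ((p : ℤ)) ^ k ∣ ((y.val : ℤ) - 1) * ((y.val : ℤ) + 1) := by
    have h1 := (ZMod.intCast_zmod_eq_zero_iff_dvd _ _).mp hcast
    have h2 : ((p ^ k : ℕ) : ℤ) = (p : ℤ) ^ k := by push_cast; ring
    rw [h2] at h1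
    have h3 : ((y.val : ℤ) - 1) * ((y.val : ℤ) + 1) = (y.val : ℤ) ^ 2 - 1 := by ring
    rw [h3]; exact h1
  have hpZ : Prime (p : ℤ) := Nat.prime_iff_prime_int.mp hp
  have hple : 3 ≤ p := by have := hp.two_le; omega
  have hnot2 : ¬ (p : ℤ) ∣ 2 := by
    intro h
    have h1 : (p : ℤ) ≤ 2 := Int.le_of_dvd (by norm_num) h
    have h2 : (3 : ℤ) ≤ (p : ℤ) := by exact_mod_cast hple
    omega
  by_cases hd : (p : ℤ) ∣ (y.val : ℤ) + 1
  · right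
    have hnd : ¬ (p : ℤ) ∣ (y.val : ℤ) - 1 := by
      intro h2
      exact hnot2 (by simpa using dvd_sub hd h2)
    have hcop : IsCoprime ((p : ℤ) ^ k) ((y.val : ℤ) - 1) :=
      (hpZ.coprime_iff_not_dvd.mpr hnd).pow_left
    have hdd : (p : ℤ) ^ k ∣ (y.val : ℤ) + 1 := hcop.dvd_of_dvd_mul_left hdvd
    have hz : (((y.val : ℤ) + 1 : ℤ) : ZMod (p ^ k)) = 0 := by
      rw [ZMod.intCast_zmod_eq_zero_iff_dvd]
      push_cast
      exact hdd
    push_cast at hz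
    rw [ZMod.natCast_zmod_val] at hz
    exact eq_neg_of_add_eq_zero_left hz
  · left
    have hcop : IsCoprime ((p : ℤ) ^ k) ((y.val : ℤ) + 1) :=
      (hpZ.coprime_iff_not_dvd.mpr hd).pow_left
    have hdd : (p : ℤ) ^ k ∣ (y.val : ℤ) - 1 := hcop.dvd_of_dvd_mul_right hdvd
    have hz : (((y.val : ℤ) - 1 : ℤ) : ZMod (p ^ k)) = 0 := by
      rw [ZMod.intCast_zmod_eq_zero_iff_dvd]
      push_cast
      exact hdd
    push_cast at hz
    rw [ZMod.natCast_zmod_val] at hz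
    exact sub_eq_zero.mp hz

lemma exists_sqrt (p k : ℕ) (hp : p.Prime) (hp2 : p ≠ 2) (hk : 0 < k) [NeZero (p ^ k)]
    (w : ZMod (p ^ k)) (a : ZMod p) (ha : a ≠ 0) (hw : ((w.val : ℕ) : ZMod p) = a ^ 2) :
    ∃ u : ZMod (p ^ k), u ^ 2 = w := by
  haveI := Fact.mk hp
  have hnd : ¬ p ∣ w.val := by
    intro hd
    have h1 : ((w.val : ℕ) : ZMod p) = 0 := (ZMod.natCast_eq_zero_iff _ _).mpr hd
    rw [hw] at h1
    exact pow_ne_zero 2 ha h1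
  have hu : ¬ (p : ℤ) ∣ ((w.val : ℕ) : ℤ) := fun h => hnd (Int.natCast_dvd_natCast.mp h)
  have h0 : (p : ℤ) ∣ ((a.val : ℕ) : ℤ) ^ 2 - ((w.val : ℕ) : ℤ) := by
    apply (ZMod.intCast_zmod_eq_zero_iff_dvd _ p).mp
    push_cast
    rw [ZMod.natCast_zmod_val, hw]
    ring
  obtain ⟨x, hx⟩ := hensel_sq p hp hp2 _ _ hu h0 (k - 1)
  have hk1 : k - 1 + 1 = k := by omega
  rw [hk1] at hx
  refine ⟨(x : ZMod (p ^ k)), ?_⟩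
  have h1 : ((x ^ 2 - ((w.val : ℕ) : ℤ) : ℤ) : ZMod (p ^ k)) = 0 := by
    rw [ZMod.intCast_zmod_eq_zero_iff_dvd]
    push_cast
    exact hx
  push_cast at h1
  rw [ZMod.natCast_zmod_val] at h1
  exact sub_eq_zero.mp h1

theorem stmt_12 (p k q : ℕ) (hp : p.Prime) (hodd : Odd p) (hk : 0 < k)
    (hq : 0 < q) (hcop : Nat.gcd q p = 1)
    (hord : orderOf (q : ZMod (p ^ k)) = Nat.totient (p ^ k) / 2) :
    (p % 4 = 1 → mqe q (p ^ k) = 2) ∧ (p % 4 = 3 → mqe q (p ^ k) = 3) := by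
  haveI := Fact.mk hp
  have hpodd : p % 2 = 1 := Nat.odd_iff.mp hodd
  have hp2 : p ≠ 2 := by omega
  have hp3 : 3 ≤ p := by have := hp.two_le; omega
  have hpk1 : 1 < p ^ k := Nat.one_lt_pow hk.ne' hp.one_lt
  haveI : NeZero (p ^ k) := ⟨by omega⟩
  have hcq : Nat.Coprime q (p ^ k) := Nat.Coprime.pow_right k hcop
  have hQu : IsUnit ((q : ZMod (p ^ k))) := (ZMod.isUnit_iff_coprime q (p ^ k)).mpr hcq
  set qu : (ZMod (p ^ k))ˣ := ZMod.unitOfCoprime q hcq with hqud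
  have hqu : (qu : ZMod (p ^ k)) = (q : ZMod (p ^ k)) := ZMod.coe_unitOfCoprime q hcq
  have horder : orderOf qu = (p ^ k).totient / 2 := by
    rw [← orderOf_units, hqu]; exact hord
  have htot : (p ^ k).totient = p ^ (k - 1) * (p - 1) := Nat.totient_prime_pow hp hk
  have h2d : 2 ∣ p - 1 := by omega
  have hcardu : orderOf qu * 2 = Fintype.card (ZMod (p ^ k))ˣ := by
    rw [horder, ZMod.card_units_eq_totient]
    exact Nat.div_mul_cancel (htot ▸ Dvd.dvd.mul_left h2d _)
  have hdpos : 0 < orderOf qu := orderOf_pos qu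
  have hnot1 : ∀ f : Fin 1 → ℕ, ¬ (p ^ k ∣ ∑ i, q ^ f i) := by
    intro f hf
    rw [Fin.sum_univ_one] at hf
    have := Nat.Coprime.eq_one_of_dvd (hcq.symm.pow_right (f 0)) hf
    omega
  constructor
  · intro h41
    have h4 : 4 ∣ p - 1 := by omega
    obtain ⟨m, hm⟩ := h4
    have hd2 : 2 ∣ orderOf qu := by
      rw [horder, htot, hm]
      refine ⟨p ^ (k - 1) * m, ?_⟩
      rw [Nat.mul_div_assoc _ (⟨2 * m, by ring⟩ : 2 ∣ 4 * m)]
      have h42 : 4 * m / 2 = 2 * m := by omega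
      rw [h42]; ring
    have hd2pos : 0 < orderOf qu / 2 := by
      obtain ⟨e, he⟩ := hd2; omega
    have hx2 : (qu ^ (orderOf qu / 2)) ^ 2 = 1 := by
      rw [← pow_mul, Nat.div_mul_cancel hd2, pow_orderOf_eq_one]
    have hxne : qu ^ (orderOf qu / 2) ≠ 1 := by
      intro h1
      have h2 := orderOf_dvd_of_pow_eq_one h1
      have h3 := Nat.le_of_dvd hd2pos h2
      omega
    have hy2 : ((qu ^ (orderOf qu / 2) : (ZMod (p ^ k))ˣ) : ZMod (p ^ k)) ^ 2 = 1 := by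
      rw [← Units.val_pow_eq_pow_val, hx2, Units.val_one]
    rcases sq_eq_one_cases p k hp hp2 hk _ hy2 with h1 | h1
    · exact absurd (Units.val_eq_one.mp h1) hxne
    · have hQpow : (q : ZMod (p ^ k)) ^ (orderOf qu / 2) = -1 := by
        rw [← hqu, ← Units.val_pow_eq_pow_val]; exact h1
      have h2S : p ^ k ∣ q ^ (orderOf qu / 2) + q ^ 0 := by
        apply (ZMod.natCast_eq_zero_iff _ _).mp
        push_cast
        rw [hQpow]
        simp
      have hmem2 : 2 ∈ {t | 0 < t ∧ ∃ f : Fin t → ℕ, p ^ k ∣ ∑ i, q ^ f i} := by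
        refine ⟨by norm_num, ![orderOf qu / 2, 0], ?_⟩
        rw [Fin.sum_univ_two]
        simpa using h2S
      have hlb : ∀ t ∈ {t | 0 < t ∧ ∃ f : Fin t → ℕ, p ^ k ∣ ∑ i, q ^ f i}, 2 ≤ t := by
        rintro t ⟨htpos, f, hf⟩
        by_contra hlt
        have ht1 : t = 1 := by omega
        subst ht1
        exact hnot1 f hf
      exact le_antisymm (Nat.sInf_le hmem2) (hlb _ (Nat.sInf_mem ⟨2, hmem2⟩))
  · intro h43
    -- no power of q is -1
    have no_neg_one : ∀ i : ℕ, (q : ZMod (p ^ k)) ^ i ≠ -1 := by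
      intro i hi
      have hsq : qu ^ (i * 2) = 1 := by
        apply Units.val_eq_one.mp
        rw [Units.val_pow_eq_pow_val, hqu, pow_mul, hi]
        norm_num
      have hdvd : orderOf qu ∣ i * 2 := orderOf_dvd_of_pow_eq_one hsq
      obtain ⟨m, hm, hmodd⟩ : ∃ m, p - 1 = 2 * m ∧ m % 2 = 1 := ⟨(p - 1) / 2, by omega, by omega⟩
      have hdval : orderOf qu = p ^ (k - 1) * m := by
        rw [horder, htot, hm, Nat.mul_div_assoc _ (dvd_mul_right 2 m)]
        congr 1
        omega
      have hdodd : ¬ 2 ∣ orderOf qu := by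
        intro hdd
        have h1 : Odd (p ^ (k - 1)) := hodd.pow
        have h2 : Odd (p ^ (k - 1) * m) := h1.mul (Nat.odd_iff.mpr hmodd)
        rw [← hdval, Nat.odd_iff] at h2
        omega
      have hcop2 : Nat.Coprime (orderOf qu) 2 :=
        ((Nat.prime_two.coprime_iff_not_dvd).mpr hdodd).symm
      have hdi : orderOf qu ∣ i := Nat.Coprime.dvd_of_dvd_mul_right hcop2 hdvd
      have hone : (q : ZMod (p ^ k)) ^ i = 1 := by
        have h1 : qu ^ i = 1 := orderOf_dvd_iff_pow_eq_one.mp hdi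
        rw [← hqu, ← Units.val_pow_eq_pow_val, h1, Units.val_one]
      rw [hone] at hi
      have h2z : ((2 : ℕ) : ZMod (p ^ k)) = 0 := by
        push_cast
        linear_combination hi
      rw [ZMod.natCast_eq_zero_iff] at h2z
      have h2le := Nat.le_of_dvd (by norm_num) h2z
      have hpk3 : p ≤ p ^ k := Nat.le_self_pow hk.ne' p
      omega
    have claim : ∀ a b : ℕ, b ≤ a →
        (q : ZMod (p ^ k)) ^ a + (q : ZMod (p ^ k)) ^ b = 0 → False := by
      intro a b hba hab
      have h1 : (q : ZMod (p ^ k)) ^ b * ((q : ZMod (p ^ k)) ^ (a - b) + 1) = 0 := by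
        rw [mul_add, mul_one, ← pow_add, Nat.add_sub_cancel' hba]
        exact hab
      obtain ⟨ub, hub⟩ := hQu.pow (n := b)
      rw [← hub, Units.mul_right_eq_zero] at h1
      exact no_neg_one _ (eq_neg_of_add_eq_zero_left h1)
    have hnot2 : ∀ f : Fin 2 → ℕ, ¬ (p ^ k ∣ ∑ i, q ^ f i) := by
      intro f hf
      rw [Fin.sum_univ_two] at hf
      have hz : (q : ZMod (p ^ k)) ^ (f 0) + (q : ZMod (p ^ k)) ^ (f 1) = 0 := by
        have := (ZMod.natCast_eq_zero_iff _ (p ^ k)).mpr hf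
        push_cast at this
        exact this
      rcases le_total (f 1) (f 0) with hle | hle
      · exact claim _ _ hle hz
      · exact claim _ _ hle (by rw [add_comm] at hz; exact hz)
    -- upper bound: 3 works
    obtain ⟨a, b, hab⟩ := ZMod.sq_add_sq p (-1 : ZMod p)
    have ha : a ≠ 0 := by
      rintro rfl
      have hsqn : IsSquare (-1 : ZMod p) := ⟨b, by rw [← hab]; ring⟩
      rw [ZMod.exists_sq_eq_neg_one_iff] at hsqn
      exact hsqn h43
    have hb : b ≠ 0 := by
      rintro rfl
      have hsqn : IsSquare (-1 : ZMod p) := ⟨a, by rw [← hab]; ring⟩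
      rw [ZMod.exists_sq_eq_neg_one_iff] at hsqn
      exact hsqn h43
    have hbval : ¬ p ∣ b.val := by
      intro hd
      have h1 : ((b.val : ℕ) : ZMod p) = 0 := (ZMod.natCast_eq_zero_iff _ _).mpr hd
      rw [ZMod.natCast_zmod_val] at h1
      exact hb h1
    set v : ZMod (p ^ k) := ((b.val : ℕ) : ZMod (p ^ k)) with hv
    have hvu : IsUnit v := by
      rw [hv, ZMod.isUnit_iff_coprime]
      exact Nat.Coprime.pow_right k ((hp.coprime_iff_not_dvd).mpr hbval).symm
    set w : ZMod (p ^ k) := -1 - v ^ 2 with hw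
    have hφ : ((w.val : ℕ) : ZMod p) = a ^ 2 := by
      have hcastw : ((w.val : ℕ) : ZMod p)
          = ZMod.castHom (dvd_pow_self p hk.ne') (ZMod p) w := by
        rw [ZMod.castHom_apply, ZMod.natCast_val]
      rw [hcastw, hw, map_sub, map_neg, map_one, map_pow]
      have hφv : ZMod.castHom (dvd_pow_self p hk.ne') (ZMod p) v = b := by
        rw [hv, map_natCast, ZMod.natCast_zmod_val]
      rw [hφv]
      linear_combination -hab
    obtain ⟨u, hu2⟩ := exists_sqrt p k hp hp2 hk w a ha hφ
    have hwu : IsUnit w := by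
      have hwnd : ¬ p ∣ w.val := by
        intro hd
        have h1 : ((w.val : ℕ) : ZMod p) = 0 := (ZMod.natCast_eq_zero_iff _ _).mpr hd
        rw [hφ] at h1
        exact pow_ne_zero 2 ha h1
      have : IsUnit ((w.val : ℕ) : ZMod (p ^ k)) := by
        rw [ZMod.isUnit_iff_coprime]
        exact Nat.Coprime.pow_right k ((hp.coprime_iff_not_dvd).mpr hwnd).symm
      rwa [ZMod.natCast_zmod_val] at this
    have huu : IsUnit u := by
      have h1 : IsUnit (u * u) := by rw [← pow_two, hu2]; exact hwu
      exact isUnit_of_mul_isUnit_left h1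
    obtain ⟨U, hU⟩ := huu
    obtain ⟨V, hV⟩ := hvu
    obtain ⟨i, hi⟩ := sq_mem_pows qu U hcardu
    obtain ⟨j, hj⟩ := sq_mem_pows qu V hcardu
    have hQi : (q : ZMod (p ^ k)) ^ i = u ^ 2 := by
      rw [← hqu, ← hU, ← Units.val_pow_eq_pow_val, ← Units.val_pow_eq_pow_val, hi]
    have hQj : (q : ZMod (p ^ k)) ^ j = v ^ 2 := by
      rw [← hqu, ← hV, ← Units.val_pow_eq_pow_val, ← Units.val_pow_eq_pow_val, hj]
    have hsum : p ^ k ∣ q ^ i + q ^ j + q ^ 0 := by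
      apply (ZMod.natCast_eq_zero_iff _ _).mp
      push_cast
      rw [hQi, hQj, hu2, hw]
      simp
    have hmem3 : 3 ∈ {t | 0 < t ∧ ∃ f : Fin t → ℕ, p ^ k ∣ ∑ i, q ^ f i} := by
      refine ⟨by norm_num, ![i, j, 0], ?_⟩
      rw [Fin.sum_univ_three]
      simpa using hsum
    have hlb : ∀ t ∈ {t | 0 < t ∧ ∃ f : Fin t → ℕ, p ^ k ∣ ∑ i, q ^ f i}, 3 ≤ t := by
      rintro t ⟨htpos, f, hf⟩
      by_contra hlt
      interval_cases t
      · exact hnot1 f hf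
      · exact hnot2 f hf
    exact le_antisymm (Nat.sInf_le hmem3) (hlb _ (Nat.sInf_mem ⟨3, hmem3⟩))
end

section
/- Let n be a prime number and m a positive integer with m < n. Then there exists a positive integer D such that: for all positive integers q, e with e dividing Φ_n(q) = 1 + q + ... + q^{n-1}, if m(q,e) = m then e divides D. (Consequently, there are only finitely many e dividing some Φ_n(q) with m(q,e) < n.) -/
open Polynomial

lemma keyA (n m : ℕ) (hn : n.Prime) (hm : 0 < m) (hmn : m < n) (i : Fin m → Fin n) :
    ∃ d : ℤ, d ≠ 0 ∧ ∃ a b : ℤ[X],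
      a * (∑ k ∈ Finset.range n, X ^ k) + b * (∑ j, X ^ (i j : ℕ)) = C d := by
  haveI : Fact n.Prime := ⟨hn⟩
  set gZ : ℤ[X] := ∑ j, X ^ (i j : ℕ) with hgZ
  set ΦZ : ℤ[X] := ∑ k ∈ Finset.range n, X ^ k with hΦZ
  have hΦmap : (ΦZ.map (Int.castRingHom ℚ)) = cyclotomic n ℚ := by
    rw [cyclotomic_prime, hΦZ, Polynomial.map_sum]
    simp
  set g : ℚ[X] := gZ.map (Int.castRingHom ℚ) with hg
  have hg1 : g.eval 1 = (m : ℚ) := by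
    simp [hg, hgZ, Polynomial.map_sum, eval_finset_sum]
  have hnotdvd : ¬ (cyclotomic n ℚ ∣ g) := by
    rintro ⟨h, hh⟩
    have hgne : g ≠ 0 := by
      intro h0
      rw [h0, eval_zero] at hg1
      exact_mod_cast absurd hg1.symm (by exact_mod_cast hm.ne')
    have hhne : h ≠ 0 := by rintro rfl; simp at hh; exact hgne hh
    have hdegg : g.natDegree ≤ n - 1 := by
      rw [hg, hgZ, Polynomial.map_sum]
      apply natDegree_sum_le_of_forall_le
      intro j _
      simp only [Polynomial.map_pow, map_X]
      calc (X ^ (i j : ℕ) : ℚ[X]).natDegree ≤ (i j : ℕ) := natDegree_X_pow_le _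
        _ ≤ n - 1 := Nat.le_sub_one_of_lt (i j).2
    have hdegc : (cyclotomic n ℚ).natDegree = n - 1 := by
      rw [natDegree_cyclotomic, Nat.totient_prime hn]
    have hdegh : h.natDegree = 0 := by
      have := natDegree_mul (cyclotomic_ne_zero n ℚ) hhne
      rw [← hh, hdegc] at this
      omega
    obtain ⟨c, rfl⟩ := natDegree_eq_zero.mp hdegh
    have hc : c = g.coeff 0 := by
      rw [hh, coeff_mul_C, cyclotomic_coeff_zero ℚ hn.one_lt, one_mul]
    have hcint : c = ((gZ.coeff 0 : ℤ) : ℚ) := by rw [hc, hg, coeff_map]; rfl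
    have heval : (m : ℚ) = n * c := by
      rw [← hg1, hh, eval_mul, eval_C, eval_one_cyclotomic_prime]
    rw [hcint] at heval
    have : (m : ℤ) = n * gZ.coeff 0 := by exact_mod_cast heval
    have hdvd : (n : ℤ) ∣ (m : ℤ) := ⟨gZ.coeff 0, this⟩
    have : n ∣ m := by exact_mod_cast hdvd
    exact absurd (Nat.le_of_dvd hm this) (by omega)
  have hcop : IsCoprime (cyclotomic n ℚ) g :=
    ((cyclotomic.irreducible_rat hn.pos).coprime_iff_not_dvd).mpr hnotdvd
  obtain ⟨u, v, huv⟩ := hcop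
  obtain ⟨Nu, hNu⟩ := IsLocalization.integerNormalization_map_to_map (nonZeroDivisors ℤ) u
  obtain ⟨Nv, hNv⟩ := IsLocalization.integerNormalization_map_to_map (nonZeroDivisors ℤ) v
  set uZ := IsLocalization.integerNormalization (nonZeroDivisors ℤ) u with huZ
  set vZ := IsLocalization.integerNormalization (nonZeroDivisors ℤ) v with hvZ
  refine ⟨(Nu : ℤ) * (Nv : ℤ), mul_ne_zero (nonZeroDivisors.coe_ne_zero Nu)
    (nonZeroDivisors.coe_ne_zero Nv), C (Nv : ℤ) * uZ, C (Nu : ℤ) * vZ, ?_⟩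
  apply Polynomial.map_injective (Int.castRingHom ℚ) Int.cast_injective
  have hsmul : ∀ (z : ℤ) (p : ℚ[X]), (z : ℤ) • p = C ((z : ℚ)) * p := by
    intro z p
    rw [zsmul_eq_mul]
    norm_cast
  rw [Polynomial.map_add, Polynomial.map_mul, Polynomial.map_mul, Polynomial.map_mul,
    Polynomial.map_mul, map_C, map_C, map_C, hΦmap]
  have halg : (algebraMap ℤ ℚ) = Int.castRingHom ℚ := rfl
  rw [halg] at hNu hNv
  rw [hNu, hNv, ← hg, hsmul, hsmul]
  simp only [Int.coe_castRingHom, map_mul]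
  have : (C ((Nu : ℤ) : ℚ) * C ((Nv : ℤ) : ℚ)) * (u * cyclotomic n ℚ + v * g) =
      C ((Nu : ℤ) : ℚ) * C ((Nv : ℤ) : ℚ) := by rw [huv, mul_one]
  push_cast at this
  linear_combination this

theorem stmt_13 (n m : ℕ) (hn : n.Prime) (hm : 0 < m) (hmn : m < n) :
    ∃ D : ℕ, 0 < D ∧ ∀ q e : ℕ, 0 < q → 0 < e →
      e ∣ ∑ i ∈ Finset.range n, q ^ i → mqe q e = m → e ∣ D := by
  classical
  choose d hd a b hab using keyA n m hn hm hmn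
  refine ⟨∏ i : Fin m → Fin n, (d i).natAbs, Finset.prod_pos
    (fun i _ => Int.natAbs_pos.mpr (hd i)), ?_⟩
  intro q e hq he hdvd hmqe
  have hmem : m ∈ {t | 0 < t ∧ ∃ f : Fin t → ℕ, e ∣ ∑ i, q ^ f i} := by
    rw [← hmqe]
    apply Nat.sInf_mem
    by_contra hempty
    rw [Set.not_nonempty_iff_eq_empty] at hempty
    rw [mqe, hempty, Nat.sInf_empty] at hmqe
    omega
  obtain ⟨-, f, hf⟩ := hmem
  -- over ℤ
  have hΦ : (e : ℤ) ∣ ∑ k ∈ Finset.range n, (q : ℤ) ^ k := by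
    have := Int.natCast_dvd_natCast.mpr hdvd
    push_cast at this
    exact this
  have hqn : (e : ℤ) ∣ (q : ℤ) ^ n - 1 := by
    rw [← geom_sum_mul]
    exact hΦ.mul_right _
  -- work in ZMod e
  have hq1 : ((q : ZMod e)) ^ n = 1 := by
    have := (ZMod.intCast_zmod_eq_zero_iff_dvd _ e).mpr hqn
    push_cast at this
    linear_combination this
  have hmod : ∀ t : ℕ, ((q : ZMod e)) ^ t = ((q : ZMod e)) ^ (t % n) := by
    intro t
    conv_lhs => rw [← Nat.div_add_mod t n, pow_add, pow_mul, hq1, one_pow, one_mul]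
  set iF : Fin m → Fin n := fun j => ⟨f j % n, Nat.mod_lt _ hn.pos⟩ with hiF
  have hgdvd : (e : ℤ) ∣ ∑ j, (q : ℤ) ^ (iF j : ℕ) := by
    rw [← ZMod.intCast_zmod_eq_zero_iff_dvd]
    push_cast
    have h0 : (∑ j, ((q : ZMod e)) ^ (f j)) = 0 := by
      have hfz := (ZMod.natCast_eq_zero_iff _ e).mpr hf
      push_cast at hfz
      exact hfz
    calc (∑ j, ((q : ZMod e)) ^ ((iF j : ℕ)))
        = ∑ j, ((q : ZMod e)) ^ (f j) := by
          refine Finset.sum_congr rfl fun j _ => ?_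
          rw [hmod (f j)]
      _ = 0 := h0
  have heval := congrArg (Polynomial.eval (q : ℤ)) (hab iF)
  simp only [eval_add, eval_mul, eval_C, eval_finset_sum, eval_pow, eval_X] at heval
  have hddvd : (e : ℤ) ∣ d iF := by
    rw [← heval]
    exact dvd_add (hΦ.mul_left _) (hgdvd.mul_left _)
  have : e ∣ (d iF).natAbs := Int.natCast_dvd_natCast.mp (Int.dvd_natAbs.mpr hddvd)
  exact this.trans (Finset.dvd_prod_of_mem _ (Finset.mem_univ iF))
end

section
/- Let q, n, e be positive integers with q > 1 and e dividing q^n - 1, set z = (q^n - 1)/e, and suppose that -1 mod z lies in the subgroup of (Z/zZ)^× generated by q mod z (and z > 1). Then for every k with 1 ≤ k ≤ z - 1, the q-adic digit sum of k*e equals n*(q-1)/2; in particular m(q,e) = n*(q-1)/2. -/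
lemma sumdig_q_mul_add {q : ℕ} (hq : 1 < q) (c r : ℕ) (hr : r < q) :
    (Nat.digits q (q * c + r)).sum = (Nat.digits q c).sum + r := by
  rcases Nat.eq_zero_or_pos (q * c + r) with h | h
  · have hqc : q * c = 0 := by omega
    have hc : c = 0 := by
      rcases Nat.mul_eq_zero.mp hqc with h' | h'
      · omega
      · exact h'
    have hr0 : r = 0 := by omega
    simp [hc, hr0]
  · rw [Nat.digits_def' hq h]
    have h1 : (q * c + r) % q = r := by
      rw [Nat.mul_comm, Nat.add_comm, Nat.add_mul_mod_self_right, Nat.mod_eq_of_lt hr]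
    have h2 : (q * c + r) / q = c := by
      rw [Nat.mul_comm, Nat.add_comm, Nat.add_mul_div_right _ _ (by omega : 0 < q),
        Nat.div_eq_of_lt hr]
      omega
    rw [h1, h2]; simp [Nat.add_comm]

lemma sumdig_lt {q : ℕ} (hq : 1 < q) (r : ℕ) (hr : r < q) : (Nat.digits q r).sum = r := by
  have := sumdig_q_mul_add hq 0 r hr
  simpa using this

lemma sumdig_dec {q : ℕ} (hq : 1 < q) (x : ℕ) :
    (Nat.digits q x).sum = (Nat.digits q (x / q)).sum + x % q := by
  have hx : x = q * (x / q) + x % q := (Nat.div_add_mod x q).symm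
  conv_lhs => rw [hx]
  exact sumdig_q_mul_add hq _ _ (Nat.mod_lt _ (by omega))

lemma sumdig_succ_le {q : ℕ} (hq : 1 < q) (x : ℕ) :
    (Nat.digits q (x + 1)).sum ≤ (Nat.digits q x).sum + 1 := by
  induction x using Nat.strong_induction_on with
  | _ x ih =>
    rcases Nat.eq_zero_or_pos x with h0 | h0
    · subst h0; simp [sumdig_lt hq 1 hq]
    have hx : x = q * (x / q) + x % q := (Nat.div_add_mod x q).symm
    have hSx := sumdig_dec hq x
    by_cases hr : x % q + 1 < q
    · have heq : x + 1 = q * (x / q) + (x % q + 1) := by omega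
      rw [heq, sumdig_q_mul_add hq _ _ hr]
      omega
    · have hrq : x % q + 1 = q := by
        have := Nat.mod_lt x (show 0 < q by omega); omega
      have hq1 : q * (x / q + 1) = q * (x / q) + q := by ring
      have heq : x + 1 = q * (x / q + 1) + 0 := by omega
      rw [heq, sumdig_q_mul_add hq _ _ (by omega)]
      have hlt : x / q < x := Nat.div_lt_self h0 hq
      have := ih (x / q) hlt
      omega

lemma sumdig_add_le {q : ℕ} (hq : 1 < q) (a b : ℕ) :
    (Nat.digits q (a + b)).sum ≤ (Nat.digits q a).sum + (Nat.digits q b).sum := by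
  have key : ∀ m a b : ℕ, a + b ≤ m →
      (Nat.digits q (a + b)).sum ≤ (Nat.digits q a).sum + (Nat.digits q b).sum := by
    intro m
    induction m with
    | zero =>
      intro a b h
      have ha : a = 0 := by omega
      have hb : b = 0 := by omega
      simp [ha, hb]
    | succ m ih =>
      intro a b h
      rcases Nat.eq_zero_or_pos a with h0 | h0
      · subst h0; simp
      rcases Nat.eq_zero_or_pos b with h1 | h1
      · subst h1; simp
      have hq0 : 0 < q := by omega
      have ha : a = q * (a / q) + a % q := (Nat.div_add_mod a q).symm
      have hb : b = q * (b / q) + b % q := (Nat.div_add_mod b q).symm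
      have hlta : a / q < a := Nat.div_lt_self h0 hq
      have hltb : b / q < b := Nat.div_lt_self h1 hq
      have hstep : a / q + b / q ≤ m := by omega
      have hIH := ih (a / q) (b / q) hstep
      have hSa := sumdig_dec hq a
      have hSb := sumdig_dec hq b
      by_cases hc : a % q + b % q < q
      · have heq : a + b = q * (a / q + b / q) + (a % q + b % q) := by
          have : q * (a / q + b / q) = q * (a / q) + q * (b / q) := by ring
          omega
        rw [heq, sumdig_q_mul_add hq _ _ hc]
        omega
      · have hm1 : a % q < q := Nat.mod_lt _ hq0
        have hm2 : b % q < q := Nat.mod_lt _ hq0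
        have hexp : q * (a / q + b / q + 1) = q * (a / q) + q * (b / q) + q := by ring
        have heq : a + b = q * (a / q + b / q + 1) + (a % q + b % q - q) := by omega
        rw [heq, sumdig_q_mul_add hq _ _ (by omega)]
        have := sumdig_succ_le hq (a / q + b / q)
        omega
  exact key (a + b) a b le_rfl

lemma sumdig_mul_pow_add {q : ℕ} (hq : 1 < q) (a m b : ℕ) (hb : b < q ^ m) :
    (Nat.digits q (a * q ^ m + b)).sum = (Nat.digits q a).sum + (Nat.digits q b).sum := by
  induction m generalizing b with
  | zero =>
    have : b = 0 := by simpa using hb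
    subst this; simp
  | succ m ih =>
    have hq0 : 0 < q := by omega
    have hp : q ^ (m + 1) = q ^ m * q := pow_succ q m
    have hbq : b / q < q ^ m := by
      rw [Nat.div_lt_iff_lt_mul hq0]
      omega
    have hdm : q * (b / q) + b % q = b := Nat.div_add_mod b q
    have heq : a * q ^ (m + 1) + b = q * (a * q ^ m + b / q) + b % q := by
      calc a * q ^ (m + 1) + b = q * (a * q ^ m) + (q * (b / q) + b % q) := by rw [hdm]; ring
        _ = q * (a * q ^ m + b / q) + b % q := by ring
    rw [heq, sumdig_q_mul_add hq _ _ (Nat.mod_lt _ hq0), ih _ hbq]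
    have hSb := sumdig_dec hq b
    omega

lemma sumdig_compl {q : ℕ} (hq : 1 < q) (n x y : ℕ) (h : x + y + 1 = q ^ n) :
    (Nat.digits q x).sum + (Nat.digits q y).sum = n * (q - 1) := by
  induction n generalizing x y with
  | zero =>
    have hx : x = 0 := by simp at h; omega
    have hy : y = 0 := by simp at h; omega
    simp [hx, hy]
  | succ n ih =>
    have hq0 : 0 < q := by omega
    have hpow : 0 < q ^ n := pow_pos hq0 n
    obtain ⟨a, b, hxab, hblt⟩ : ∃ a b, x = a * q ^ n + b ∧ b < q ^ n :=
      ⟨x / q ^ n, x % q ^ n,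
        by calc x = q ^ n * (x / q ^ n) + x % q ^ n := (Nat.div_add_mod x (q ^ n)).symm
             _ = _ := by ring,
        Nat.mod_lt _ hpow⟩
    obtain ⟨c, d, hycd, hdlt⟩ : ∃ c d, y = c * q ^ n + d ∧ d < q ^ n :=
      ⟨y / q ^ n, y % q ^ n,
        by calc y = q ^ n * (y / q ^ n) + y % q ^ n := (Nat.div_add_mod y (q ^ n)).symm
             _ = _ := by ring,
        Nat.mod_lt _ hpow⟩
    have hp : q ^ (n + 1) = q * q ^ n := by ring
    have halt : a < q := by
      by_contra h'
      push_neg at h'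
      have h2 : q * q ^ n ≤ a * q ^ n := Nat.mul_le_mul_right _ h'
      omega
    have hclt : c < q := by
      by_contra h'
      push_neg at h'
      have h2 : q * q ^ n ≤ c * q ^ n := Nat.mul_le_mul_right _ h'
      omega
    have hkey : a * q ^ n + c * q ^ n + (b + d + 1) = q * q ^ n := by omega
    obtain ⟨t, ht⟩ : ∃ t, t = a + c := ⟨a + c, rfl⟩
    have htq : t * q ^ n = a * q ^ n + c * q ^ n := by rw [ht]; ring
    have hble : t ≤ q - 1 := by
      by_contra h'
      push_neg at h'
      have h2 : q * q ^ n ≤ t * q ^ n := Nat.mul_le_mul_right _ (by omega)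
      omega
    have hbge : q - 1 ≤ t := by
      by_contra h'
      push_neg at h'
      have h2 : (t + 2) * q ^ n ≤ q * q ^ n := Nat.mul_le_mul_right _ (by omega)
      have h3 : (t + 2) * q ^ n = t * q ^ n + q ^ n + q ^ n := by ring
      omega
    have hteq : t = q - 1 := le_antisymm hble hbge
    have ht1 : t + 1 = q := by omega
    have hq1 : (t + 1) * q ^ n = q * q ^ n := by rw [ht1]
    have hq2 : (t + 1) * q ^ n = t * q ^ n + q ^ n := by ring
    have hbd : b + d + 1 = q ^ n := by omega
    have hSx : (Nat.digits q x).sum = a + (Nat.digits q b).sum := by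
      rw [hxab, sumdig_mul_pow_add hq _ _ _ hblt, sumdig_lt hq a halt]
    have hSy : (Nat.digits q y).sum = c + (Nat.digits q d).sum := by
      rw [hycd, sumdig_mul_pow_add hq _ _ _ hdlt, sumdig_lt hq c hclt]
    have hIH := ih b d hbd
    rw [hSx, hSy]
    have hmul : (n + 1) * (q - 1) = n * (q - 1) + (q - 1) := by ring
    omega

lemma sumdig_shift {q : ℕ} (hq : 1 < q) (n : ℕ) (hn : 0 < n) (M : ℕ)
    (hM : M + 1 = q ^ n) (x : ℕ) (hx : x < M) :
    (Nat.digits q ((q * x) % M)).sum = (Nat.digits q x).sum := by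
  obtain ⟨m, rfl⟩ : ∃ m, n = m + 1 := ⟨n - 1, by omega⟩
  have hq0 : 0 < q := by omega
  have hP : 0 < q ^ m := pow_pos hq0 m
  have hqP : q * q ^ m = M + 1 := by rw [hM]; ring
  obtain ⟨a, b, hxab, hblt⟩ : ∃ a b, x = a * q ^ m + b ∧ b < q ^ m :=
    ⟨x / q ^ m, x % q ^ m,
      by calc x = q ^ m * (x / q ^ m) + x % q ^ m := (Nat.div_add_mod x (q ^ m)).symm
           _ = _ := by ring,
      Nat.mod_lt _ hP⟩
  have halt : a < q := by
    by_contra h'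
    push_neg at h'
    have h2 : q * q ^ m ≤ a * q ^ m := Nat.mul_le_mul_right _ h'
    omega
  -- bound : q * b + a + 2 ≤ q * q ^ m
  have hbound : q * b + a + 2 ≤ q * q ^ m := by
    rcases Nat.lt_or_ge (a + 2) (q + 1) with hcase | hcase
    · -- a + 2 ≤ q
      have h1 : q * (b + 1) ≤ q * q ^ m := Nat.mul_le_mul_left _ (by omega)
      have h2 : q * (b + 1) = q * b + q := by ring
      omega
    · -- a + 1 = q
      have ha1 : a + 1 = q := by omega
      have h3 : (a + 1) * q ^ m = q * q ^ m := by rw [ha1]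
      have h4 : (a + 1) * q ^ m = a * q ^ m + q ^ m := by ring
      have hb2 : b + 2 ≤ q ^ m := by omega
      have h1 : q * (b + 2) ≤ q * q ^ m := Nat.mul_le_mul_left _ hb2
      have h2 : q * (b + 2) = q * b + q + q := by ring
      omega
  have hlt : q * b + a < M := by omega
  have h5 : q * x = (q * b + a) + a * M := by
    calc q * x = a * (q * q ^ m) + q * b := by rw [hxab]; ring
      _ = a * (M + 1) + q * b := by rw [hqP]
      _ = (q * b + a) + a * M := by ring
  have hmod : (q * x) % M = q * b + a := by
    rw [h5, Nat.add_mul_mod_self_right, Nat.mod_eq_of_lt hlt]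
  rw [hmod, sumdig_q_mul_add hq b a halt]
  rw [hxab, sumdig_mul_pow_add hq a m b hblt, sumdig_lt hq a halt]
  omega

lemma sumdig_fold {q : ℕ} (hq : 1 < q) (n : ℕ) (hn : 0 < n) (M : ℕ)
    (hM : M + 1 = q ^ n) (x : ℕ) (hd : M ∣ x) (hx : 0 < x) :
    n * (q - 1) ≤ (Nat.digits q x).sum := by
  have hq0 : 0 < q := by omega
  have hqn : 2 ≤ q ^ n := by
    calc 2 ≤ q := hq
      _ = q ^ 1 := (pow_one q).symm
      _ ≤ q ^ n := Nat.pow_le_pow_right hq0 hn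
  have hM1 : 1 ≤ M := by omega
  induction x using Nat.strong_induction_on with
  | _ x ih =>
    rcases Nat.lt_or_ge x (q ^ n) with hlt | hge
    · have hMle : M ≤ x := Nat.le_of_dvd hx hd
      have hxM : x = M := by omega
      have hc := sumdig_compl hq n 0 M (by omega)
      simp only [Nat.digits_zero, List.sum_nil, Nat.zero_add] at hc
      rw [hxM]
      omega
    · obtain ⟨a, b, hxab, hblt⟩ : ∃ a b, x = a * q ^ n + b ∧ b < q ^ n :=
        ⟨x / q ^ n, x % q ^ n,
          by calc x = q ^ n * (x / q ^ n) + x % q ^ n := (Nat.div_add_mod x (q ^ n)).symm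
               _ = _ := by ring,
          Nat.mod_lt _ (by omega)⟩
      have ha1 : 1 ≤ a := by
        rcases Nat.eq_zero_or_pos a with h' | h'
        · exfalso; rw [h'] at hxab; simp at hxab; omega
        · exact h'
      have haM : 1 * 1 ≤ a * M := Nat.mul_le_mul ha1 hM1
      have hxd : x = (a + b) + a * M := by
        calc x = a * (M + 1) + b := by rw [hxab, hM]
          _ = (a + b) + a * M := by ring
      have hablt : a + b < x := by omega
      have habpos : 0 < a + b := by omega
      have habdvd : M ∣ a + b := by
        have h6 : a + b = x - a * M := by omega
        rw [h6]
        exact Nat.dvd_sub hd (Dvd.intro_left a rfl)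
      have hIH := ih (a + b) hablt habdvd habpos
      have hsub := sumdig_add_le hq a b
      have hconcat : (Nat.digits q x).sum = (Nat.digits q a).sum + (Nat.digits q b).sum := by
        rw [hxab]; exact sumdig_mul_pow_add hq a n b hblt
      omega

lemma sumdig_reduce {q : ℕ} (hq : 1 < q) (n : ℕ) (hn : 0 < n) (M : ℕ)
    (hM : M + 1 = q ^ n) (x : ℕ) (hnd : ¬ M ∣ x) :
    (Nat.digits q (x % M)).sum ≤ (Nat.digits q x).sum := by
  have hq0 : 0 < q := by omega
  have hqn : 2 ≤ q ^ n := by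
    calc 2 ≤ q := hq
      _ = q ^ 1 := (pow_one q).symm
      _ ≤ q ^ n := Nat.pow_le_pow_right hq0 hn
  have hM1 : 1 ≤ M := by omega
  induction x using Nat.strong_induction_on with
  | _ x ih =>
    rcases Nat.lt_or_ge x (q ^ n) with hlt | hge
    · have hxM : x < M := by
        rcases Nat.lt_or_ge x M with h' | h'
        · exact h'
        · exfalso; have : x = M := by omega
          exact hnd (this ▸ dvd_refl M)
      rw [Nat.mod_eq_of_lt hxM]
    · obtain ⟨a, b, hxab, hblt⟩ : ∃ a b, x = a * q ^ n + b ∧ b < q ^ n :=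
        ⟨x / q ^ n, x % q ^ n,
          by calc x = q ^ n * (x / q ^ n) + x % q ^ n := (Nat.div_add_mod x (q ^ n)).symm
               _ = _ := by ring,
          Nat.mod_lt _ (by omega)⟩
      have ha1 : 1 ≤ a := by
        rcases Nat.eq_zero_or_pos a with h' | h'
        · exfalso; rw [h'] at hxab; simp at hxab; omega
        · exact h'
      have haM : 1 * 1 ≤ a * M := Nat.mul_le_mul ha1 hM1
      have hxd : x = (a + b) + a * M := by
        calc x = a * (M + 1) + b := by rw [hxab, hM]
          _ = (a + b) + a * M := by ring
      have hablt : a + b < x := by omega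
      have habnd : ¬ M ∣ a + b := by
        intro h'
        apply hnd
        rw [hxd]
        exact Nat.dvd_add h' (Dvd.intro_left a rfl)
      have hmodeq : x % M = (a + b) % M := by
        rw [hxd, Nat.add_mul_mod_self_right]
      have hIH := ih (a + b) hablt habnd
      have hsub := sumdig_add_le hq a b
      have hconcat : (Nat.digits q x).sum = (Nat.digits q a).sum + (Nat.digits q b).sum := by
        rw [hxab]; exact sumdig_mul_pow_add hq a n b hblt
      rw [hmodeq]
      omega

lemma sumdig_repr {q : ℕ} (hq : 1 < q) (x : ℕ) :
    ∃ f : Fin ((Nat.digits q x).sum) → ℕ, ∑ i, q ^ f i = x := by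
  induction x using Nat.strong_induction_on with
  | _ x ih =>
    rcases Nat.eq_zero_or_pos x with h0 | h0
    · subst h0
      rw [show (Nat.digits q 0).sum = 0 by simp]
      exact ⟨Fin.elim0, by simp⟩
    · have hq0 : 0 < q := by omega
      have hlt : x / q < x := Nat.div_lt_self h0 hq
      obtain ⟨f', hf'⟩ := ih (x / q) hlt
      rw [sumdig_dec hq x]
      refine ⟨Fin.addCases (fun i => f' i + 1) (fun _j => 0), ?_⟩
      rw [Fin.sum_univ_add]
      simp only [Fin.addCases_left, Fin.addCases_right, pow_zero]
      have h1 : ∑ i : Fin ((Nat.digits q (x / q)).sum), q ^ (f' i + 1) = q * (x / q) := by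
        conv_rhs => rw [← hf']
        rw [Finset.mul_sum]
        congr 1
        funext i
        ring
      rw [h1]
      simp only [Finset.sum_const, Finset.card_univ, Fintype.card_fin, smul_eq_mul, mul_one]
      have := Nat.div_add_mod x q
      omega

lemma sumdig_powsum_le {q : ℕ} (hq : 1 < q) (t : ℕ) (f : Fin t → ℕ) :
    (Nat.digits q (∑ i, q ^ f i)).sum ≤ t := by
  induction t with
  | zero => simp
  | succ t ih =>
    rw [Fin.sum_univ_succ]
    have h1 : (Nat.digits q (q ^ f 0)).sum = 1 := by
      have := sumdig_mul_pow_add hq 1 (f 0) 0 (pow_pos (by omega) _)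
      simpa [sumdig_lt hq 1 hq] using this
    calc (Nat.digits q (q ^ f 0 + ∑ i : Fin t, q ^ f i.succ)).sum
        ≤ (Nat.digits q (q ^ f 0)).sum + (Nat.digits q (∑ i : Fin t, q ^ f i.succ)).sum :=
          sumdig_add_le hq _ _
      _ ≤ 1 + t := by rw [h1]; exact Nat.add_le_add_left (ih _) 1
      _ = t + 1 := by ring

theorem stmt_14 (q n e z : ℕ) (hq : 1 < q) (hn : 0 < n) (he : 0 < e)
    (hz : z * e = q ^ n - 1) (hz1 : 1 < z)
    (hneg : ∃ c : ℕ, (q : ZMod z) ^ c = -1) :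
    (∀ k, 1 ≤ k → k ≤ z - 1 → 2 * (Nat.digits q (k * e)).sum = n * (q - 1)) ∧
    2 * mqe q e = n * (q - 1) := by
  obtain ⟨c, hc⟩ := hneg
  have hq0 : 0 < q := by omega
  have hqn1 : 1 ≤ q ^ n := Nat.one_le_pow n q hq0
  have hM1 : z * e + 1 = q ^ n := by omega
  have hMpos : 0 < z * e := by positivity
  have part1 : ∀ k, 1 ≤ k → k ≤ z - 1 → 2 * (Nat.digits q (k * e)).sum = n * (q - 1) := by
    intro k hk1 hk2
    have hklt : k < z := by omega
    have hkelt : k * e < z * e := (Nat.mul_lt_mul_right he).mpr hklt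
    -- Step A : cyclic shifts preserve the digit sum
    have stepA : ∀ j, (Nat.digits q ((q ^ j * (k * e)) % (z * e))).sum
        = (Nat.digits q (k * e)).sum := by
      intro j
      induction j with
      | zero => simp only [pow_zero, one_mul, Nat.mod_eq_of_lt hkelt]
      | succ j ih =>
        have h1 : (q ^ (j + 1) * (k * e)) % (z * e)
            = (q * ((q ^ j * (k * e)) % (z * e))) % (z * e) := by
          conv_lhs => rw [show q ^ (j + 1) * (k * e) = q * (q ^ j * (k * e)) by ring]
          rw [Nat.mul_mod q (q ^ j * (k * e)), Nat.mul_mod q ((q ^ j * (k * e)) % (z * e)),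
            Nat.mod_mod_of_dvd _ dvd_rfl]
        have hylt : (q ^ j * (k * e)) % (z * e) < z * e := Nat.mod_lt _ hMpos
        rw [h1, sumdig_shift hq n hn (z * e) hM1 _ hylt, ih]
    -- Step B : at j = c the shift lands on (z - k) * e
    have hmodz : (q ^ c * k) % z = (z - k) % z := by
      have hcast : ((q ^ c * k : ℕ) : ZMod z) = ((z - k : ℕ) : ZMod z) := by
        push_cast [Nat.cast_sub (show k ≤ z by omega)]
        rw [hc, ZMod.natCast_self]
        ring
      exact (ZMod.natCast_eq_natCast_iff _ _ _).mp hcast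
    have hstepB : (q ^ c * (k * e)) % (z * e) = (z - k) * e := by
      rw [← mul_assoc, Nat.mul_mod_mul_right, hmodz,
        Nat.mod_eq_of_lt (by omega : z - k < z)]
    have hS1 : (Nat.digits q ((z - k) * e)).sum = (Nat.digits q (k * e)).sum := by
      rw [← hstepB]; exact stepA c
    -- complement
    have hsum : k * e + (z - k) * e = z * e := by
      have h7 : k + (z - k) = z := by omega
      calc k * e + (z - k) * e = (k + (z - k)) * e := by ring
        _ = z * e := by rw [h7]
    have hcompl : (Nat.digits q (k * e)).sum + (Nat.digits q ((z - k) * e)).sum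
        = n * (q - 1) := sumdig_compl hq n _ _ (by omega)
    omega
  refine ⟨part1, ?_⟩
  have he2 : 2 * (Nat.digits q e).sum = n * (q - 1) := by
    have := part1 1 le_rfl (by omega)
    simpa using this
  have hnq : 0 < n * (q - 1) := Nat.mul_pos hn (by omega)
  have ht0pos : 0 < (Nat.digits q e).sum := by omega
  obtain ⟨f0, hf0⟩ := sumdig_repr hq e
  have hmem : (Nat.digits q e).sum ∈ {t | 0 < t ∧ ∃ f : Fin t → ℕ, e ∣ ∑ i, q ^ f i} :=
    ⟨ht0pos, f0, by rw [hf0]⟩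
  have hlb : ∀ t ∈ {t | 0 < t ∧ ∃ f : Fin t → ℕ, e ∣ ∑ i, q ^ f i},
      (Nat.digits q e).sum ≤ t := by
    rintro t ⟨htpos, f, hdvd⟩
    have hSle : (Nat.digits q (∑ i, q ^ f i)).sum ≤ t := sumdig_powsum_le hq t f
    by_cases hdM : z * e ∣ ∑ i, q ^ f i
    · have hpos : 0 < ∑ i, q ^ f i := by
        calc 0 < t := htpos
          _ = ∑ _i : Fin t, 1 := by simp
          _ ≤ ∑ i, q ^ f i := Finset.sum_le_sum fun i _ => Nat.one_le_pow _ _ hq0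
      have := sumdig_fold hq n hn (z * e) hM1 _ hdM hpos
      omega
    · have hr0 : (∑ i, q ^ f i) % (z * e) ≠ 0 := by
        intro h'
        exact hdM (Nat.dvd_of_mod_eq_zero h')
      have hre : e ∣ (∑ i, q ^ f i) % (z * e) :=
        (Nat.dvd_mod_iff (dvd_mul_left e z)).mpr hdvd
      obtain ⟨k, hk⟩ := hre
      have hrlt : (∑ i, q ^ f i) % (z * e) < z * e := Nat.mod_lt _ hMpos
      have hk1 : 1 ≤ k := by
        rcases Nat.eq_zero_or_pos k with h' | h'
        · exfalso; rw [h'] at hk; simp at hk; exact hr0 hk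
        · exact h'
      have hk2 : k ≤ z - 1 := by
        by_contra h'
        push_neg at h'
        have hzk : z ≤ k := by omega
        have : z * e ≤ e * k := by
          calc z * e = e * z := by ring
            _ ≤ e * k := Nat.mul_le_mul_left _ hzk
        omega
      have hSr := part1 k hk1 hk2
      have hred := sumdig_reduce hq n hn (z * e) hM1 _ hdM
      rw [hk, show e * k = k * e by ring] at hred
      omega
  have hinf : mqe q e = (Nat.digits q e).sum := by
    unfold mqe
    exact le_antisymm (Nat.sInf_le hmem) (le_csInf ⟨_, hmem⟩ hlb)
  rw [hinf, he2]
end
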